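/- arXiv:1507.08140 — 5 statements merged into one kernel-verified Lean document; each statement's English description precedes it below -/
import Mathlib

section
/- Under the HER(p) model (independent edges Y_{ij} ~ Bernoulli(p_{ij})), with W = (1/n) Σ_i (D_i − μ⁰_i)², the variance of W equals (4/n²)[ Σ_{i<j} σ²_{ij}(1 − 2p_{ij} + Δ_i + Δ_j)² + Σ_{i<j<k} (σ²_{ij}σ²_{ik} + σ²_{ij}σ²_{jk} + σ²_{ik}σ²_{jk}) ], where σ²_{ij} = p_{ij}(1−p_{ij}), δ_{ij} = p_{ij} − p⁰_{ij}, and Δ_i = Σ_{j≠i} δ_{ij}. -/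
open MeasureTheory ProbabilityTheory Finset

/-!
With `Z_ij = Y_ij - p_ij` and `Δ_i = ∑_{k ≠ i} (p_ik - p⁰_ik)` we have `D_i - μ⁰_i = ∑_{j ≠ i} Z_ij + Δ_i`.
Squaring and using `Z² = p(1 - p) + (1 - 2p) Z` for a centred Bernoulli variable, `n W` is a constant
plus a linear part `L = ∑_{i ≠ j} (1 - 2p_ij + 2Δ_i) Z_ij` plus a quadratic part `Q = ∑ Z_ij Z_ik`
over the cherries `j - i - k`. The edge variables are independent and centred, so a product of them
has mean zero as soon as some edge occurs in it exactly once. Hence `L` and `Q` are uncorrelated,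
`E[L²]` keeps only the diagonal terms, and `E[Q²]` keeps only the pairs of cherries made of the same
two edges; regrouping over `i < j` and `i < j < k` gives the formula.
-/

section Combinatorics

theorem sq_sum_eq_sum_sq_add_sum_offDiag {α R : Type*} [DecidableEq α] [CommSemiring R]
    (s : Finset α) (f : α → R) :
    (∑ j ∈ s, f j) ^ 2 = ∑ j ∈ s, f j ^ 2 + ∑ q ∈ s.offDiag, f q.1 * f q.2 := by
  rw [sq, sum_mul_sum, ← sum_product', ← diag_union_offDiag, sum_union (disjoint_diag_offDiag s),
    sum_diag]
  simp only [sq]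

variable {α R : Type*} [Fintype α] [DecidableEq α] [CommSemiring R]

variable (α) in
/-- `(i, j, k)` stands for the path `j - i - k` of two distinct edges centred at `i`. -/
def cherries : Finset (α × α × α) :=
  univ.filter fun t => t.1 ≠ t.2.1 ∧ t.1 ≠ t.2.2 ∧ t.2.1 ≠ t.2.2

theorem sum_cherries_eq_sum_ite (g : α → α → α → R) :
    ∑ t ∈ cherries α, g t.1 t.2.1 t.2.2
      = ∑ i, ∑ j, ∑ k, if i ≠ j ∧ i ≠ k ∧ j ≠ k then g i j k else 0 := by
  rw [cherries, sum_filter, Fintype.sum_prod_type]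
  simp_rw [Fintype.sum_prod_type]

theorem sum_offDiag_eq_sum_sum_ne {β : Type*} [AddCommMonoid β] (F : α → α → β) :
    ∑ q ∈ univ.offDiag, F q.1 q.2 = ∑ i, ∑ j ∈ univ.filter (fun j => j ≠ i), F i j :=
  sum_finset_product' _ _ _ fun q => by simp [ne_comm]

theorem sum_sq_sum_ne_add_eq (x : α → α → R) (δ : α → R) :
    ∑ i, (∑ j ∈ univ.filter (fun j => j ≠ i), x i j + δ i) ^ 2
      = ∑ i, δ i ^ 2 + ∑ q ∈ univ.offDiag, (x q.1 q.2 ^ 2 + 2 * δ q.1 * x q.1 q.2)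
        + ∑ t ∈ cherries α, x t.1 t.2.1 * x t.1 t.2.2 := by
  have hcherries : ∑ t ∈ cherries α, x t.1 t.2.1 * x t.1 t.2.2
      = ∑ i, ∑ q ∈ (univ.filter (fun j => j ≠ i)).offDiag, x i q.1 * x i q.2 :=
    sum_finset_product _ _ _ fun t => by simp [cherries, mem_offDiag]; tauto
  have expand : ∀ a b : R, (a + b) ^ 2 = b ^ 2 + (a ^ 2 + 2 * b * a) := fun a b => by ring
  simp only [hcherries, sum_offDiag_eq_sum_sum_ne (fun i j => x i j ^ 2 + 2 * δ i * x i j),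
    expand, sq_sum_eq_sum_sq_add_sum_offDiag, sum_add_distrib, mul_sum]
  ring

end Combinatorics

section OrderedCombinatorics
variable {α R : Type*} [Fintype α] [LinearOrder α] [CommSemiring R]

theorem sum_offDiag_eq_sum_lt {β : Type*} [AddCommMonoid β] (F : α → α → β) :
    ∑ q ∈ univ.offDiag, F q.1 q.2 = ∑ i, ∑ j ∈ univ.filter (fun j => i < j), (F i j + F j i) := by
  have hswap : ∑ i, ∑ j ∈ univ.filter (fun j => i < j), F j i
      = ∑ i, ∑ j ∈ univ.filter (fun j => j < i), F i j := by
    simp only [sum_filter]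
    exact sum_comm
  rw [sum_offDiag_eq_sum_sum_ne, sum_congr rfl fun i _ => sum_add_distrib, sum_add_distrib, hswap,
    ← sum_add_distrib]
  refine sum_congr rfl fun i _ => ?_
  rw [← sum_union (disjoint_filter.2 fun j _ h h' => lt_asymm h h')]
  refine sum_congr ?_ fun _ _ => rfl
  ext j
  simp only [mem_filter, mem_univ, true_and, mem_union]
  exact ne_iff_lt_or_gt.trans or_comm

theorem sum_lt_lt_eq_sum_ite (F : α → α → α → R) :
    ∑ i, ∑ j ∈ univ.filter (fun j => i < j), ∑ k ∈ univ.filter (fun k => j < k), F i j k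
      = ∑ i, ∑ j, ∑ k, if i < j ∧ j < k then F i j k else 0 := by
  simp only [sum_filter, ite_and, ite_sum_zero]

/-- Each of the six orderings of a triple of distinct vertices is renamed to `i < j < k`. -/
theorem sum_cherries_eq_two_mul_sum_lt_lt (x : α → α → R) (hx : ∀ i j, x i j = x j i) :
    ∑ t ∈ cherries α, x t.1 t.2.1 * x t.1 t.2.2
      = 2 * ∑ i, ∑ j ∈ univ.filter (fun j => i < j), ∑ k ∈ univ.filter (fun k => j < k),
          (x i j * x i k + x i j * x j k + x i k * x j k) := by
  set P : α → α → α → R := fun i j k => x i j * x i k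
  let sorted (i j k : α) (r : R) : R := if i < j ∧ j < k then r else 0
  have by_order : ∀ i j k, (if i ≠ j ∧ i ≠ k ∧ j ≠ k then P i j k else 0) =
      sorted i j k (P i j k) + sorted i k j (P i j k) + sorted j i k (P i j k)
        + sorted j k i (P i j k) + sorted k i j (P i j k) + sorted k j i (P i j k) := by
    intro i j k
    simp only [sorted]
    split_ifs <;> first | (exfalso; grind) | simp
  have h₁ : ∑ i, ∑ j, ∑ k, sorted i k j (P i j k) = ∑ i, ∑ j, ∑ k, sorted i j k (P i k j) :=
    sum_congr rfl fun _ _ => sum_comm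
  have h₂ : ∑ i, ∑ j, ∑ k, sorted j i k (P i j k) = ∑ i, ∑ j, ∑ k, sorted i j k (P j i k) :=
    sum_comm
  have h₃ : ∑ i, ∑ j, ∑ k, sorted j k i (P i j k) = ∑ i, ∑ j, ∑ k, sorted i j k (P k i j) :=
    sum_comm.trans (sum_congr rfl fun _ _ => sum_comm)
  have h₄ : ∑ i, ∑ j, ∑ k, sorted k i j (P i j k) = ∑ i, ∑ j, ∑ k, sorted i j k (P j k i) :=
    (sum_congr rfl fun _ _ => sum_comm).trans sum_comm
  have h₅ : ∑ i, ∑ j, ∑ k, sorted k j i (P i j k) = ∑ i, ∑ j, ∑ k, sorted i j k (P k j i) :=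
    ((sum_congr rfl fun _ _ => sum_comm).trans sum_comm).trans (sum_congr rfl fun _ _ => sum_comm)
  rw [sum_cherries_eq_sum_ite (fun i j k => P i j k), sum_lt_lt_eq_sum_ite]
  simp only [by_order, sum_add_distrib]
  rw [h₁, h₂, h₃, h₄, h₅]
  simp only [sorted, ← sum_add_distrib, mul_sum]
  refine sum_congr rfl fun i _ => sum_congr rfl fun j _ => sum_congr rfl fun k _ => ?_
  split_ifs
  · simp only [P, hx j i, hx k i, hx k j]
    ring
  · simp

end OrderedCombinatorics

section Independent
variable {Ω ι : Type*} [MeasurableSpace Ω] {μ : Measure Ω} {W : ι → Ω → ℝ}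

theorem integral_mul_comp_eq_zero_of_notMem (hind : iIndepFun W μ)
    (hmeas : ∀ i, Measurable (W i)) {i : ι} (hi : ∫ ω, W i ω ∂μ = 0) {T : Finset ι}
    (hiT : i ∉ T) {φ : (T → ℝ) → ℝ} (hφ : Measurable φ) :
    ∫ ω, W i ω * φ (fun t => W t ω) ∂μ = 0 := by
  classical
  have h := (hind.indepFun_finset {i} T (disjoint_singleton_left.2 hiT) hmeas).comp
    (measurable_pi_apply (⟨i, mem_singleton_self i⟩ : ({i} : Finset ι))) hφ
  have := h.integral_fun_mul_eq_mul_integral (hmeas i).aestronglyMeasurable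
    (hφ.comp (measurable_pi_lambda _ fun t => hmeas t)).aestronglyMeasurable
  simp only [Function.comp_apply] at this
  rw [this, hi, zero_mul]

theorem integral_mul_eq_zero_of_ne (hind : iIndepFun W μ) (hmeas : ∀ i, Measurable (W i))
    {e f : ι} (he : ∫ ω, W e ω ∂μ = 0) (hef : e ≠ f) :
    ∫ ω, W e ω * W f ω ∂μ = 0 := by
  classical
  exact integral_mul_comp_eq_zero_of_notMem hind hmeas he (T := {f}) (by simpa using hef)
    (φ := fun x => x ⟨f, mem_singleton_self f⟩) (measurable_pi_apply _)

theorem integral_mul_mul_eq_zero_of_ne_of_ne (hind : iIndepFun W μ)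
    (hmeas : ∀ i, Measurable (W i)) {e f g : ι} (he : ∫ ω, W e ω ∂μ = 0) (hf : e ≠ f)
    (hg : e ≠ g) : ∫ ω, W e ω * (W f ω * W g ω) ∂μ = 0 := by
  classical
  exact integral_mul_comp_eq_zero_of_notMem hind hmeas he (T := {f, g}) (by simp [hf, hg])
    (φ := fun x => x ⟨f, by simp⟩ * x ⟨g, by simp⟩) (by fun_prop)

theorem integral_mul_mul_mul_eq_zero_of_ne_of_ne_of_ne (hind : iIndepFun W μ)
    (hmeas : ∀ i, Measurable (W i)) {e f g h : ι} (he : ∫ ω, W e ω ∂μ = 0) (hf : e ≠ f)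
    (hg : e ≠ g) (hh : e ≠ h) : ∫ ω, W e ω * (W f ω * W g ω * W h ω) ∂μ = 0 := by
  classical
  exact integral_mul_comp_eq_zero_of_notMem hind hmeas he (T := {f, g, h})
    (by simp [hf, hg, hh]) (φ := fun x => x ⟨f, by simp⟩ * x ⟨g, by simp⟩ * x ⟨h, by simp⟩)
    (by fun_prop)

theorem integral_mul_mul_eq_zero (hind : iIndepFun W μ) (hmeas : ∀ i, Measurable (W i))
    (hcen : ∀ i, ∫ ω, W i ω ∂μ = 0) (e : ι) {f g : ι} (hfg : f ≠ g) :
    ∫ ω, W e ω * (W f ω * W g ω) ∂μ = 0 := by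
  by_cases hef : e = f
  · subst hef
    calc ∫ ω, W e ω * (W e ω * W g ω) ∂μ = ∫ ω, W g ω * (W e ω * W e ω) ∂μ := by
          congr 1; ext ω; ring
      _ = 0 := integral_mul_mul_eq_zero_of_ne_of_ne hind hmeas (hcen g) hfg.symm hfg.symm
  by_cases heg : e = g
  · subst heg
    calc ∫ ω, W e ω * (W f ω * W e ω) ∂μ = ∫ ω, W f ω * (W e ω * W e ω) ∂μ := by
          congr 1; ext ω; ring
      _ = 0 := integral_mul_mul_eq_zero_of_ne_of_ne hind hmeas (hcen f) hfg hfg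
  exact integral_mul_mul_eq_zero_of_ne_of_ne hind hmeas (hcen e) hef heg

theorem integral_mul_mul_mul_mul [DecidableEq ι] (hind : iIndepFun W μ)
    (hmeas : ∀ i, Measurable (W i)) (hcen : ∀ i, ∫ ω, W i ω ∂μ = 0) {e f g h : ι}
    (hef : e ≠ f) (hgh : g ≠ h) :
    ∫ ω, W e ω * W f ω * (W g ω * W h ω) ∂μ
      = if (g = e ∧ h = f) ∨ (g = f ∧ h = e) then
          (∫ ω, W e ω ^ 2 ∂μ) * ∫ ω, W f ω ^ 2 ∂μ else 0 := by
  have hsq : ∫ ω, W e ω ^ 2 * W f ω ^ 2 ∂μ = (∫ ω, W e ω ^ 2 ∂μ) * ∫ ω, W f ω ^ 2 ∂μ :=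
    ((hind.indepFun hef).comp (measurable_id.pow_const 2) (measurable_id.pow_const 2)
      ).integral_fun_mul_eq_mul_integral ((hmeas e).pow_const 2).aestronglyMeasurable
      ((hmeas f).pow_const 2).aestronglyMeasurable
  by_cases hge : g = e
  · subst hge
    by_cases hhf : h = f
    · subst hhf
      rw [if_pos (Or.inl ⟨rfl, rfl⟩), ← hsq]
      congr 1; ext ω; ring
    rw [if_neg (by tauto)]
    calc ∫ ω, W g ω * W f ω * (W g ω * W h ω) ∂μ
        = ∫ ω, W f ω * (W g ω * W g ω * W h ω) ∂μ := by congr 1; ext ω; ring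
      _ = 0 := integral_mul_mul_mul_eq_zero_of_ne_of_ne_of_ne hind hmeas (hcen f) hef.symm
          hef.symm (Ne.symm hhf)
  by_cases hhe : h = e
  · subst hhe
    by_cases hgf : g = f
    · subst hgf
      rw [if_pos (Or.inr ⟨rfl, rfl⟩), ← hsq]
      congr 1; ext ω; ring
    rw [if_neg (by tauto)]
    calc ∫ ω, W h ω * W f ω * (W g ω * W h ω) ∂μ
        = ∫ ω, W g ω * (W h ω * W f ω * W h ω) ∂μ := by congr 1; ext ω; ring
      _ = 0 := integral_mul_mul_mul_eq_zero_of_ne_of_ne_of_ne hind hmeas (hcen g) hgh hgf hgh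
  rw [if_neg (by tauto)]
  calc ∫ ω, W e ω * W f ω * (W g ω * W h ω) ∂μ
      = ∫ ω, W e ω * (W f ω * W g ω * W h ω) ∂μ := by congr 1; ext ω; ring
    _ = 0 := integral_mul_mul_mul_eq_zero_of_ne_of_ne_of_ne hind hmeas (hcen e) hef
        (Ne.symm hge) (Ne.symm hhe)

end Independent

theorem MeasureTheory.MemLp.mul_top {Ω : Type*} [MeasurableSpace Ω] {μ : Measure Ω}
    {f g : Ω → ℝ} (hf : MemLp f ⊤ μ) (hg : MemLp g ⊤ μ) : MemLp (fun ω => f ω * g ω) ⊤ μ :=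
  hg.mul' (r := ⊤) hf

theorem integral_sum_mul_sum {Ω κ κ' : Type*} [MeasurableSpace Ω] {μ : Measure Ω}
    (s : Finset κ) (t : Finset κ') (f : κ → Ω → ℝ) (g : κ' → Ω → ℝ)
    (h : ∀ a ∈ s, ∀ b ∈ t, Integrable (fun ω => f a ω * g b ω) μ) :
    ∫ ω, (∑ a ∈ s, f a ω) * (∑ b ∈ t, g b ω) ∂μ = ∑ a ∈ s, ∑ b ∈ t, ∫ ω, f a ω * g b ω ∂μ := by
  simp_rw [sum_mul_sum]
  rw [integral_finsetSum _ fun a ha => integrable_finsetSum _ (h a ha)]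
  exact sum_congr rfl fun a ha => integral_finsetSum _ (h a ha)

section HER
variable {Ω α : Type*} [MeasurableSpace Ω] {μ : Measure Ω} [LinearOrder α]

def edgeOf {i j : α} (h : i ≠ j) : {e : α × α // e.1 < e.2} :=
  ⟨(min i j, max i j), min_lt_max.2 h⟩

theorem edgeOf_eq_edgeOf_iff {i j k l : α} (hij : i ≠ j) (hkl : k ≠ l) :
    edgeOf hij = edgeOf hkl ↔ (k, l) = (i, j) ∨ (k, l) = (j, i) := by
  simp only [edgeOf, Subtype.mk.injEq, Prod.mk.injEq]
  rcases lt_or_gt_of_ne hij with h | h <;> rcases lt_or_gt_of_ne hkl with h' | h' <;>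
    simp [h.le, h'.le] <;> grind

/-- The inhomogeneous Erdős–Rényi model `HER(p)`. -/
structure IsHER (μ : Measure Ω) (Y : α → α → Ω → ℝ) (p : α → α → ℝ) : Prop where
  symm : ∀ i j, Y i j = Y j i
  p_symm : ∀ i j, p i j = p j i
  measurable : ∀ i j, Measurable (Y i j)
  zero_or_one : ∀ i j ω, Y i j ω = 0 ∨ Y i j ω = 1
  integral_eq : ∀ i j, i ≠ j → ∫ ω, Y i j ω ∂μ = p i j
  indep : iIndepFun (fun e : {e : α × α // e.1 < e.2} => Y e.1.1 e.1.2) μ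

def centered (Y : α → α → Ω → ℝ) (p : α → α → ℝ) (i j : α) (ω : Ω) : ℝ := Y i j ω - p i j

variable [Fintype α]

def linearPart (Y : α → α → Ω → ℝ) (p c : α → α → ℝ) (ω : Ω) : ℝ :=
  ∑ q ∈ univ.offDiag, c q.1 q.2 * centered Y p q.1 q.2 ω

def cherryPart (Y : α → α → Ω → ℝ) (p : α → α → ℝ) (ω : Ω) : ℝ :=
  ∑ t ∈ cherries α, centered Y p t.1 t.2.1 ω * centered Y p t.1 t.2.2 ω

end HER

namespace IsHER
variable {Ω α : Type*} [MeasurableSpace Ω] {μ : Measure Ω} [LinearOrder α]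
  {Y : α → α → Ω → ℝ} {p : α → α → ℝ}

theorem centered_symm (hY : IsHER μ Y p) (i j : α) : centered Y p i j = centered Y p j i := by
  ext ω
  simp only [centered, hY.symm i j, hY.p_symm i j]

theorem centered_edgeOf (hY : IsHER μ Y p) {i j : α} (hij : i ≠ j) :
    centered Y p (edgeOf hij).1.1 (edgeOf hij).1.2 = centered Y p i j := by
  rcases le_total i j with h | h
  · simp [edgeOf, h]
  · simp [edgeOf, h, hY.centered_symm j]

theorem measurable_centered (hY : IsHER μ Y p) (i j : α) : Measurable (centered Y p i j) :=
  (hY.measurable i j).sub_const _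

theorem iIndepFun_centered (hY : IsHER μ Y p) :
    iIndepFun (fun e : {e : α × α // e.1 < e.2} => centered Y p e.1.1 e.1.2) μ :=
  hY.indep.comp (fun e x => x - p e.1.1 e.1.2) fun _ => measurable_id.sub_const _

theorem memLp (hY : IsHER μ Y p) (i j : α) : MemLp (Y i j) ⊤ μ := by
  refine memLp_top_of_bound (hY.measurable i j).aestronglyMeasurable 1 (ae_of_all _ fun ω => ?_)
  rcases hY.zero_or_one i j ω with h | h <;> simp [h]

theorem centered_sq (hY : IsHER μ Y p) (i j : α) (ω : Ω) :
    centered Y p i j ω ^ 2 = p i j * (1 - p i j) + (1 - 2 * p i j) * centered Y p i j ω := by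
  rcases hY.zero_or_one i j ω with h | h <;> simp only [centered, h] <;> ring

variable [IsProbabilityMeasure μ]

theorem memLp_centered (hY : IsHER μ Y p) (i j : α) : MemLp (centered Y p i j) ⊤ μ :=
  (hY.memLp i j).sub (memLp_const _)

theorem integral_centered (hY : IsHER μ Y p) {i j : α} (hij : i ≠ j) :
    ∫ ω, centered Y p i j ω ∂μ = 0 := by
  simp only [centered]
  rw [integral_sub ((hY.memLp i j).integrable le_top) (integrable_const _),
    hY.integral_eq i j hij]
  simp

theorem integral_centered_sq (hY : IsHER μ Y p) {i j : α} (hij : i ≠ j) :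
    ∫ ω, centered Y p i j ω ^ 2 ∂μ = p i j * (1 - p i j) := by
  simp only [hY.centered_sq]
  rw [integral_add (integrable_const _) (((hY.memLp_centered i j).integrable le_top).const_mul _),
    integral_const, integral_const_mul, hY.integral_centered hij]
  simp

theorem integral_centered_mul_centered (hY : IsHER μ Y p) {q r : α × α} (hq : q.1 ≠ q.2)
    (hr : r.1 ≠ r.2) :
    ∫ ω, centered Y p q.1 q.2 ω * centered Y p r.1 r.2 ω ∂μ
      = (if r = q then p q.1 q.2 * (1 - p q.1 q.2) else 0)
        + (if r = (q.2, q.1) then p q.1 q.2 * (1 - p q.1 q.2) else 0) := by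
  by_cases h : edgeOf hq = edgeOf hr
  · have hZ : centered Y p r.1 r.2 = centered Y p q.1 q.2 := by
      rw [← hY.centered_edgeOf hr, ← h, hY.centered_edgeOf hq]
    simp only [hZ, ← sq, hY.integral_centered_sq hq]
    have hswap : (q.2, q.1) ≠ q := fun h' => hq (congrArg Prod.snd h')
    rcases (edgeOf_eq_edgeOf_iff hq hr).1 h with h | h <;> simp only [Prod.mk.eta] at h <;>
      subst h <;> simp [hswap, hswap.symm]
  · rw [← hY.centered_edgeOf hq, ← hY.centered_edgeOf hr,
      integral_mul_eq_zero_of_ne hY.iIndepFun_centered (fun _ => hY.measurable_centered _ _)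
        (hY.integral_centered (edgeOf hq).2.ne) h]
    rw [edgeOf_eq_edgeOf_iff, Prod.mk.eta, Prod.mk.eta] at h
    simp [not_or.1 h]

variable [Fintype α]

theorem integral_centered_mul_cherry (hY : IsHER μ Y p) {i j : α} (hij : i ≠ j)
    {t : α × α × α} (ht : t ∈ cherries α) :
    ∫ ω, centered Y p i j ω * (centered Y p t.1 t.2.1 ω * centered Y p t.1 t.2.2 ω) ∂μ = 0 := by
  obtain ⟨a, b, c⟩ := t
  simp only [cherries, mem_filter, mem_univ, true_and] at ht
  obtain ⟨hab, hac, hbc⟩ := ht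
  rw [← hY.centered_edgeOf hij, ← hY.centered_edgeOf hab, ← hY.centered_edgeOf hac]
  refine integral_mul_mul_eq_zero hY.iIndepFun_centered (fun _ => hY.measurable_centered _ _)
    (fun e => hY.integral_centered e.2.ne) _ ?_
  rw [Ne, edgeOf_eq_edgeOf_iff]
  simp [hbc.symm, hab]

theorem integral_cherry_mul_cherry (hY : IsHER μ Y p) {t u : α × α × α}
    (ht : t ∈ cherries α) (hu : u ∈ cherries α) :
    ∫ ω, centered Y p t.1 t.2.1 ω * centered Y p t.1 t.2.2 ω
        * (centered Y p u.1 u.2.1 ω * centered Y p u.1 u.2.2 ω) ∂μ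
      = (if u = t then p t.1 t.2.1 * (1 - p t.1 t.2.1) * (p t.1 t.2.2 * (1 - p t.1 t.2.2))
          else 0)
        + (if u = (t.1, t.2.2, t.2.1) then
            p t.1 t.2.1 * (1 - p t.1 t.2.1) * (p t.1 t.2.2 * (1 - p t.1 t.2.2)) else 0) := by
  obtain ⟨a, b, c⟩ := t
  obtain ⟨a', b', c'⟩ := u
  simp only [cherries, mem_filter, mem_univ, true_and] at ht hu
  obtain ⟨hab, hac, hbc⟩ := ht
  obtain ⟨hab', hac', hbc'⟩ := hu
  have hlegs : ∀ {x y z : α} (hxy : x ≠ y) (hxz : x ≠ z), y ≠ z → edgeOf hxy ≠ edgeOf hxz := by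
    intro x y z hxy hxz hyz
    rw [Ne, edgeOf_eq_edgeOf_iff]
    simp [hyz.symm, hxy]
  rw [← hY.centered_edgeOf hab, ← hY.centered_edgeOf hac, ← hY.centered_edgeOf hab',
    ← hY.centered_edgeOf hac', integral_mul_mul_mul_mul hY.iIndepFun_centered
      (fun _ => hY.measurable_centered _ _) (fun e => hY.integral_centered e.2.ne)
      (hlegs hab hac hbc) (hlegs hab' hac' hbc'), hY.centered_edgeOf, hY.centered_edgeOf,
    hY.integral_centered_sq hab, hY.integral_centered_sq hac]
  have same : edgeOf hab' = edgeOf hab ∧ edgeOf hac' = edgeOf hac ↔ (a', b', c') = (a, b, c) := by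
    simp only [edgeOf_eq_edgeOf_iff, Prod.mk.injEq]
    grind
  have crossed :
      edgeOf hab' = edgeOf hac ∧ edgeOf hac' = edgeOf hab ↔ (a', b', c') = (a, c, b) := by
    simp only [edgeOf_eq_edgeOf_iff, Prod.mk.injEq]
    grind
  simp only [same, crossed]
  by_cases h : (a', b', c') = (a, b, c)
  · simp only [Prod.mk.injEq] at h
    obtain ⟨rfl, rfl, rfl⟩ := h
    simp [hbc]
  · simp [h]

theorem memLp_linearPart (hY : IsHER μ Y p) (c : α → α → ℝ) :
    MemLp (linearPart Y p c) ⊤ μ :=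
  memLp_finsetSum _ fun _ _ => (hY.memLp_centered _ _).const_mul _

theorem memLp_cherryPart (hY : IsHER μ Y p) : MemLp (cherryPart Y p) ⊤ μ :=
  memLp_finsetSum _ fun _ _ => (hY.memLp_centered _ _).mul_top (hY.memLp_centered _ _)

theorem integral_linearPart_add_cherryPart (hY : IsHER μ Y p) (c : α → α → ℝ) :
    ∫ ω, linearPart Y p c ω + cherryPart Y p ω ∂μ = 0 := by
  have hZ := hY.memLp_centered
  rw [integral_add ((hY.memLp_linearPart c).integrable le_top)
      ((hY.memLp_cherryPart).integrable le_top)]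
  simp only [linearPart, cherryPart]
  rw [integral_finsetSum _ fun _ _ => ((hZ _ _).const_mul _).integrable le_top,
    integral_finsetSum _ fun _ _ => ((hZ _ _).mul_top (hZ _ _)).integrable le_top,
    sum_eq_zero fun q hq => ?linear, sum_eq_zero fun t ht => ?cherry, add_zero]
  case linear => rw [integral_const_mul, hY.integral_centered (mem_offDiag.1 hq).2.2, mul_zero]
  case cherry =>
    simp only [cherries, mem_filter, mem_univ, true_and] at ht
    rw [hY.integral_centered_mul_centered (q := (t.1, t.2.1)) (r := (t.1, t.2.2)) ht.1 ht.2.1]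
    simp [ht.1, ht.2.2.symm]

theorem integral_linearPart_mul_linearPart (hY : IsHER μ Y p) (c : α → α → ℝ) :
    ∫ ω, linearPart Y p c ω * linearPart Y p c ω ∂μ
      = ∑ q ∈ univ.offDiag, c q.1 q.2 * (c q.1 q.2 + c q.2 q.1) * (p q.1 q.2 * (1 - p q.1 q.2)) := by
  simp only [linearPart]
  rw [integral_sum_mul_sum _ _ _ _ fun _ _ _ _ => ?integrable]
  case integrable => exact (((hY.memLp_centered _ _).const_mul _).mul_top
    ((hY.memLp_centered _ _).const_mul _)).integrable le_top
  refine sum_congr rfl fun q hq => ?_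
  have hq' : (q.2, q.1) ∈ univ.offDiag := by simp_all [mem_offDiag, ne_comm]
  simp only [mul_mul_mul_comm (c q.1 q.2), integral_const_mul]
  rw [sum_congr rfl fun r hr => by
    rw [hY.integral_centered_mul_centered (mem_offDiag.1 hq).2.2 (mem_offDiag.1 hr).2.2]]
  simp [mul_add, sum_add_distrib, sum_ite_eq', hq, hq']
  ring

theorem integral_linearPart_mul_cherryPart (hY : IsHER μ Y p) (c : α → α → ℝ) :
    ∫ ω, linearPart Y p c ω * cherryPart Y p ω ∂μ = 0 := by
  simp only [linearPart, cherryPart]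
  rw [integral_sum_mul_sum _ _ _ _ fun _ _ _ _ => ?integrable]
  case integrable => exact (((hY.memLp_centered _ _).const_mul _).mul_top
    ((hY.memLp_centered _ _).mul_top (hY.memLp_centered _ _))).integrable le_top
  refine sum_eq_zero fun q hq => sum_eq_zero fun t ht => ?_
  simp only [mul_assoc, integral_const_mul,
    hY.integral_centered_mul_cherry (mem_offDiag.1 hq).2.2 ht, mul_zero]

theorem integral_cherryPart_mul_cherryPart (hY : IsHER μ Y p) :
    ∫ ω, cherryPart Y p ω * cherryPart Y p ω ∂μ
      = 2 * ∑ t ∈ cherries α,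
          p t.1 t.2.1 * (1 - p t.1 t.2.1) * (p t.1 t.2.2 * (1 - p t.1 t.2.2)) := by
  simp only [cherryPart]
  rw [integral_sum_mul_sum _ _ _ _ fun _ _ _ _ => ?integrable, mul_sum]
  case integrable => exact (((hY.memLp_centered _ _).mul_top (hY.memLp_centered _ _)).mul_top
    ((hY.memLp_centered _ _).mul_top (hY.memLp_centered _ _))).integrable le_top
  refine sum_congr rfl fun t ht => ?_
  have ht' : (t.1, t.2.2, t.2.1) ∈ cherries α := by
    simp only [cherries, mem_filter, mem_univ, true_and] at ht ⊢
    exact ⟨ht.2.1, ht.1, ht.2.2.symm⟩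
  rw [sum_congr rfl fun u hu => hY.integral_cherry_mul_cherry ht hu]
  simp [sum_add_distrib, sum_ite_eq', ht, ht']
  ring

theorem variance_const_add_linearPart_add_cherryPart (hY : IsHER μ Y p) (C : ℝ)
    (c : α → α → ℝ) :
    variance (fun ω => C + (linearPart Y p c ω + cherryPart Y p ω)) μ
      = ∑ q ∈ univ.offDiag, c q.1 q.2 * (c q.1 q.2 + c q.2 q.1) * (p q.1 q.2 * (1 - p q.1 q.2))
        + 2 * ∑ t ∈ cherries α,
          p t.1 t.2.1 * (1 - p t.1 t.2.1) * (p t.1 t.2.2 * (1 - p t.1 t.2.2)) := by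
  have hL := hY.memLp_linearPart c
  have hQ := hY.memLp_cherryPart
  have hLQ : MemLp (fun ω => linearPart Y p c ω + cherryPart Y p ω) ⊤ μ := hL.add hQ
  have hLL := (hL.mul_top hL).integrable le_top
  have hLQ2 := ((hL.mul_top hQ).const_mul 2).integrable le_top
  have hLL_LQ2 : Integrable (fun ω => linearPart Y p c ω * linearPart Y p c ω
      + 2 * (linearPart Y p c ω * cherryPart Y p ω)) μ := hLL.add hLQ2
  rw [variance_const_add hLQ.aestronglyMeasurable,
    variance_of_integral_eq_zero hLQ.aestronglyMeasurable.aemeasurable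
      (hY.integral_linearPart_add_cherryPart c)]
  have hsq : ∀ ω, (linearPart Y p c ω + cherryPart Y p ω) ^ 2
      = linearPart Y p c ω * linearPart Y p c ω + 2 * (linearPart Y p c ω * cherryPart Y p ω)
        + cherryPart Y p ω * cherryPart Y p ω := fun ω => by ring
  simp only [hsq]
  rw [integral_add hLL_LQ2 ((hQ.mul_top hQ).integrable le_top), integral_add hLL hLQ2,
    integral_const_mul, hY.integral_linearPart_mul_linearPart,
    hY.integral_linearPart_mul_cherryPart, hY.integral_cherryPart_mul_cherryPart]
  ring

end IsHER

def meanDegreeGap {α : Type*} [Fintype α] [DecidableEq α] (p p0 : α → α → ℝ) (i : α) : ℝ :=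
  ∑ k ∈ univ.filter (fun k => k ≠ i), (p i k - p0 i k)

theorem IsHER.sum_sq_degree_sub_eq {Ω α : Type*} [MeasurableSpace Ω] {μ : Measure Ω}
    [LinearOrder α] [Fintype α] {Y : α → α → Ω → ℝ} {p : α → α → ℝ} (hY : IsHER μ Y p)
    (p0 : α → α → ℝ) (ω : Ω) :
    ∑ i, ((∑ j ∈ univ.filter (fun j => j ≠ i), Y i j ω)
        - ∑ j ∈ univ.filter (fun j => j ≠ i), p0 i j) ^ 2
      = (∑ i, meanDegreeGap p p0 i ^ 2 + ∑ q ∈ univ.offDiag, p q.1 q.2 * (1 - p q.1 q.2))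
        + (linearPart Y p (fun i j => 1 - 2 * p i j + 2 * meanDegreeGap p p0 i) ω
          + cherryPart Y p ω) := by
  have hdev : ∀ i, (∑ j ∈ univ.filter (fun j => j ≠ i), Y i j ω)
      - ∑ j ∈ univ.filter (fun j => j ≠ i), p0 i j
        = ∑ j ∈ univ.filter (fun j => j ≠ i), centered Y p i j ω + meanDegreeGap p p0 i := by
    intro i
    simp only [centered, meanDegreeGap, sum_sub_distrib]
    ring
  have hlin : ∀ q : α × α,
      p q.1 q.2 * (1 - p q.1 q.2) + (1 - 2 * p q.1 q.2) * centered Y p q.1 q.2 ω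
        + 2 * meanDegreeGap p p0 q.1 * centered Y p q.1 q.2 ω
      = p q.1 q.2 * (1 - p q.1 q.2)
        + (1 - 2 * p q.1 q.2 + 2 * meanDegreeGap p p0 q.1) * centered Y p q.1 q.2 ω :=
    fun q => by ring
  simp only [hdev, sum_sq_sum_ne_add_eq, hY.centered_sq, hlin, sum_add_distrib, linearPart,
    cherryPart]
  ring

theorem her_degree_mean_square_variance_general
    {Ω : Type*} [MeasurableSpace Ω] (μ : Measure Ω) [IsProbabilityMeasure μ]
    (n : ℕ) (Y : Fin n → Fin n → Ω → ℝ) (p p0 : Fin n → Fin n → ℝ)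
    (hYsym : ∀ i j, Y i j = Y j i)
    (hpsym : ∀ i j, p i j = p j i)
    (hmeas : ∀ i j, Measurable (Y i j))
    (h01 : ∀ i j ω, Y i j ω = 0 ∨ Y i j ω = 1)
    (hmean : ∀ i j, i ≠ j → ∫ ω, Y i j ω ∂μ = p i j)
    (hindep : iIndepFun
      (fun e : {e : Fin n × Fin n // e.1 < e.2} => Y e.1.1 e.1.2) μ) :
    variance (fun ω => (1 / (n : ℝ)) * ∑ i,
        ((∑ j ∈ univ.filter (fun j => j ≠ i), Y i j ω)
          - ∑ j ∈ univ.filter (fun j => j ≠ i), p0 i j) ^ 2) μ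
    = (4 / (n : ℝ) ^ 2) *
      ((∑ i, ∑ j ∈ univ.filter (fun j => i < j),
          p i j * (1 - p i j) *
            (1 - 2 * p i j + (∑ k ∈ univ.filter (fun k => k ≠ i), (p i k - p0 i k))
              + (∑ k ∈ univ.filter (fun k => k ≠ j), (p j k - p0 j k))) ^ 2)
      + ∑ i, ∑ j ∈ univ.filter (fun j => i < j), ∑ k ∈ univ.filter (fun k => j < k),
          (p i j * (1 - p i j) * (p i k * (1 - p i k))
            + p i j * (1 - p i j) * (p j k * (1 - p j k))
            + p i k * (1 - p i k) * (p j k * (1 - p j k)))) := by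
  have hY : IsHER μ Y p := ⟨hYsym, hpsym, hmeas, h01, hmean, hindep⟩
  set c : Fin n → Fin n → ℝ := fun i j => 1 - 2 * p i j + 2 * meanDegreeGap p p0 i
  have hpair : ∀ i j, c i j * (c i j + c j i) * (p i j * (1 - p i j))
      + c j i * (c j i + c i j) * (p j i * (1 - p j i))
        = 4 * (p i j * (1 - p i j)
          * (1 - 2 * p i j + meanDegreeGap p p0 i + meanDegreeGap p p0 j) ^ 2) := by
    intro i j
    simp only [c, hpsym j i]
    ring
  rw [variance_const_mul]
  simp only [hY.sum_sq_degree_sub_eq p0]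
  rw [hY.variance_const_add_linearPart_add_cherryPart _ c,
    sum_offDiag_eq_sum_lt (fun i j => c i j * (c i j + c j i) * (p i j * (1 - p i j))),
    sum_cherries_eq_two_mul_sum_lt_lt (fun i j => p i j * (1 - p i j)) fun i j => by rw [hpsym]]
  simp only [hpair, ← mul_sum, meanDegreeGap]
  ring

/-- Variance of the degree mean square statistic `W` under HER(p). -/
theorem her_degree_mean_square_variance
    {Ω : Type*} [MeasurableSpace Ω] (μ : Measure Ω) [IsProbabilityMeasure μ]
    (n : ℕ) (Y : Fin n → Fin n → Ω → ℝ) (p p0 : Fin n → Fin n → ℝ)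
    (hYsym : ∀ i j, Y i j = Y j i) (hYdiag : ∀ i, Y i i = 0)
    (hpsym : ∀ i j, p i j = p j i) (hpdiag : ∀ i, p i i = 0)
    (hp0sym : ∀ i j, p0 i j = p0 j i) (hp0diag : ∀ i, p0 i i = 0)
    (hmeas : ∀ i j, Measurable (Y i j))
    (h01 : ∀ i j ω, Y i j ω = 0 ∨ Y i j ω = 1)
    (hmean : ∀ i j, i ≠ j → ∫ ω, Y i j ω ∂μ = p i j)
    (hindep : iIndepFun
      (fun e : {e : Fin n × Fin n // e.1 < e.2} => Y e.1.1 e.1.2) μ) :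
    variance (fun ω => (1 / (n : ℝ)) * ∑ i,
        ((∑ j ∈ univ.filter (fun j => j ≠ i), Y i j ω)
          - ∑ j ∈ univ.filter (fun j => j ≠ i), p0 i j) ^ 2) μ
    = (4 / (n : ℝ) ^ 2) *
      ((∑ i, ∑ j ∈ univ.filter (fun j => i < j),
          p i j * (1 - p i j) *
            (1 - 2 * p i j + (∑ k ∈ univ.filter (fun k => k ≠ i), (p i k - p0 i k))
              + (∑ k ∈ univ.filter (fun k => k ≠ j), (p j k - p0 j k))) ^ 2)
      + ∑ i, ∑ j ∈ univ.filter (fun j => i < j), ∑ k ∈ univ.filter (fun k => j < k),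
          (p i j * (1 - p i j) * (p i k * (1 - p i k))
            + p i j * (1 - p i j) * (p j k * (1 - p j k))
            + p i k * (1 - p i k) * (p j k * (1 - p j k)))) :=
  her_degree_mean_square_variance_general μ n Y p p0 hYsym hpsym hmeas h01 hmean hindep
end

section
/- Let Y_{ij}, i<j, be independent Bernoulli variables, extended symmetrically, D_i = Σ_{j≠i} Y_{ij}, and D̄ = (1/n) Σ_j D_j. Then the deterministic identity n² · (1/n) Σ_i (D_i − D̄)² = 2(n−2) Σ_{i<j} Y_{ij} + 2(n−4) Σ_{i<j<k} (Y_{ij}Y_{ik} + Y_{ij}Y_{jk} + Y_{ik}Y_{jk}) − 8 Σ_{i<j<k<l} (Y_{ij}Y_{kl} + Y_{ik}Y_{jl} + Y_{il}Y_{jk}) holds, where the left side equals (1/2) Σ_{i≠j} (D_i − D_j)². -/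
open Finset


section helpers
variable {n : ℕ}

lemma iteSum {α : Type*} (c : Prop) [Decidable c] (s : Finset α) (f : α → ℝ) :
    (if c then ∑ x ∈ s, f x else 0) = ∑ x ∈ s, if c then f x else 0 := by
  split <;> simp

lemma swap23 (F : Fin n → Fin n → Fin n → ℝ) :
    ∑ i, ∑ j, ∑ k, F i j k = ∑ i, ∑ k, ∑ j, F i j k :=
  Finset.sum_congr rfl fun _ _ => Finset.sum_comm

lemma rot3 (F : Fin n → Fin n → Fin n → ℝ) :
    ∑ i, ∑ j, ∑ k, F i j k = ∑ j, ∑ k, ∑ i, F i j k := by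
  rw [Finset.sum_comm]; exact Finset.sum_congr rfl fun _ _ => Finset.sum_comm

-- swap halves of a 4-fold sum
lemma swapHalves (F : Fin n → Fin n → Fin n → Fin n → ℝ) :
    ∑ i, ∑ j, ∑ k, ∑ l, F i j k l = ∑ k, ∑ l, ∑ i, ∑ j, F i j k l := by
  have h1 : ∀ i : Fin n, ∑ j, ∑ k, ∑ l, F i j k l = ∑ k, ∑ l, ∑ j, F i j k l :=
    fun i => rot3 (fun j k l => F i j k l)
  calc ∑ i, ∑ j, ∑ k, ∑ l, F i j k l
      = ∑ i, ∑ k, ∑ l, ∑ j, F i j k l := Finset.sum_congr rfl fun i _ => h1 i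
    _ = ∑ k, ∑ i, ∑ l, ∑ j, F i j k l := Finset.sum_comm
    _ = ∑ k, ∑ l, ∑ i, ∑ j, F i j k l := Finset.sum_congr rfl fun k _ => Finset.sum_comm

lemma toSorted3 (g : Fin n → Fin n → Fin n → ℝ) :
    ∑ i, ∑ j, ∑ k, (if i < j ∧ j < k then g i j k else 0)
      = ∑ i, ∑ j ∈ univ.filter (fun j => i < j), ∑ k ∈ univ.filter (fun k => j < k), g i j k := by
  simp only [Finset.sum_filter, ite_and]
  exact Finset.sum_congr rfl fun i _ => Finset.sum_congr rfl fun j _ => (iteSum _ _ _).symm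

lemma toSorted4 (g : Fin n → Fin n → Fin n → Fin n → ℝ) :
    ∑ i, ∑ j, ∑ k, ∑ l, (if i < j ∧ j < k ∧ k < l then g i j k l else 0)
      = ∑ i, ∑ j ∈ univ.filter (fun j => i < j), ∑ k ∈ univ.filter (fun k => j < k),
          ∑ l ∈ univ.filter (fun l => k < l), g i j k l := by
  simp only [Finset.sum_filter, ite_and]
  refine Finset.sum_congr rfl fun i _ => Finset.sum_congr rfl fun j _ => ?_
  by_cases h : i < j
  · simp only [if_pos h]
    refine Finset.sum_congr rfl fun k _ => ?_
    by_cases h2 : j < k <;> simp [h2]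
  · simp [h]

end helpers
section main
variable {n : ℕ} {Y : Fin n → Fin n → ℝ}

lemma lemPair (hYsym : ∀ i j, Y i j = Y j i) (hYdiag : ∀ i, Y i i = 0) :
    ∑ i, ∑ j, Y i j = 2 * ∑ i, ∑ j ∈ univ.filter (fun j => i < j), Y i j := by
  have key : ∀ i j : Fin n, Y i j =
      (if i < j then Y i j else 0) + ((if i = j then Y i j else 0) + (if j < i then Y i j else 0)) := by
    intro i j
    rcases lt_trichotomy i j with h | h | h
    · simp [h, h.ne, asymm h]
    · simp [h, lt_irrefl]
    · simp [h, (h.ne).symm, asymm h, h.ne']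
  calc ∑ i, ∑ j, Y i j
      = ∑ i, ∑ j, ((if i < j then Y i j else 0)
          + ((if i = j then Y i j else 0) + (if j < i then Y i j else 0))) :=
        Finset.sum_congr rfl fun i _ => Finset.sum_congr rfl fun j _ => key i j
    _ = (∑ i, ∑ j, if i < j then Y i j else 0)
          + ((∑ i, ∑ j, if i = j then Y i j else 0) + (∑ i, ∑ j, if j < i then Y i j else 0)) := by
        simp [Finset.sum_add_distrib]
    _ = (∑ i, ∑ j, if i < j then Y i j else 0)
          + (0 + (∑ i, ∑ j, if i < j then Y i j else 0)) := by
        congr 1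
        congr 1
        · simp [hYdiag]
        · rw [Finset.sum_comm]
          exact Finset.sum_congr rfl fun j _ => Finset.sum_congr rfl fun i _ => by
            by_cases h : j < i <;> simp [h, hYsym i j]
    _ = 2 * ∑ i, ∑ j ∈ univ.filter (fun j => i < j), Y i j := by
        simp [Finset.sum_filter]; ring

end main

section wedge
variable {n : ℕ} {Y : Fin n → Fin n → ℝ}

lemma lemWedge (hYsym : ∀ i j, Y i j = Y j i) :
    ∑ i, ∑ j, ∑ k, (if i ≠ j ∧ i ≠ k ∧ j ≠ k then Y i j * Y i k else 0)
      = 2 * ∑ i, ∑ j ∈ univ.filter (fun j => i < j), ∑ k ∈ univ.filter (fun k => j < k),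
          (Y i j * Y i k + Y i j * Y j k + Y i k * Y j k) := by
  -- Step 1: split by order of j,k
  have split1 : ∀ i j k : Fin n, (if i ≠ j ∧ i ≠ k ∧ j ≠ k then Y i j * Y i k else 0)
      = (if (i ≠ j ∧ i ≠ k) ∧ j < k then Y i j * Y i k else 0)
        + (if (i ≠ j ∧ i ≠ k) ∧ k < j then Y i j * Y i k else 0) := by
    intro i j k
    rcases lt_trichotomy j k with h | h | h
    · simp [h, h.ne, asymm h, and_assoc]
    · subst h; simp [lt_irrefl]
    · simp [h, h.ne', asymm h, and_assoc]
  have sym1 : ∑ i, ∑ j, ∑ k, (if (i ≠ j ∧ i ≠ k) ∧ k < j then Y i j * Y i k else 0)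
      = ∑ i, ∑ j, ∑ k, (if (i ≠ j ∧ i ≠ k) ∧ j < k then Y i j * Y i k else 0) := by
    rw [swap23]
    exact Finset.sum_congr rfl fun i _ => Finset.sum_congr rfl fun a _ =>
      Finset.sum_congr rfl fun b _ => if_congr (by tauto) (mul_comm _ _) rfl
  -- Step 2: split i into three regions
  have split2 : ∀ i j k : Fin n, (if (i ≠ j ∧ i ≠ k) ∧ j < k then Y i j * Y i k else 0)
      = (if i < j ∧ j < k then Y i j * Y i k else 0)
        + ((if j < i ∧ i < k then Y i j * Y i k else 0)
          + (if j < k ∧ k < i then Y i j * Y i k else 0)) := by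
    intro i j k
    by_cases hjk : j < k
    · rcases lt_trichotomy i j with hij | hij | hij
      · have hik := hij.trans hjk
        simp [hij, hjk, hik, hij.ne, hik.ne, asymm hij, asymm hik]
      · subst hij
        simp [lt_irrefl, hjk, asymm hjk]
      · rcases lt_trichotomy i k with hik | hik | hik
        · simp [hij, hik, hjk, asymm hij, hij.ne', hik.ne, asymm hik]
        · subst hik
          simp [lt_irrefl, asymm hij, hjk]
        · simp [hij, hik, hjk, hij.ne', hik.ne', asymm hij, asymm hik]
    · rw [if_neg (fun h => hjk h.2), if_neg (fun h => hjk h.2),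
        if_neg (fun h : (j < i ∧ i < k) => hjk (h.1.trans h.2)),
        if_neg (fun h : (j < k ∧ k < i) => hjk h.1)]
      ring
  -- the three sorted pieces
  have hA2 : ∑ i, ∑ j, ∑ k, (if j < i ∧ i < k then Y i j * Y i k else 0)
      = ∑ a, ∑ b, ∑ c, (if a < b ∧ b < c then Y a b * Y b c else 0) := by
    rw [Finset.sum_comm]
    exact Finset.sum_congr rfl fun a _ => Finset.sum_congr rfl fun b _ =>
      Finset.sum_congr rfl fun c _ => by rw [hYsym b a]
  have hA3 : ∑ i, ∑ j, ∑ k, (if j < k ∧ k < i then Y i j * Y i k else 0)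
      = ∑ a, ∑ b, ∑ c, (if a < b ∧ b < c then Y a c * Y b c else 0) := by
    rw [rot3]
    exact Finset.sum_congr rfl fun a _ => Finset.sum_congr rfl fun b _ =>
      Finset.sum_congr rfl fun c _ => by rw [hYsym c a, hYsym c b]
  calc ∑ i, ∑ j, ∑ k, (if i ≠ j ∧ i ≠ k ∧ j ≠ k then Y i j * Y i k else 0)
      = ∑ i, ∑ j, ∑ k, ((if (i ≠ j ∧ i ≠ k) ∧ j < k then Y i j * Y i k else 0)
          + (if (i ≠ j ∧ i ≠ k) ∧ k < j then Y i j * Y i k else 0)) :=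
        Finset.sum_congr rfl fun i _ => Finset.sum_congr rfl fun j _ =>
          Finset.sum_congr rfl fun k _ => split1 i j k
    _ = 2 * ∑ i, ∑ j, ∑ k, (if (i ≠ j ∧ i ≠ k) ∧ j < k then Y i j * Y i k else 0) := by
        simp only [Finset.sum_add_distrib, sym1]; ring
    _ = 2 * ∑ i, ∑ j ∈ univ.filter (fun j => i < j), ∑ k ∈ univ.filter (fun k => j < k),
          (Y i j * Y i k + Y i j * Y j k + Y i k * Y j k) := by
        congr 1
        calc ∑ i, ∑ j, ∑ k, (if (i ≠ j ∧ i ≠ k) ∧ j < k then Y i j * Y i k else 0)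
            = ∑ i, ∑ j, ∑ k, ((if i < j ∧ j < k then Y i j * Y i k else 0)
              + ((if j < i ∧ i < k then Y i j * Y i k else 0)
                + (if j < k ∧ k < i then Y i j * Y i k else 0))) :=
              Finset.sum_congr rfl fun i _ => Finset.sum_congr rfl fun j _ =>
                Finset.sum_congr rfl fun k _ => split2 i j k
          _ = (∑ i, ∑ j, ∑ k, (if i < j ∧ j < k then Y i j * Y i k else 0))
              + ((∑ i, ∑ j, ∑ k, (if i < j ∧ j < k then Y i j * Y j k else 0))
                + (∑ i, ∑ j, ∑ k, (if i < j ∧ j < k then Y i k * Y j k else 0))) := by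
              simp only [Finset.sum_add_distrib, hA2, hA3]
          _ = ∑ i, ∑ j ∈ univ.filter (fun j => i < j), ∑ k ∈ univ.filter (fun k => j < k),
              (Y i j * Y i k + Y i j * Y j k + Y i k * Y j k) := by
              rw [toSorted3 (fun i j k => Y i j * Y i k),
                toSorted3 (fun i j k => Y i j * Y j k),
                toSorted3 (fun i j k => Y i k * Y j k)]
              simp [Finset.sum_add_distrib]; ring

end wedge
section part4
variable {n : ℕ} {Y : Fin n → Fin n → ℝ}

lemma lemFull3 (hYdiag : ∀ i, Y i i = 0) (h01 : ∀ i j, Y i j = 0 ∨ Y i j = 1) :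
    ∑ i, ∑ j, ∑ k, Y i j * Y i k
      = (∑ i, ∑ j, Y i j)
        + ∑ i, ∑ j, ∑ k, (if i ≠ j ∧ i ≠ k ∧ j ≠ k then Y i j * Y i k else 0) := by
  have hsq : ∀ i j, Y i j * Y i j = Y i j := by
    intro i j; rcases h01 i j with h | h <;> rw [h] <;> ring
  have key : ∀ i j k : Fin n, Y i j * Y i k
      = (if j = k then Y i j * Y i k else 0)
        + (if i ≠ j ∧ i ≠ k ∧ j ≠ k then Y i j * Y i k else 0) := by
    intro i j k
    by_cases hjk : j = k
    · simp [hjk]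
    · by_cases hij : i = j
      · subst hij; simp [hjk, hYdiag]
      · by_cases hik : i = k
        · subst hik; simp [hjk, hij, hYdiag]
        · simp [hjk, hij, hik]
  calc ∑ i, ∑ j, ∑ k, Y i j * Y i k
      = ∑ i, ∑ j, ∑ k, ((if j = k then Y i j * Y i k else 0)
          + (if i ≠ j ∧ i ≠ k ∧ j ≠ k then Y i j * Y i k else 0)) :=
        Finset.sum_congr rfl fun i _ => Finset.sum_congr rfl fun j _ =>
          Finset.sum_congr rfl fun k _ => key i j k
    _ = (∑ i, ∑ j, ∑ k, (if j = k then Y i j * Y i k else 0))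
        + ∑ i, ∑ j, ∑ k, (if i ≠ j ∧ i ≠ k ∧ j ≠ k then Y i j * Y i k else 0) := by
        simp [Finset.sum_add_distrib]
    _ = (∑ i, ∑ j, Y i j)
        + ∑ i, ∑ j, ∑ k, (if i ≠ j ∧ i ≠ k ∧ j ≠ k then Y i j * Y i k else 0) := by
        congr 1
        refine Finset.sum_congr rfl fun i _ => Finset.sum_congr rfl fun j _ => ?_
        simp [Finset.sum_ite_eq, hsq]

end part4
section part5
variable {n : ℕ} {Y : Fin n → Fin n → ℝ}

lemma regC (hYdiag : ∀ i, Y i i = 0) : ∀ i j k : Fin n,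
    (if k ≠ i ∧ k ≠ j then Y i j * Y i k else 0)
      = (if i ≠ j ∧ i ≠ k ∧ j ≠ k then Y i j * Y i k else 0) := by
  intro i j k
  by_cases hij : i = j
  · subst hij; simp [hYdiag]
  · by_cases hki : k = i
    · subst hki; simp [hYdiag]
    · by_cases hkj : k = j
      · subst hkj; simp [hij, Ne.symm hki]
      · simp [hij, hki, hkj, Ne.symm hki, Ne.symm hkj]

lemma collapse_k (i : Fin n) (p : Fin n → Prop) [DecidablePred p] (f : Fin n → Fin n → ℝ) :
    (∑ k, ∑ l, if k = i ∧ p l then f k l else 0) = ∑ l, if p l then f i l else 0 := by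
  have h : ∀ k : Fin n, (∑ l, if k = i ∧ p l then f k l else 0)
      = if k = i then (∑ l, if p l then f k l else 0) else 0 := by
    intro k; by_cases h : k = i <;> simp [h]
  rw [Finset.sum_congr rfl fun k _ => h k]
  simp

lemma collapse_l (j : Fin n) (p : Fin n → Prop) [DecidablePred p] (f : Fin n → Fin n → ℝ) :
    (∑ k, ∑ l, if l = j ∧ p k then f k l else 0) = ∑ k, if p k then f k j else 0 := by
  refine Finset.sum_congr rfl fun k _ => ?_
  by_cases h : p k <;> simp [h]

lemma lemFull4 (hYsym : ∀ i j, Y i j = Y j i) (hYdiag : ∀ i, Y i i = 0)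
    (h01 : ∀ i j, Y i j = 0 ∨ Y i j = 1) :
    ∑ i, ∑ j, ∑ k, ∑ l, Y i j * Y k l
      = 2 * (∑ i, ∑ j, Y i j)
        + 4 * (∑ i, ∑ j, ∑ k, (if i ≠ j ∧ i ≠ k ∧ j ≠ k then Y i j * Y i k else 0))
        + ∑ i, ∑ j, ∑ k, ∑ l,
            (if (i ≠ j ∧ k ≠ l) ∧ k ≠ i ∧ k ≠ j ∧ l ≠ i ∧ l ≠ j then Y i j * Y k l else 0) := by
  have hsq : ∀ i j, Y i j * Y i j = Y i j := by
    intro i j; rcases h01 i j with h | h <;> rw [h] <;> ring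
  have key : ∀ i j k l : Fin n, Y i j * Y k l
      = (if k = i ∧ l = j then Y i j * Y k l else 0)
        + (if k = j ∧ l = i then Y i j * Y k l else 0)
        + (if k = i ∧ (l ≠ i ∧ l ≠ j) then Y i j * Y k l else 0)
        + (if k = j ∧ (l ≠ i ∧ l ≠ j) then Y i j * Y k l else 0)
        + (if l = i ∧ (k ≠ i ∧ k ≠ j) then Y i j * Y k l else 0)
        + (if l = j ∧ (k ≠ i ∧ k ≠ j) then Y i j * Y k l else 0)
        + (if (k ≠ i ∧ k ≠ j) ∧ (l ≠ i ∧ l ≠ j) then Y i j * Y k l else 0) := by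
    intro i j k l
    by_cases hij : i = j
    · subst hij
      by_cases hkl : Y k l = 0
      · simp [hkl, hYdiag]
      · simp [hYdiag]
    · by_cases hki : k = i
      · subst hki
        by_cases hlj : l = j
        · subst hlj; simp [hij]
        · by_cases hli : l = k
          · subst hli; simp [hij, hlj, hYdiag]
          · simp [hij, hlj, Ne.symm hij, hli]
      · by_cases hkj : k = j
        · subst hkj
          by_cases hli : l = i
          · subst hli; simp [hij, Ne.symm hij]
          · by_cases hlj : l = k
            · subst hlj; simp [hij, hli, Ne.symm hij, hYdiag]
            · simp [hij, hli, hlj, Ne.symm hij]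
        · by_cases hli : l = i
          · subst hli; simp [hij, hki, hkj]
          · by_cases hlj : l = j
            · subst hlj; simp [hij, hki, hkj, hli]
            · simp [hij, hki, hkj, hli, hlj]
  have e1 : ∑ i, ∑ j, ∑ k, ∑ l, Y i j * Y k l
      = (∑ i, ∑ j, ∑ k, ∑ l, (if k = i ∧ l = j then Y i j * Y k l else 0))
        + (∑ i, ∑ j, ∑ k, ∑ l, (if k = j ∧ l = i then Y i j * Y k l else 0))
        + (∑ i, ∑ j, ∑ k, ∑ l, (if k = i ∧ (l ≠ i ∧ l ≠ j) then Y i j * Y k l else 0))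
        + (∑ i, ∑ j, ∑ k, ∑ l, (if k = j ∧ (l ≠ i ∧ l ≠ j) then Y i j * Y k l else 0))
        + (∑ i, ∑ j, ∑ k, ∑ l, (if l = i ∧ (k ≠ i ∧ k ≠ j) then Y i j * Y k l else 0))
        + (∑ i, ∑ j, ∑ k, ∑ l, (if l = j ∧ (k ≠ i ∧ k ≠ j) then Y i j * Y k l else 0))
        + (∑ i, ∑ j, ∑ k, ∑ l, (if (k ≠ i ∧ k ≠ j) ∧ (l ≠ i ∧ l ≠ j) then Y i j * Y k l else 0)) := by
    rw [Finset.sum_congr rfl fun i _ => Finset.sum_congr rfl fun j _ =>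
      Finset.sum_congr rfl fun k _ => Finset.sum_congr rfl fun l _ => key i j k l]
    simp [Finset.sum_add_distrib]
  -- region evaluations
  have r1 : (∑ i, ∑ j, ∑ k : Fin n, ∑ l, (if k = i ∧ l = j then Y i j * Y k l else 0))
      = ∑ i, ∑ j, Y i j := by
    refine Finset.sum_congr rfl fun i _ => Finset.sum_congr rfl fun j _ => ?_
    rw [collapse_k i (fun l => l = j) (fun k l => Y i j * Y k l)]
    simp [hsq]
  have r2 : (∑ i, ∑ j, ∑ k : Fin n, ∑ l, (if k = j ∧ l = i then Y i j * Y k l else 0))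
      = ∑ i, ∑ j, Y i j := by
    refine Finset.sum_congr rfl fun i _ => Finset.sum_congr rfl fun j _ => ?_
    rw [collapse_k j (fun l => l = i) (fun k l => Y i j * Y k l)]
    simp [hYsym j i, hsq]
  have r3 : (∑ i, ∑ j, ∑ k : Fin n, ∑ l, (if k = i ∧ (l ≠ i ∧ l ≠ j) then Y i j * Y k l else 0))
      = ∑ i, ∑ j, ∑ k, (if i ≠ j ∧ i ≠ k ∧ j ≠ k then Y i j * Y i k else 0) := by
    refine Finset.sum_congr rfl fun i _ => Finset.sum_congr rfl fun j _ => ?_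
    rw [collapse_k i (fun l => l ≠ i ∧ l ≠ j) (fun k l => Y i j * Y k l)]
    exact Finset.sum_congr rfl fun k _ => regC hYdiag i j k
  have r5 : (∑ i, ∑ j, ∑ k : Fin n, ∑ l, (if l = i ∧ (k ≠ i ∧ k ≠ j) then Y i j * Y k l else 0))
      = ∑ i, ∑ j, ∑ k, (if i ≠ j ∧ i ≠ k ∧ j ≠ k then Y i j * Y i k else 0) := by
    refine Finset.sum_congr rfl fun i _ => Finset.sum_congr rfl fun j _ => ?_
    rw [collapse_l i (fun k => k ≠ i ∧ k ≠ j) (fun k l => Y i j * Y k l)]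
    refine Finset.sum_congr rfl fun k _ => ?_
    rw [hYsym k i]
    exact regC hYdiag i j k
  have r4 : (∑ i, ∑ j, ∑ k : Fin n, ∑ l, (if k = j ∧ (l ≠ i ∧ l ≠ j) then Y i j * Y k l else 0))
      = ∑ i, ∑ j, ∑ k, (if i ≠ j ∧ i ≠ k ∧ j ≠ k then Y i j * Y i k else 0) := by
    have step : ∀ i j : Fin n, (∑ k : Fin n, ∑ l, (if k = j ∧ (l ≠ i ∧ l ≠ j) then Y i j * Y k l else 0))
        = ∑ l, (if l ≠ i ∧ l ≠ j then Y i j * Y j l else 0) := fun i j =>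
      collapse_k j (fun l => l ≠ i ∧ l ≠ j) (fun k l => Y i j * Y k l)
    rw [Finset.sum_congr rfl fun i _ => Finset.sum_congr rfl fun j _ => step i j,
      Finset.sum_comm]
    refine Finset.sum_congr rfl fun a _ => Finset.sum_congr rfl fun b _ =>
      Finset.sum_congr rfl fun c _ => ?_
    calc (if c ≠ b ∧ c ≠ a then Y b a * Y a c else 0)
        = (if c ≠ a ∧ c ≠ b then Y a b * Y a c else 0) :=
          if_congr (by tauto) (by rw [hYsym b a]) rfl
      _ = (if a ≠ b ∧ a ≠ c ∧ b ≠ c then Y a b * Y a c else 0) := regC hYdiag a b c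
  have r6 : (∑ i, ∑ j, ∑ k : Fin n, ∑ l, (if l = j ∧ (k ≠ i ∧ k ≠ j) then Y i j * Y k l else 0))
      = ∑ i, ∑ j, ∑ k, (if i ≠ j ∧ i ≠ k ∧ j ≠ k then Y i j * Y i k else 0) := by
    have step : ∀ i j : Fin n, (∑ k : Fin n, ∑ l, (if l = j ∧ (k ≠ i ∧ k ≠ j) then Y i j * Y k l else 0))
        = ∑ k, (if k ≠ i ∧ k ≠ j then Y i j * Y k j else 0) := fun i j =>
      collapse_l j (fun k => k ≠ i ∧ k ≠ j) (fun k l => Y i j * Y k l)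
    rw [Finset.sum_congr rfl fun i _ => Finset.sum_congr rfl fun j _ => step i j,
      Finset.sum_comm]
    refine Finset.sum_congr rfl fun a _ => Finset.sum_congr rfl fun b _ =>
      Finset.sum_congr rfl fun c _ => ?_
    calc (if c ≠ b ∧ c ≠ a then Y b a * Y c a else 0)
        = (if c ≠ a ∧ c ≠ b then Y a b * Y a c else 0) :=
          if_congr (by tauto) (by rw [hYsym b a, hYsym c a]) rfl
      _ = (if a ≠ b ∧ a ≠ c ∧ b ≠ c then Y a b * Y a c else 0) := regC hYdiag a b c
  have r7 : (∑ i, ∑ j, ∑ k : Fin n, ∑ l, (if (k ≠ i ∧ k ≠ j) ∧ (l ≠ i ∧ l ≠ j) then Y i j * Y k l else 0))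
      = ∑ i, ∑ j, ∑ k, ∑ l,
          (if (i ≠ j ∧ k ≠ l) ∧ k ≠ i ∧ k ≠ j ∧ l ≠ i ∧ l ≠ j then Y i j * Y k l else 0) := by
    refine Finset.sum_congr rfl fun i _ => Finset.sum_congr rfl fun j _ =>
      Finset.sum_congr rfl fun k _ => Finset.sum_congr rfl fun l _ => ?_
    by_cases hij : i = j
    · subst hij; simp [hYdiag]
    · by_cases hkl : k = l
      · subst hkl; simp [hYdiag]
      · exact if_congr (by tauto) rfl rfl
  rw [e1, r1, r2, r3, r4, r5, r6, r7]
  ring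

end part5
section ltsplit
variable {n : ℕ}
lemma ltSplit (a b : Fin n) (c : Prop) [Decidable c] (h : c → a ≠ b) (x : ℝ) :
    (if c then x else 0) = (if c ∧ a < b then x else 0) + (if c ∧ b < a then x else 0) := by
  by_cases hc : c
  · rcases lt_trichotomy a b with h' | h' | h'
    · simp [hc, h', asymm h']
    · exact absurd h' (h hc)
    · simp [hc, h', asymm h']
  · simp [hc]
section partQ
variable {n : ℕ} {Y : Fin n → Fin n → ℝ}

lemma lemQ (hYsym : ∀ i j, Y i j = Y j i) :
    ∑ i, ∑ j, ∑ k, ∑ l,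
        (if (i ≠ j ∧ k ≠ l) ∧ k ≠ i ∧ k ≠ j ∧ l ≠ i ∧ l ≠ j then Y i j * Y k l else 0)
      = 8 * ∑ i, ∑ j ∈ univ.filter (fun j => i < j), ∑ k ∈ univ.filter (fun k => j < k),
          ∑ l ∈ univ.filter (fun l => k < l),
          (Y i j * Y k l + Y i k * Y j l + Y i l * Y j k) := by
  set C : Fin n → Fin n → Fin n → Fin n → Prop :=
    fun i j k l => (i ≠ j ∧ k ≠ l) ∧ k ≠ i ∧ k ≠ j ∧ l ≠ i ∧ l ≠ j with hC
  -- step 1 : order i,j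
  have s1 : ∑ i, ∑ j, ∑ k, ∑ l, (if C i j k l then Y i j * Y k l else 0)
      = 2 * ∑ i, ∑ j, ∑ k, ∑ l, (if C i j k l ∧ i < j then Y i j * Y k l else 0) := by
    have e : ∀ i j k l : Fin n, (if C i j k l then Y i j * Y k l else 0)
        = (if C i j k l ∧ i < j then Y i j * Y k l else 0)
          + (if C i j k l ∧ j < i then Y i j * Y k l else 0) :=
      fun i j k l => ltSplit i j _ (fun hc => hc.1.1) _
    rw [Finset.sum_congr rfl fun i _ => Finset.sum_congr rfl fun j _ =>
      Finset.sum_congr rfl fun k _ => Finset.sum_congr rfl fun l _ => e i j k l]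
    simp only [Finset.sum_add_distrib]
    have flip : ∑ i, ∑ j, ∑ k, ∑ l, (if C i j k l ∧ j < i then Y i j * Y k l else 0)
        = ∑ i, ∑ j, ∑ k, ∑ l, (if C i j k l ∧ i < j then Y i j * Y k l else 0) := by
      rw [Finset.sum_comm]
      refine Finset.sum_congr rfl fun a _ => Finset.sum_congr rfl fun b _ =>
        Finset.sum_congr rfl fun k _ => Finset.sum_congr rfl fun l _ => ?_
      exact if_congr (by simp only [hC]; tauto) (by rw [hYsym b a]) rfl
    rw [flip]; ring
  -- step 2 : order k,l
  have s2 : ∑ i, ∑ j, ∑ k, ∑ l, (if C i j k l ∧ i < j then Y i j * Y k l else 0)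
      = 2 * ∑ i, ∑ j, ∑ k, ∑ l, (if (C i j k l ∧ i < j) ∧ k < l then Y i j * Y k l else 0) := by
    have e : ∀ i j k l : Fin n, (if C i j k l ∧ i < j then Y i j * Y k l else 0)
        = (if (C i j k l ∧ i < j) ∧ k < l then Y i j * Y k l else 0)
          + (if (C i j k l ∧ i < j) ∧ l < k then Y i j * Y k l else 0) :=
      fun i j k l => ltSplit k l _ (fun hc => hc.1.1.2) _
    rw [Finset.sum_congr rfl fun i _ => Finset.sum_congr rfl fun j _ =>
      Finset.sum_congr rfl fun k _ => Finset.sum_congr rfl fun l _ => e i j k l]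
    simp only [Finset.sum_add_distrib]
    have flip : ∑ i, ∑ j, ∑ k, ∑ l, (if (C i j k l ∧ i < j) ∧ l < k then Y i j * Y k l else 0)
        = ∑ i, ∑ j, ∑ k, ∑ l, (if (C i j k l ∧ i < j) ∧ k < l then Y i j * Y k l else 0) := by
      refine Finset.sum_congr rfl fun i _ => Finset.sum_congr rfl fun j _ => ?_
      rw [Finset.sum_comm]
      refine Finset.sum_congr rfl fun c _ => Finset.sum_congr rfl fun d _ => ?_
      exact if_congr (by simp only [hC]; tauto) (by rw [hYsym d c]) rfl
    rw [flip]; ring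
  -- step 3 : order i,k
  have s3 : ∑ i, ∑ j, ∑ k, ∑ l, (if (C i j k l ∧ i < j) ∧ k < l then Y i j * Y k l else 0)
      = 2 * ∑ i, ∑ j, ∑ k, ∑ l,
          (if ((C i j k l ∧ i < j) ∧ k < l) ∧ i < k then Y i j * Y k l else 0) := by
    have e : ∀ i j k l : Fin n, (if (C i j k l ∧ i < j) ∧ k < l then Y i j * Y k l else 0)
        = (if ((C i j k l ∧ i < j) ∧ k < l) ∧ i < k then Y i j * Y k l else 0)
          + (if ((C i j k l ∧ i < j) ∧ k < l) ∧ k < i then Y i j * Y k l else 0) :=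
      fun i j k l => ltSplit i k _ (fun hc => (hc.1.1.2.1).symm) _
    rw [Finset.sum_congr rfl fun i _ => Finset.sum_congr rfl fun j _ =>
      Finset.sum_congr rfl fun k _ => Finset.sum_congr rfl fun l _ => e i j k l]
    simp only [Finset.sum_add_distrib]
    have flip : ∑ i, ∑ j, ∑ k, ∑ l,
        (if ((C i j k l ∧ i < j) ∧ k < l) ∧ k < i then Y i j * Y k l else 0)
        = ∑ i, ∑ j, ∑ k, ∑ l,
          (if ((C i j k l ∧ i < j) ∧ k < l) ∧ i < k then Y i j * Y k l else 0) := by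
      rw [swapHalves]
      refine Finset.sum_congr rfl fun a _ => Finset.sum_congr rfl fun b _ =>
        Finset.sum_congr rfl fun c _ => Finset.sum_congr rfl fun d _ => ?_
      exact if_congr (by simp only [hC]; tauto) (mul_comm _ _) rfl
    rw [flip]; ring
  -- step 4 : three interleavings
  have s4 : ∀ i j k l : Fin n,
      (if ((C i j k l ∧ i < j) ∧ k < l) ∧ i < k then Y i j * Y k l else 0)
      = (if i < j ∧ j < k ∧ k < l then Y i j * Y k l else 0)
        + (if i < k ∧ k < j ∧ j < l then Y i j * Y k l else 0)
        + (if i < k ∧ k < l ∧ l < j then Y i j * Y k l else 0) := by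
    intro i j k l
    by_cases hij : i < j
    · by_cases hkl : k < l
      · by_cases hik : i < k
        · rcases lt_trichotomy j k with hjk | hjk | hjk
          · have h1 := hik.trans hkl
            have h2 := hjk.trans hkl
            simp [hC, hij, hkl, hik, hjk, hij.ne, hkl.ne, hik.ne', hjk.ne', h1.ne', h2.ne',
              asymm hjk, asymm h2]
          · subst hjk
            simp [hC, lt_irrefl, asymm hkl]
          · rcases lt_trichotomy j l with hjl | hjl | hjl
            · have h1 := hik.trans hkl
              simp [hC, hij, hkl, hik, hjk, hjl, hij.ne, hkl.ne, hik.ne', hjk.ne, h1.ne', hjl.ne',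
                asymm hjk, asymm hjl]
            · subst hjl
              simp [hC, lt_irrefl, asymm hjk]
            · have h1 := hik.trans hkl
              simp [hC, hij, hkl, hik, hjk, hjl, hij.ne, hkl.ne, hik.ne', hjk.ne, h1.ne', hjl.ne,
                asymm hjk, asymm hjl]
        · rw [if_neg (fun h => hik h.2), if_neg (fun h : i < j ∧ j < k ∧ k < l => hik (h.1.trans h.2.1)),
            if_neg (fun h : i < k ∧ k < j ∧ j < l => hik h.1),
            if_neg (fun h : i < k ∧ k < l ∧ l < j => hik h.1)]
          ring
      · rw [if_neg (fun h => hkl h.1.2), if_neg (fun h : i < j ∧ j < k ∧ k < l => hkl h.2.2),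
          if_neg (fun h : i < k ∧ k < j ∧ j < l => hkl (h.2.1.trans h.2.2)),
          if_neg (fun h : i < k ∧ k < l ∧ l < j => hkl h.2.1)]
        ring
    · rw [if_neg (fun h => hij h.1.1.2), if_neg (fun h : i < j ∧ j < k ∧ k < l => hij h.1),
        if_neg (fun h : i < k ∧ k < j ∧ j < l => hij (h.1.trans h.2.1)),
        if_neg (fun h : i < k ∧ k < l ∧ l < j => hij (h.1.trans (h.2.1.trans h.2.2)))]
      ring
  -- step 5 : sorted forms
  have p2 : ∑ i, ∑ j, ∑ k, ∑ l, (if i < k ∧ k < j ∧ j < l then Y i j * Y k l else 0)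
      = ∑ a, ∑ b, ∑ c, ∑ d, (if a < b ∧ b < c ∧ c < d then Y a c * Y b d else 0) :=
    Finset.sum_congr rfl fun i _ => Finset.sum_comm
  have p3 : ∑ i, ∑ j, ∑ k, ∑ l, (if i < k ∧ k < l ∧ l < j then Y i j * Y k l else 0)
      = ∑ a, ∑ b, ∑ c, ∑ d, (if a < b ∧ b < c ∧ c < d then Y a d * Y b c else 0) :=
    Finset.sum_congr rfl fun i _ => rot3 (fun j k l => if i < k ∧ k < l ∧ l < j then Y i j * Y k l else 0)
  calc ∑ i, ∑ j, ∑ k, ∑ l, (if C i j k l then Y i j * Y k l else 0)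
      = 8 * ∑ i, ∑ j, ∑ k, ∑ l,
          (if ((C i j k l ∧ i < j) ∧ k < l) ∧ i < k then Y i j * Y k l else 0) := by
        rw [s1, s2, s3]; ring
    _ = 8 * ∑ i, ∑ j ∈ univ.filter (fun j => i < j), ∑ k ∈ univ.filter (fun k => j < k),
          ∑ l ∈ univ.filter (fun l => k < l),
          (Y i j * Y k l + Y i k * Y j l + Y i l * Y j k) := by
        congr 1
        rw [Finset.sum_congr rfl fun i _ => Finset.sum_congr rfl fun j _ =>
          Finset.sum_congr rfl fun k _ => Finset.sum_congr rfl fun l _ => s4 i j k l]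
        simp only [Finset.sum_add_distrib]
        rw [p2, p3]
        rw [toSorted4 (fun a b c d => Y a b * Y c d)]
        rw [toSorted4 (fun a b c d => Y a c * Y b d)]
        rw [toSorted4 (fun a b c d => Y a d * Y b c)]
        try simp [Finset.sum_add_distrib]

end partQ
section var
variable {n : ℕ}

lemma part1core (hn : (n:ℝ) ≠ 0) (D : Fin n → ℝ) :
    (n:ℝ)^2 * ((1/(n:ℝ)) * ∑ i, (D i - (1/(n:ℝ)) * ∑ j, D j)^2)
      = n * ∑ i, (D i)^2 - (∑ i, D i)^2 := by
  have expand : ∑ i, (D i - (1/(n:ℝ)) * ∑ j, D j)^2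
      = ∑ i, (D i)^2 - (2*((1/(n:ℝ)) * ∑ j, D j)) * ∑ j, D j
          + (n:ℝ) * ((1/(n:ℝ)) * ∑ j, D j)^2 := by
    have h : ∀ i : Fin n, (D i - (1/(n:ℝ)) * ∑ j, D j)^2
        = (D i)^2 - (2*((1/(n:ℝ)) * ∑ j, D j)) * D i + ((1/(n:ℝ)) * ∑ j, D j)^2 := by
      intro i; ring
    rw [Finset.sum_congr rfl fun i _ => h i, Finset.sum_add_distrib, Finset.sum_sub_distrib,
      ← Finset.mul_sum, Finset.sum_const, card_univ, Fintype.card_fin, nsmul_eq_mul]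
  rw [expand]; field_simp; ring

lemma part2core (D : Fin n → ℝ) :
    (n:ℝ) * (∑ i, (D i)^2) - (∑ i, D i)^2 = (1/2) * ∑ i, ∑ j, (D i - D j)^2 := by
  have h : ∀ i j : Fin n, (D i - D j)^2 = (D i)^2 - 2*(D i * D j) + (D j)^2 := by
    intro i j; ring
  rw [Finset.sum_congr rfl fun i _ => Finset.sum_congr rfl fun j _ => h i j]
  simp only [Finset.sum_add_distrib, Finset.sum_sub_distrib]
  have e1 : ∑ _i : Fin n, ∑ _j : Fin n, (D _i)^2 = (n:ℝ) * ∑ i, (D i)^2 := by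
    simp [Finset.sum_const, card_univ, mul_comm, Finset.mul_sum]
  have e2 : ∑ i : Fin n, ∑ j : Fin n, 2*(D i * D j) = 2 * ((∑ i, D i) * (∑ i, D i)) := by
    rw [Finset.sum_mul_sum]
    simp [Finset.mul_sum]
  have e3 : ∑ _i : Fin n, ∑ j : Fin n, (D j)^2 = (n:ℝ) * ∑ i, (D i)^2 := by
    simp [Finset.sum_const, card_univ, mul_comm]
  rw [e1, e2, e3]; ring

end var

/-- Deterministic identity for the degree variance. -/
theorem degree_variance_identity
    (n : ℕ) (Y : Fin n → Fin n → ℝ)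
    (hYsym : ∀ i j, Y i j = Y j i) (hYdiag : ∀ i, Y i i = 0)
    (h01 : ∀ i j, Y i j = 0 ∨ Y i j = 1) :
    ((n : ℝ) ^ 2 * ((1 / (n : ℝ)) * ∑ i,
        ((∑ j ∈ univ.filter (fun j => j ≠ i), Y i j)
          - (1 / (n : ℝ)) * ∑ i', ∑ j ∈ univ.filter (fun j => j ≠ i'), Y i' j) ^ 2)
      = 2 * ((n : ℝ) - 2) * (∑ i, ∑ j ∈ univ.filter (fun j => i < j), Y i j)
        + 2 * ((n : ℝ) - 4) *
          (∑ i, ∑ j ∈ univ.filter (fun j => i < j), ∑ k ∈ univ.filter (fun k => j < k),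
            (Y i j * Y i k + Y i j * Y j k + Y i k * Y j k))
        - 8 * (∑ i, ∑ j ∈ univ.filter (fun j => i < j), ∑ k ∈ univ.filter (fun k => j < k),
            ∑ l ∈ univ.filter (fun l => k < l),
            (Y i j * Y k l + Y i k * Y j l + Y i l * Y j k)))
    ∧ (n : ℝ) ^ 2 * ((1 / (n : ℝ)) * ∑ i,
        ((∑ j ∈ univ.filter (fun j => j ≠ i), Y i j)
          - (1 / (n : ℝ)) * ∑ i', ∑ j ∈ univ.filter (fun j => j ≠ i'), Y i' j) ^ 2)
      = (1 / 2) * ∑ i, ∑ j ∈ univ.filter (fun j => j ≠ i),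
          ((∑ k ∈ univ.filter (fun k => k ≠ i), Y i k)
            - ∑ k ∈ univ.filter (fun k => k ≠ j), Y j k) ^ 2 := by
  by_cases hn0 : n = 0
  · subst hn0; simp
  · have hn : (n : ℝ) ≠ 0 := Nat.cast_ne_zero.mpr hn0
    have hfil : ∀ i, (∑ j ∈ univ.filter (fun j => j ≠ i), Y i j) = ∑ j, Y i j := by
      intro i
      rw [Finset.sum_filter]
      refine Finset.sum_congr rfl fun j _ => ?_
      by_cases h : j = i
      · subst h; simp [hYdiag]
      · simp [h]
    simp only [hfil]
    have hP : ∑ i, (∑ j, Y i j) ^ 2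
        = 2 * (∑ i, ∑ j ∈ univ.filter (fun j => i < j), Y i j)
          + 2 * (∑ i, ∑ j ∈ univ.filter (fun j => i < j), ∑ k ∈ univ.filter (fun k => j < k),
              (Y i j * Y i k + Y i j * Y j k + Y i k * Y j k)) := by
      have h1 : ∑ i, (∑ j, Y i j) ^ 2 = ∑ i, ∑ j, ∑ k, Y i j * Y i k :=
        Finset.sum_congr rfl fun i _ => by rw [sq, Finset.sum_mul_sum]
      rw [h1, lemFull3 hYdiag h01, lemWedge hYsym, lemPair hYsym hYdiag]
    have hS2 : (∑ i, ∑ j, Y i j) ^ 2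
        = 4 * (∑ i, ∑ j ∈ univ.filter (fun j => i < j), Y i j)
          + 8 * (∑ i, ∑ j ∈ univ.filter (fun j => i < j), ∑ k ∈ univ.filter (fun k => j < k),
              (Y i j * Y i k + Y i j * Y j k + Y i k * Y j k))
          + 8 * (∑ i, ∑ j ∈ univ.filter (fun j => i < j), ∑ k ∈ univ.filter (fun k => j < k),
              ∑ l ∈ univ.filter (fun l => k < l),
              (Y i j * Y k l + Y i k * Y j l + Y i l * Y j k)) := by
      have h2 : (∑ i, ∑ j, Y i j) ^ 2 = ∑ i, ∑ j, ∑ k, ∑ l, Y i j * Y k l := by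
        rw [sq, Finset.sum_mul_sum]
        refine Finset.sum_congr rfl fun i _ => ?_
        calc ∑ i', (∑ j, Y i j) * (∑ j, Y i' j)
            = ∑ i', ∑ j, ∑ l, Y i j * Y i' l :=
              Finset.sum_congr rfl fun i' _ => Finset.sum_mul_sum _ _ _ _
          _ = ∑ j, ∑ i', ∑ l, Y i j * Y i' l := Finset.sum_comm
      rw [h2, lemFull4 hYsym hYdiag h01, lemQ hYsym, lemWedge hYsym, lemPair hYsym hYdiag]
      ring
    constructor
    · rw [part1core hn (fun i => ∑ j, Y i j), hP, hS2]
      ring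
    · rw [part1core hn (fun i => ∑ j, Y i j), part2core (fun i => ∑ j, Y i j)]
      congr 1
      refine Finset.sum_congr rfl fun i _ => ?_
      rw [Finset.sum_filter]
      refine Finset.sum_congr rfl fun j _ => ?_
      by_cases h : j = i
      · subst h; simp
      · simp [h]
end ltsplit
end

section
/- Under the Erdős–Rényi model ER(p) (all p_{ij} = p, q = 1−p), the degree variance V = (1/n) Σ_i (D_i − D̄)² satisfies E[V] = (n−1)(n−2)pq/n and Var[V] = 2(n−1)(n−2)² p q (1 + (n−6)pq)/n³. -/
/-!
Centre the edge indicators, `X_e = Y_e - p`. The deviations `D_i - D̄` are the entries of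
`C B X`, where `B` is the vertex-edge incidence matrix of the complete graph and `C = I - J / n`
the centring matrix, so `V = Xᵀ A X` with `A = Bᵀ C B / n`. For independent centred `X_e` with
variance `s = pq` and fourth moment `m = pq (1 - 3pq)`, the quadratic form has mean `s tr A` and
variance `(m - 3 s²) ∑ A_ee² + 2 s² tr A²`. Since `B Bᵀ = (n - 2) I + J` and `C J = 0`, we get
`C B Bᵀ = (n - 2) C`, whence `tr A = (n - 1)(n - 2) / n`, `tr A² = (n - 1)(n - 2)² / n²`, and
each diagonal entry is `A_ee = 2 (n - 2) / n²`.
-/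

open MeasureTheory ProbabilityTheory Finset Matrix
open scoped ENNReal

section QuadraticForm

variable {Ω ι : Type*} [MeasurableSpace Ω] {μ : Measure Ω} {X : ι → Ω → ℝ}

lemma memLp_two_mul_of_memLp_four (hX : ∀ e, MemLp (X e) 4 μ) (e f : ι) :
    MemLp (fun ω => X e ω * X f ω) 2 μ := by
  have : ENNReal.HolderTriple 4 4 2 := ⟨by
    rw [← two_mul, show (4 : ENNReal) = 2 * 2 by norm_num, ENNReal.mul_inv (by simp) (by simp),
      ← mul_assoc, ENNReal.mul_inv_cancel (by simp) (by simp), one_mul]⟩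
  exact (hX f).mul' (hX e)

lemma integrable_mul_mul_mul_of_memLp_four (hX : ∀ e, MemLp (X e) 4 μ) (e f g h : ι) :
    Integrable (fun ω => X e ω * X f ω * X g ω * X h ω) μ := by
  simpa only [memLp_one_iff_integrable, mul_assoc] using
    (memLp_two_mul_of_memLp_four hX g h).mul' (r := 1) (memLp_two_mul_of_memLp_four hX e f)

lemma integral_pow_mul_pow_of_ne (hind : iIndepFun X μ)
    (hX : ∀ e, AEStronglyMeasurable (X e) μ)
    {e f : ι} (hef : e ≠ f) (k l : ℕ) :
    ∫ ω, X e ω ^ k * X f ω ^ l ∂μ = (∫ ω, X e ω ^ k ∂μ) * ∫ ω, X f ω ^ l ∂μ :=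
  ((hind.indepFun hef).comp (measurable_id.pow_const k)
    (measurable_id.pow_const l)).integral_mul_eq_mul_integral ((hX e).pow k) ((hX f).pow l)

lemma integral_mul_mul_mul_eq_zero (hind : iIndepFun X μ)
    (hX : ∀ e, AEStronglyMeasurable (X e) μ)
    {x a b c : ι} (h1 : ∫ ω, X x ω ∂μ = 0) (ha : x ≠ a) (hb : x ≠ b) (hc : x ≠ c) :
    ∫ ω, X x ω * (X a ω * X b ω * X c ω) ∂μ = 0 := by
  classical
  have hST : Disjoint ({x} : Finset ι) {a, b, c} := by simp [ha, hb, hc]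
  have hxabc := (hind.indepFun_finset₀ _ _ hST fun i => (hX i).aemeasurable).comp
    (φ := fun v : ({x} : Finset ι) → ℝ => v ⟨x, by simp⟩)
    (ψ := fun v : ({a, b, c} : Finset ι) → ℝ => v ⟨a, by simp⟩ * v ⟨b, by simp⟩ * v ⟨c, by simp⟩)
    (_mγ := inferInstance) (_mγ' := inferInstance) (measurable_pi_apply _) (by fun_prop)
  exact (hxabc.integral_mul_eq_mul_integral (hX x) (((hX a).mul (hX b)).mul (hX c))).trans
    (by simp [h1])

/-- The three pairings count the fully diagonal case `e = f = g = h` three times; the last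
summand corrects its value to `m`. -/
def fourthMixedMoment [DecidableEq ι] (s m : ℝ) (e f g h : ι) : ℝ :=
  s ^ 2 * ((if e = f ∧ g = h then 1 else 0) + (if e = g ∧ f = h then 1 else 0)
    + (if e = h ∧ f = g then 1 else 0)) + if e = f ∧ e = g ∧ e = h then m - 3 * s ^ 2 else 0

lemma integral_mul_mul_mul_eq_fourthMixedMoment [DecidableEq ι] (hind : iIndepFun X μ)
    (hX : ∀ e, AEStronglyMeasurable (X e) μ) {s m : ℝ} (h1 : ∀ e, ∫ ω, X e ω ∂μ = 0)
    (h2 : ∀ e, ∫ ω, X e ω ^ 2 ∂μ = s) (h4 : ∀ e, ∫ ω, X e ω ^ 4 ∂μ = m) (e f g h : ι) :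
    ∫ ω, X e ω * X f ω * X g ω * X h ω ∂μ = fourthMixedMoment s m e f g h := by
  have pair : ∀ {a b}, a ≠ b → ∫ ω, X a ω ^ 2 * X b ω ^ 2 ∂μ = s ^ 2 := fun hab => by
    rw [integral_pow_mul_pow_of_ne hind hX hab, h2, h2, sq]
  have lonely : ∀ {x a b c}, x ≠ a → x ≠ b → x ≠ c →
      ∫ ω, X x ω * (X a ω * X b ω * X c ω) ∂μ = 0 :=
    integral_mul_mul_mul_eq_zero hind hX (h1 _)
  rcases eq_or_ne e f with rfl | hef
  · rcases eq_or_ne g h with rfl | hgh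
    · rcases eq_or_ne e g with rfl | heg
      · convert h4 e using 2
        · ext ω; ring
        · simp only [fourthMixedMoment, and_self, ↓reduceIte]; ring
      · convert pair heg using 2
        · ext ω; ring
        · simp [fourthMixedMoment, heg]
    · rcases eq_or_ne g e with rfl | hge
      · convert lonely hgh.symm hgh.symm hgh.symm using 2
        · ext ω; ring
        · simp [fourthMixedMoment, hgh]
      · convert lonely hge hge hgh using 2
        · ext ω; ring
        · simp [fourthMixedMoment, hgh, hge.symm]
  · rcases eq_or_ne e g with rfl | heg
    · rcases eq_or_ne f h with rfl | hfh
      · convert pair hef using 2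
        · ext ω; ring
        · simp [fourthMixedMoment, hef, hef.symm]
      · convert lonely hef.symm hef.symm hfh using 2
        · ext ω; ring
        · simp [fourthMixedMoment, hef, hef.symm, hfh]
    · rcases eq_or_ne e h with rfl | heh
      · rcases eq_or_ne f g with rfl | hfg
        · convert pair hef using 2
          · ext ω; ring
          · simp [fourthMixedMoment, hef, hef.symm]
        · convert lonely hef.symm hfg hef.symm using 2
          · ext ω; ring
          · simp [fourthMixedMoment, hef, heg, hfg]
      · convert lonely hef heg heh using 2
        · ext ω; ring
        · simp [fourthMixedMoment, hef, heg, heh]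

lemma Matrix.IsSymm.sum_mul_fourthMixedMoment [Fintype ι] [DecidableEq ι] {A : Matrix ι ι ℝ}
    (hA : A.IsSymm) (s m : ℝ) :
    ∑ e, ∑ f, ∑ g, ∑ h, A e f * A g h * fourthMixedMoment s m e f g h
      = (m - 3 * s ^ 2) * ∑ e, A e e ^ 2 + s ^ 2 * (A.trace ^ 2 + 2 * (A * A).trace) := by
  have htr : (A * A).trace = ∑ e, ∑ f, A e f * A e f := by
    simp only [Matrix.trace, Matrix.diag, Matrix.mul_apply, ← hA.apply]
  rw [htr, sq A.trace, Matrix.trace, Finset.sum_mul_sum]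
  simp only [fourthMixedMoment, mul_add, mul_ite, mul_one, mul_zero, Finset.sum_add_distrib,
    ite_and, Finset.sum_ite_eq, Finset.mem_univ, if_true, Finset.sum_ite_irrel,
    Finset.sum_const_zero, ← hA.apply, sq, Matrix.diag, ← Finset.sum_mul]
  ring

variable [Fintype ι]

lemma integral_quadForm_sq (hind : iIndepFun X μ) (hX : ∀ e, MemLp (X e) 4 μ) {s m : ℝ}
    (h1 : ∀ e, ∫ ω, X e ω ∂μ = 0) (h2 : ∀ e, ∫ ω, X e ω ^ 2 ∂μ = s)
    (h4 : ∀ e, ∫ ω, X e ω ^ 4 ∂μ = m) {A : Matrix ι ι ℝ} (hA : A.IsSymm) :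
    ∫ ω, (∑ e, ∑ f, A e f * (X e ω * X f ω)) ^ 2 ∂μ
      = (m - 3 * s ^ 2) * ∑ e, A e e ^ 2 + s ^ 2 * (A.trace ^ 2 + 2 * (A * A).trace) := by
  classical
  have hexpand : ∀ ω, (∑ e, ∑ f, A e f * (X e ω * X f ω)) ^ 2
      = ∑ e, ∑ f, ∑ g, ∑ h, A e f * A g h * (X e ω * X f ω * X g ω * X h ω) := by
    intro ω
    simp only [sq, Finset.sum_mul_sum]
    refine Finset.sum_congr rfl fun e _ => Finset.sum_comm.trans ?_
    exact Finset.sum_congr rfl fun f _ => Finset.sum_congr rfl fun g _ =>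
      Finset.sum_congr rfl fun h _ => by ring
  have hint : ∀ e f g h, Integrable
      (fun ω => A e f * A g h * (X e ω * X f ω * X g ω * X h ω)) μ := fun e f g h =>
    (integrable_mul_mul_mul_of_memLp_four hX e f g h).const_mul _
  simp_rw [hexpand, integral_finsetSum _ fun _ _ => integrable_finsetSum _ fun _ _ =>
      integrable_finsetSum _ fun _ _ => integrable_finsetSum _ fun _ _ => hint _ _ _ _,
    integral_finsetSum _ fun _ _ => integrable_finsetSum _ fun _ _ =>
      integrable_finsetSum _ fun _ _ => hint _ _ _ _,
    integral_finsetSum _ fun _ _ => integrable_finsetSum _ fun _ _ => hint _ _ _ _,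
    integral_finsetSum _ fun _ _ => hint _ _ _ _, integral_const_mul,
    integral_mul_mul_mul_eq_fourthMixedMoment hind (fun e => (hX e).1) h1 h2 h4]
  exact hA.sum_mul_fourthMixedMoment s m

variable [IsProbabilityMeasure μ]

lemma integral_quadForm (hind : iIndepFun X μ) (hX : ∀ e, MemLp (X e) 4 μ) {s : ℝ}
    (h1 : ∀ e, ∫ ω, X e ω ∂μ = 0) (h2 : ∀ e, ∫ ω, X e ω ^ 2 ∂μ = s) (A : Matrix ι ι ℝ) :
    ∫ ω, ∑ e, ∑ f, A e f * (X e ω * X f ω) ∂μ = s * A.trace := by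
  classical
  have hint : ∀ e f, Integrable (fun ω => A e f * (X e ω * X f ω)) μ := fun e f =>
    ((memLp_two_mul_of_memLp_four hX e f).integrable one_le_two).const_mul _
  have hpair : ∀ e f, ∫ ω, X e ω * X f ω ∂μ = if e = f then s else 0 := by
    intro e f
    rcases eq_or_ne e f with rfl | hef
    · simpa [sq] using h2 e
    · simpa [hef, h1] using integral_pow_mul_pow_of_ne hind (fun e => (hX e).1) hef 1 1
  simp_rw [integral_finsetSum _ fun e _ => integrable_finsetSum _ fun f _ => hint e f,
    integral_finsetSum _ fun f _ => hint _ f, integral_const_mul, hpair]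
  simp [Matrix.trace, Finset.mul_sum, mul_comm]

theorem variance_quadForm (hind : iIndepFun X μ) (hX : ∀ e, MemLp (X e) 4 μ) {s m : ℝ}
    (h1 : ∀ e, ∫ ω, X e ω ∂μ = 0) (h2 : ∀ e, ∫ ω, X e ω ^ 2 ∂μ = s)
    (h4 : ∀ e, ∫ ω, X e ω ^ 4 ∂μ = m) {A : Matrix ι ι ℝ} (hA : A.IsSymm) :
    variance (fun ω => ∑ e, ∑ f, A e f * (X e ω * X f ω)) μ
      = (m - 3 * s ^ 2) * ∑ e, A e e ^ 2 + 2 * s ^ 2 * (A * A).trace := by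
  have hQ : MemLp (fun ω => ∑ e, ∑ f, A e f * (X e ω * X f ω)) 2 μ :=
    memLp_finsetSum _ fun e _ => memLp_finsetSum _ fun f _ =>
      (memLp_two_mul_of_memLp_four hX e f).const_mul _
  rw [variance_eq_sub hQ]
  simp only [Pi.pow_apply]
  rw [integral_quadForm_sq hind hX h1 h2 h4 hA, integral_quadForm hind hX h1 h2]
  ring

end QuadraticForm

section Bernoulli

variable {Ω : Type*} [MeasurableSpace Ω] {μ : Measure Ω} [IsProbabilityMeasure μ] {Z : Ω → ℝ}

lemma memLp_of_zero_or_one (hZ : AEStronglyMeasurable Z μ) (h01 : ∀ ω, Z ω = 0 ∨ Z ω = 1)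
    (q : ℝ≥0∞) : MemLp Z q μ :=
  .of_bound hZ 1 (ae_of_all _ fun ω => by rcases h01 ω with h | h <;> simp [h])

lemma integral_sub_pow_of_zero_or_one (hZ : AEStronglyMeasurable Z μ)
    (h01 : ∀ ω, Z ω = 0 ∨ Z ω = 1) {p : ℝ} (hp : ∫ ω, Z ω ∂μ = p) (k : ℕ) :
    ∫ ω, (Z ω - p) ^ k ∂μ = p * (1 - p) ^ k + (1 - p) * (-p) ^ k := by
  have hpt : ∀ ω, (Z ω - p) ^ k = ((1 - p) ^ k - (-p) ^ k) * Z ω + (-p) ^ k := fun ω => by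
    rcases h01 ω with h | h <;> rw [h] <;> ring
  simp_rw [hpt]
  rw [integral_add (((memLp_of_zero_or_one hZ h01 1).integrable le_rfl).const_mul _)
    (integrable_const _), integral_const_mul, hp, integral_const, probReal_univ, smul_eq_mul,
    one_mul]
  ring

end Bernoulli

lemma Matrix.mulVec_dotProduct_mulVec {R m k : Type*} [CommSemiring R] [Fintype m] [Fintype k]
    (M : Matrix m k R) (x : k → R) :
    (M *ᵥ x) ⬝ᵥ (M *ᵥ x) = x ⬝ᵥ ((Mᵀ * M) *ᵥ x) := by
  rw [← Matrix.mulVec_mulVec, Matrix.mulVec_transpose, dotProduct_comm x,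
    ← Matrix.dotProduct_mulVec]

section CompleteGraph

abbrev Edge (n : ℕ) := {e : Fin n × Fin n // e.1 < e.2}

def incidence (n : ℕ) : Matrix (Fin n) (Edge n) ℝ :=
  Matrix.of fun i e => if i = e.1.1 ∨ i = e.1.2 then 1 else 0

noncomputable def centering (n : ℕ) : Matrix (Fin n) (Fin n) ℝ :=
  1 - (n : ℝ)⁻¹ • Matrix.of fun _ _ => 1

noncomputable def degreeVarianceMatrix (n : ℕ) : Matrix (Edge n) (Edge n) ℝ :=
  (n : ℝ)⁻¹ • ((incidence n)ᵀ * centering n * incidence n)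

variable {n : ℕ}

lemma incidence_apply (i : Fin n) (e : Edge n) :
    incidence n i e = (if i = e.1.1 then 1 else 0) + (if i = e.1.2 then 1 else 0) := by
  have := e.2.ne
  by_cases h : i = e.1.1 <;> simp [incidence, h, this]

lemma incidence_mul_self (i : Fin n) (e : Edge n) :
    incidence n i e * incidence n i e = incidence n i e := by
  by_cases h : i = e.1.1 ∨ i = e.1.2 <;> simp [incidence, h]

lemma sum_edge {M : Type*} [AddCommMonoid M] (f : Fin n → Fin n → M) :
    ∑ e : Edge n, f e.1.1 e.1.2 = ∑ a, ∑ b ∈ Ioi a, f a b := by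
  rw [← Finset.sum_subtype (univ.filter fun e : Fin n × Fin n => e.1 < e.2) (by simp)
    (fun e => f e.1 e.2), Finset.sum_filter, Fintype.sum_prod_type]
  simp only [← filter_lt_eq_Ioi, Finset.sum_filter]

lemma sum_incidence_mul (h : Fin n → Fin n → ℝ) (hsym : ∀ a b, h a b = h b a) (i : Fin n) :
    ∑ e, incidence n i e * h e.1.1 e.1.2 = ∑ j ∈ univ.filter (· ≠ i), h i j := by
  simp only [incidence_apply, add_mul, ite_mul, one_mul, zero_mul, sum_add_distrib]
  rw [sum_edge (fun a b => if i = a then h a b else 0),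
    sum_edge (fun a b => if i = b then h a b else 0)]
  simp only [Finset.sum_ite_irrel, Finset.sum_const_zero, Finset.sum_ite_eq, Finset.mem_univ,
    if_true, ← filter_lt_eq_Ioi, Finset.sum_filter, ← Finset.sum_add_distrib]
  refine Finset.sum_congr rfl fun j _ => ?_
  rcases lt_trichotomy i j with hij | rfl | hji
  · simp [hij, hij.ne', hij.not_gt]
  · simp
  · simp [hji, hji.ne, hji.not_gt, hsym j i]

lemma Fin.card_filter_ne (i : Fin n) : (#(univ.filter (· ≠ i)) : ℝ) = n - 1 := by
  rw [Finset.filter_ne', Finset.card_erase_of_mem (Finset.mem_univ i), Finset.card_univ,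
    Fintype.card_fin, Nat.cast_pred i.pos]

lemma sum_incidence_row (i : Fin n) : ∑ e, incidence n i e = n - 1 := by
  simpa [Fin.card_filter_ne] using sum_incidence_mul (fun _ _ => (1 : ℝ)) (fun _ _ => rfl) i

lemma sum_incidence_col (e : Edge n) : ∑ i, incidence n i e = 2 := by
  simp only [incidence_apply, sum_add_distrib, Finset.sum_ite_eq', Finset.mem_univ, if_true]
  norm_num

lemma card_edge : (Fintype.card (Edge n) : ℝ) = n * (n - 1) / 2 := by
  have h := Finset.sum_comm (s := univ) (t := univ) (f := fun i e => incidence n i e)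
  simp only [sum_incidence_row, sum_incidence_col, Finset.sum_const, Finset.card_univ,
    Fintype.card_fin, nsmul_eq_mul] at h
  linarith

lemma incidence_mul_transpose :
    incidence n * (incidence n)ᵀ = ((n : ℝ) - 2) • 1 + Matrix.of fun _ _ => 1 := by
  ext i k
  have h := sum_incidence_mul (fun a b => (if k = a then 1 else 0) + (if k = b then 1 else 0))
    (fun a b => add_comm _ _) i
  simp only [← incidence_apply] at h
  rw [Matrix.mul_apply]
  rcases eq_or_ne i k with rfl | hik
  · simp only [Matrix.transpose_apply, h, if_true, Finset.sum_add_distrib, Finset.sum_const,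
      nsmul_one, Fin.card_filter_ne, Finset.sum_ite_eq, Finset.mem_filter, Finset.mem_univ,
      ne_eq, not_true_eq_false, and_false, if_false, add_zero, Matrix.add_apply,
      Matrix.smul_apply, Matrix.one_apply_eq, smul_eq_mul, mul_one, Matrix.of_apply]
    ring
  · simp [h, hik, hik.symm]

lemma centering_apply (i j : Fin n) :
    centering n i j = (if i = j then 1 else 0) - (n : ℝ)⁻¹ := by
  simp [centering, Matrix.one_apply]

lemma centering_mulVec (v : Fin n → ℝ) (i : Fin n) :
    (centering n *ᵥ v) i = v i - (n : ℝ)⁻¹ * ∑ j, v j := by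
  simp [Matrix.mulVec, dotProduct, centering_apply, sub_mul, Finset.sum_sub_distrib,
    Finset.mul_sum]

lemma centering_transpose : (centering n)ᵀ = centering n := by
  ext i j
  simp [centering_apply, eq_comm]

lemma centering_mul_self (hn : n ≠ 0) : centering n * centering n = centering n := by
  ext i j
  simp only [Matrix.mul_apply, centering_apply, mul_sub, mul_ite, mul_one, mul_zero, sub_mul,
    ite_mul, one_mul, zero_mul, Finset.sum_sub_distrib, Finset.sum_ite_eq', Finset.mem_univ,
    if_true, Finset.sum_ite_eq, Finset.sum_const, Finset.card_univ, Fintype.card_fin,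
    nsmul_eq_mul]
  field_simp
  ring

lemma trace_centering (hn : n ≠ 0) : (centering n).trace = n - 1 := by
  simp [Matrix.trace, centering_apply, hn]

lemma centering_mul_ones (hn : n ≠ 0) : centering n * (Matrix.of fun _ _ => 1) = 0 := by
  ext i j
  simp [Matrix.mul_apply, centering_apply, hn]

lemma centering_mul_incidence_mul_transpose (hn : n ≠ 0) :
    centering n * (incidence n * (incidence n)ᵀ) = ((n : ℝ) - 2) • centering n := by
  rw [incidence_mul_transpose, Matrix.mul_add, Matrix.mul_smul, Matrix.mul_one,
    centering_mul_ones hn, add_zero]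

lemma degreeVarianceMatrix_isSymm : (degreeVarianceMatrix n).IsSymm := by
  simp [Matrix.IsSymm, degreeVarianceMatrix, Matrix.transpose_mul, centering_transpose,
    Matrix.mul_assoc]

lemma degreeVarianceMatrix_apply_self (e : Edge n) :
    degreeVarianceMatrix n e e = 2 * (n - 2) / n ^ 2 := by
  simp only [degreeVarianceMatrix, Matrix.smul_apply, Matrix.mul_apply, Matrix.transpose_apply,
    centering_apply, mul_sub, mul_ite, mul_one, mul_zero, Finset.sum_sub_distrib,
    Finset.sum_ite_eq', Finset.mem_univ, if_true, sub_mul, smul_eq_mul, Finset.mul_sum]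
  simp only [incidence_mul_self, ← Finset.mul_sum, ← Finset.sum_mul, sum_incidence_col]
  field_simp

lemma trace_degreeVarianceMatrix (hn : n ≠ 0) :
    (degreeVarianceMatrix n).trace = (n - 1) * (n - 2) / n := by
  rw [degreeVarianceMatrix, Matrix.trace_smul, Matrix.mul_assoc, Matrix.trace_mul_comm,
    Matrix.mul_assoc, centering_mul_incidence_mul_transpose hn, Matrix.trace_smul,
    trace_centering hn]
  simp only [smul_eq_mul]
  field_simp

lemma trace_degreeVarianceMatrix_mul_self (hn : n ≠ 0) :
    (degreeVarianceMatrix n * degreeVarianceMatrix n).trace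
      = (n - 1) * (n - 2) ^ 2 / n ^ 2 := by
  have hassoc : (incidence n)ᵀ * centering n * incidence n
        * ((incidence n)ᵀ * centering n * incidence n)
      = (incidence n)ᵀ
        * (centering n * (incidence n * (incidence n)ᵀ) * centering n * incidence n) := by
    simp only [Matrix.mul_assoc]
  rw [degreeVarianceMatrix, Matrix.smul_mul, Matrix.mul_smul, Matrix.trace_smul,
    Matrix.trace_smul, hassoc, Matrix.trace_mul_comm, Matrix.mul_assoc, Matrix.mul_assoc,
    centering_mul_incidence_mul_transpose hn, Matrix.smul_mul, Matrix.mul_smul,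
    centering_mul_self hn, Matrix.trace_smul, Matrix.trace_smul, trace_centering hn]
  simp only [smul_eq_mul]
  field_simp

lemma degree_variance_eq_quadForm (hn : n ≠ 0) (y : Fin n → Fin n → ℝ) (hy : ∀ a b, y a b = y b a)
    (p : ℝ) :
    (1 / (n : ℝ)) * ∑ i, ((∑ j ∈ univ.filter (fun j => j ≠ i), y i j)
        - (1 / (n : ℝ)) * ∑ i', ∑ j ∈ univ.filter (fun j => j ≠ i'), y i' j) ^ 2
      = ∑ e, ∑ f, degreeVarianceMatrix n e f * ((y e.1.1 e.1.2 - p) * (y f.1.1 f.1.2 - p)) := by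
  set x : Edge n → ℝ := fun e => y e.1.1 e.1.2 - p
  have hdeg : ∀ i, ∑ j ∈ univ.filter (fun j => j ≠ i), y i j
      = (incidence n *ᵥ x) i + (n - 1) * p := by
    intro i
    rw [Matrix.mulVec, dotProduct, sum_incidence_mul (fun a b => y a b - p) (by simp [hy]) i,
      Finset.sum_sub_distrib, Finset.sum_const, nsmul_eq_mul, Fin.card_filter_ne]
    ring
  have hdev : ∀ i, (∑ j ∈ univ.filter (fun j => j ≠ i), y i j)
        - (1 / (n : ℝ)) * ∑ i', ∑ j ∈ univ.filter (fun j => j ≠ i'), y i' j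
      = (centering n *ᵥ (incidence n *ᵥ x)) i := by
    intro i
    simp only [hdeg, centering_mulVec, Finset.sum_add_distrib, Finset.sum_const,
      Finset.card_univ, Fintype.card_fin, nsmul_eq_mul]
    field_simp
    ring
  have hCB : (centering n * incidence n)ᵀ * (centering n * incidence n)
      = (incidence n)ᵀ * centering n * incidence n := by
    rw [Matrix.transpose_mul, centering_transpose, Matrix.mul_assoc,
      ← Matrix.mul_assoc (centering n), centering_mul_self hn, Matrix.mul_assoc]
  simp only [hdev, sq]
  rw [← dotProduct, Matrix.mulVec_mulVec, mulVec_dotProduct_mulVec, hCB]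
  simp only [degreeVarianceMatrix, dotProduct, Matrix.mulVec, Matrix.smul_apply, smul_eq_mul,
    Finset.mul_sum]
  refine Finset.sum_congr rfl fun e _ => Finset.sum_congr rfl fun f _ => ?_
  simp only [x]
  ring

end CompleteGraph

theorem er_degree_variance_moments_general
    {Ω : Type*} [MeasurableSpace Ω] (μ : Measure Ω) [IsProbabilityMeasure μ]
    (n : ℕ) (Y : Fin n → Fin n → Ω → ℝ) (p : ℝ)
    (hYsym : ∀ i j, Y i j = Y j i)
    (hmeas : ∀ i j, Measurable (Y i j))
    (h01 : ∀ i j ω, Y i j ω = 0 ∨ Y i j ω = 1)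
    (hmean : ∀ i j, i ≠ j → ∫ ω, Y i j ω ∂μ = p)
    (hindep : iIndepFun
      (fun e : {e : Fin n × Fin n // e.1 < e.2} => Y e.1.1 e.1.2) μ) :
    (∫ ω, (1 / (n : ℝ)) * ∑ i,
        ((∑ j ∈ univ.filter (fun j => j ≠ i), Y i j ω)
          - (1 / (n : ℝ)) * ∑ i', ∑ j ∈ univ.filter (fun j => j ≠ i'), Y i' j ω) ^ 2 ∂μ
      = ((n : ℝ) - 1) * ((n : ℝ) - 2) * p * (1 - p) / (n : ℝ))
    ∧ variance (fun ω => (1 / (n : ℝ)) * ∑ i,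
        ((∑ j ∈ univ.filter (fun j => j ≠ i), Y i j ω)
          - (1 / (n : ℝ)) * ∑ i', ∑ j ∈ univ.filter (fun j => j ≠ i'), Y i' j ω) ^ 2) μ
      = 2 * ((n : ℝ) - 1) * ((n : ℝ) - 2) ^ 2 * p * (1 - p)
          * (1 + ((n : ℝ) - 6) * p * (1 - p)) / (n : ℝ) ^ 3 := by
  obtain rfl | hn := eq_or_ne n 0
  · simp [← Pi.zero_def]
  set X : Edge n → Ω → ℝ := fun e ω => Y e.1.1 e.1.2 ω - p
  have hind : iIndepFun X μ :=
    hindep.comp (fun _ t => t - p) fun _ => measurable_id.sub_const p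
  have hX : ∀ e, MemLp (X e) 4 μ := fun e =>
    (memLp_of_zero_or_one (hmeas _ _).aestronglyMeasurable (h01 _ _) 4).sub (memLp_const p)
  have hmoment : ∀ (e : Edge n) k, ∫ ω, X e ω ^ k ∂μ = p * (1 - p) ^ k + (1 - p) * (-p) ^ k :=
    fun e => integral_sub_pow_of_zero_or_one (hmeas _ _).aestronglyMeasurable (h01 _ _)
      (hmean _ _ e.2.ne)
  have h1 : ∀ e, ∫ ω, X e ω ∂μ = 0 := fun e => by
    simpa using (hmoment e 1).trans (by ring)
  have hrepr := funext fun ω =>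
    degree_variance_eq_quadForm hn (fun i j => Y i j ω) (fun i j => by rw [hYsym]) p
  rw [hrepr]
  refine ⟨?_, ?_⟩
  · rw [integral_quadForm hind hX h1 (hmoment · 2), trace_degreeVarianceMatrix hn]
    field_simp
    ring
  · rw [variance_quadForm hind hX h1 (hmoment · 2) (hmoment · 4) degreeVarianceMatrix_isSymm,
      trace_degreeVarianceMatrix_mul_self hn]
    simp only [degreeVarianceMatrix_apply_self, Finset.sum_const, Finset.card_univ, card_edge,
      nsmul_eq_mul]
    field_simp
    ring

/-- Moments of the degree variance under the Erdős–Rényi model ER(p). -/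
theorem er_degree_variance_moments
    {Ω : Type*} [MeasurableSpace Ω] (μ : Measure Ω) [IsProbabilityMeasure μ]
    (n : ℕ) (Y : Fin n → Fin n → Ω → ℝ) (p : ℝ)
    (hYsym : ∀ i j, Y i j = Y j i) (hYdiag : ∀ i, Y i i = 0)
    (hp : 0 ≤ p ∧ p ≤ 1)
    (hmeas : ∀ i j, Measurable (Y i j))
    (h01 : ∀ i j ω, Y i j ω = 0 ∨ Y i j ω = 1)
    (hmean : ∀ i j, i ≠ j → ∫ ω, Y i j ω ∂μ = p)
    (hindep : iIndepFun
      (fun e : {e : Fin n × Fin n // e.1 < e.2} => Y e.1.1 e.1.2) μ) :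
    (∫ ω, (1 / (n : ℝ)) * ∑ i,
        ((∑ j ∈ univ.filter (fun j => j ≠ i), Y i j ω)
          - (1 / (n : ℝ)) * ∑ i', ∑ j ∈ univ.filter (fun j => j ≠ i'), Y i' j ω) ^ 2 ∂μ
      = ((n : ℝ) - 1) * ((n : ℝ) - 2) * p * (1 - p) / (n : ℝ))
    ∧ variance (fun ω => (1 / (n : ℝ)) * ∑ i,
        ((∑ j ∈ univ.filter (fun j => j ≠ i), Y i j ω)
          - (1 / (n : ℝ)) * ∑ i', ∑ j ∈ univ.filter (fun j => j ≠ i'), Y i' j ω) ^ 2) μ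
      = 2 * ((n : ℝ) - 1) * ((n : ℝ) - 2) ^ 2 * p * (1 - p)
          * (1 + ((n : ℝ) - 6) * p * (1 - p)) / (n : ℝ) ^ 3 :=
  er_degree_variance_moments_general μ n Y p hYsym hmeas h01 hmean hindep
end

section
/- Let Y_{ij}, 1 ≤ i < j ≤ n, be independent Bernoulli(p_{ij}), Ỹ_{ij} = Y_{ij} − p_{ij}, and W = (1/n) Σ_i (D_i − μ⁰_i)². Then the Hoeffding projections of W satisfy: P_{{ij}}W := E[W | Y_{ij}] − E[W] = (2/n) Ỹ_{ij} (1 − 2p_{ij} + Δ_i + Δ_j), and P_{{ij,ik}}W := E[W | Y_{ij}, Y_{ik}] − E[W | Y_{ij}] − E[W | Y_{ik}] + E[W] = (2/n) Ỹ_{ij} Ỹ_{ik}, where Δ_i = Σ_{j≠i} (p_{ij} − p⁰_{ij}). -/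
open MeasureTheory ProbabilityTheory Finset

/-!
Conditioning on the edge variables of a graph `G` splits each `D_r - μ⁰_r` into
`A_r = ∑_{l ~_G r} Ỹ_{rl}`, which is measurable for the conditioning, plus a remainder that is
independent of it and has mean `Δ_r`. Hence
`E[(D_r - μ⁰_r)² | G] - E[(D_r - μ⁰_r)²] = A_r² - E[A_r²] + 2 Δ_r A_r`.
For a single edge `ij` only the rows `i, j` contribute, and `Ỹ² - E[Ỹ²] = (1 - 2p) Ỹ` since
`Y² = Y`. For the two edges `ij, ik` the rows add up as for the single edges, except for the
cross term `2 Ỹ_{ij} Ỹ_{ik}` in row `i`, whose mean vanishes by independence.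
-/

section SquareOfIndependentSum

variable {Ω : Type*} {m m' m0 : MeasurableSpace Ω} {μ : Measure[m0] Ω} [IsProbabilityMeasure μ]
  {A B : Ω → ℝ}

theorem condExp_add_sq_of_indep (hm : m ≤ m0) (hm' : m' ≤ m0) (hind : Indep m' m μ)
    (hA : StronglyMeasurable[m] A) (hB : StronglyMeasurable[m'] B)
    (hA2 : MemLp A 2 μ) (hB2 : MemLp B 2 μ) :
    μ[fun ω => (A ω + B ω) ^ 2 | m] =ᵐ[μ]
      fun ω => A ω ^ 2 + 2 * (∫ ω, B ω ∂μ) * A ω + ∫ ω, B ω ^ 2 ∂μ := by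
  have hAB : Integrable (A * B) μ := hA2.integrable_mul hB2
  have hB1 : Integrable B μ := hB2.integrable one_le_two
  have hexpand : (fun ω => (A ω + B ω) ^ 2)
      = (fun ω => A ω ^ 2) + (2 : ℝ) • (A * B) + fun ω => B ω ^ 2 := by
    ext ω; simp only [Pi.add_apply, Pi.smul_apply, Pi.mul_apply, smul_eq_mul]; ring
  have hA_sq : μ[fun ω => A ω ^ 2 | m] = fun ω => A ω ^ 2 :=
    condExp_of_stronglyMeasurable hm (hA.pow 2) hA2.integrable_sq
  have hB_sq : μ[fun ω => B ω ^ 2 | m] =ᵐ[μ] fun _ => ∫ ω, B ω ^ 2 ∂μ :=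
    condExp_indep_eq hm' hm (hB.pow 2) hind
  have hmul : μ[A * B | m] =ᵐ[μ] A * fun _ => ∫ ω, B ω ∂μ :=
    (condExp_mul_of_stronglyMeasurable_left hA hAB hB1).trans
      ((Filter.EventuallyEq.refl _ A).mul (condExp_indep_eq hm' hm hB hind))
  rw [hexpand]
  filter_upwards [condExp_add (hA2.integrable_sq.add (hAB.smul (2 : ℝ))) hB2.integrable_sq m,
    condExp_add hA2.integrable_sq (hAB.smul (2 : ℝ)) m, condExp_smul (2 : ℝ) (A * B) m,
    hmul, hB_sq] with ω h1 h2 h3 h4 h5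
  simp only [Pi.add_apply, Pi.smul_apply, Pi.mul_apply, smul_eq_mul] at h1 h2 h3 h4 ⊢
  rw [h1, h2, h3, h4, h5, hA_sq]
  ring

theorem condExp_add_sq_sub_integral_of_indep (hm : m ≤ m0) (hm' : m' ≤ m0)
    (hind : Indep m' m μ) (hA : StronglyMeasurable[m] A) (hB : StronglyMeasurable[m'] B)
    (hA2 : MemLp A 2 μ) (hB2 : MemLp B 2 μ) (hA0 : ∫ ω, A ω ∂μ = 0) :
    (fun ω => μ[fun ω => (A ω + B ω) ^ 2 | m] ω - ∫ ω, (A ω + B ω) ^ 2 ∂μ) =ᵐ[μ]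
      fun ω => A ω ^ 2 - ∫ ω, A ω ^ 2 ∂μ + 2 * (∫ ω, B ω ∂μ) * A ω := by
  have hcond := condExp_add_sq_of_indep hm hm' hind hA hB hA2 hB2
  have hint : ∫ ω, (A ω + B ω) ^ 2 ∂μ = ∫ ω, A ω ^ 2 ∂μ + ∫ ω, B ω ^ 2 ∂μ := by
    have hlin : Integrable (fun ω => 2 * (∫ ω, B ω ∂μ) * A ω) μ :=
      (hA2.integrable one_le_two).const_mul _
    have hquad : Integrable (fun ω => A ω ^ 2 + 2 * (∫ ω, B ω ∂μ) * A ω) μ :=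
      hA2.integrable_sq.add hlin
    rw [← integral_condExp hm, integral_congr_ae hcond, integral_add hquad (integrable_const _),
      integral_add hA2.integrable_sq hlin, integral_const_mul, hA0]
    simp
  filter_upwards [hcond] with ω hω
  rw [hω, hint]
  ring

end SquareOfIndependentSum

namespace SimpleGraph

variable {V : Type*}

theorem sum_filter_ne_eq_sum_adj_add_sum_compl_adj [Fintype V] [DecidableEq V] {M : Type*}
    [AddCommMonoid M] (G : SimpleGraph V) [DecidableRel G.Adj] (r : V) (f : V → M) :
    ∑ l ∈ univ.filter (· ≠ r), f l
      = ∑ l ∈ univ.filter (G.Adj r), f l + ∑ l ∈ univ.filter (Gᶜ.Adj r), f l := by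
  rw [← sum_filter_add_sum_filter_not _ (G.Adj r), filter_filter, filter_filter]
  congr 1 <;> refine sum_congr (filter_congr fun l _ => ?_) fun _ _ => rfl
  · exact ⟨And.right, fun h => ⟨h.ne', h⟩⟩
  · rw [compl_adj, ne_comm]

variable {s t r l : V}

theorem edge_adj_left_iff (hst : s ≠ t) : (edge s t).Adj s l ↔ l = t := by
  rw [edge_adj]; grind

theorem edge_adj_right_iff (hst : s ≠ t) : (edge s t).Adj t l ↔ l = s := by
  rw [edge_adj]; grind

theorem not_edge_adj_of_ne_of_ne (hs : r ≠ s) (ht : r ≠ t) :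
    ¬(edge s t).Adj r l := by
  rw [edge_adj]; grind

theorem disjoint_edge_edge_of_ne {u : V} (hst : s ≠ t) (hsu : s ≠ u) (htu : t ≠ u) :
    Disjoint (edge s t) (edge s u) :=
  disjoint_left.2 fun _ _ => by rw [edge_adj, edge_adj]; grind

end SimpleGraph

section ZeroOneValued

variable {Ω : Type*} [MeasurableSpace Ω] {μ : Measure Ω} [IsFiniteMeasure μ]

theorem sub_sq_of_eq_zero_or_eq_one {y : ℝ} (hy : y = 0 ∨ y = 1) (q : ℝ) :
    (y - q) ^ 2 = (1 - 2 * q) * (y - q) + q * (1 - q) := by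
  rcases hy with rfl | rfl <;> ring

theorem memLp_of_eq_zero_or_eq_one {f : Ω → ℝ} (hf : Measurable f)
    (h01 : ∀ ω, f ω = 0 ∨ f ω = 1) (q : ENNReal) : MemLp f q μ :=
  MemLp.of_bound hf.aestronglyMeasurable 1
    (ae_of_all _ fun ω => by rcases h01 ω with h | h <;> simp [h])

theorem integrable_of_eq_zero_or_eq_one {f : Ω → ℝ} (hf : Measurable f)
    (h01 : ∀ ω, f ω = 0 ∨ f ω = 1) : Integrable f μ :=
  memLp_one_iff_integrable.1 (memLp_of_eq_zero_or_eq_one hf h01 1)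

end ZeroOneValued

namespace HER

open SimpleGraph

noncomputable section DegreeStatistic

variable {Ω : Type*} {n : ℕ} (Y : Fin n → Fin n → Ω → ℝ) (p p0 : Fin n → Fin n → ℝ)

/- `G` is the graph of the conditioned edges; the edge `{i, j}` is indexed by the pair `(i, j)`
with `i < j`, as in the independence hypothesis. In the paper's notation `degreeDev r = D_r - μ⁰_r`,
`degreeStat = W`, `drift r = Δ_r`, and `degreeStatProj μ G = E[W | Y_e, e ∈ G] - E[W]`
(`condExp_degreeStat_sub_integral`). -/
abbrev edgeSigma (G : SimpleGraph (Fin n)) : MeasurableSpace Ω :=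
  ⨆ (e : {e : Fin n × Fin n // e.1 < e.2}) (_ : G.Adj e.1.1 e.1.2),
    MeasurableSpace.comap (Y e.1.1 e.1.2) inferInstance

def degreeDev (r : Fin n) (ω : Ω) : ℝ :=
  ∑ l ∈ univ.filter (· ≠ r), Y r l ω - ∑ l ∈ univ.filter (· ≠ r), p0 r l

def degreeStat (ω : Ω) : ℝ := (1 / (n : ℝ)) * ∑ r, degreeDev Y p0 r ω ^ 2

def drift (r : Fin n) : ℝ := ∑ l ∈ univ.filter (· ≠ r), (p r l - p0 r l)

def centeredDegreeOn (G : SimpleGraph (Fin n)) [DecidableRel G.Adj] (r : Fin n) (ω : Ω) : ℝ :=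
  ∑ l ∈ univ.filter (G.Adj r), (Y r l ω - p r l)

def degreeStatProj [MeasurableSpace Ω] (μ : Measure Ω) (G : SimpleGraph (Fin n))
    [DecidableRel G.Adj] (ω : Ω) : ℝ :=
  (1 / (n : ℝ)) * ∑ r, (centeredDegreeOn Y p G r ω ^ 2
    - ∫ ω', centeredDegreeOn Y p G r ω' ^ 2 ∂μ + 2 * drift p p0 r * centeredDegreeOn Y p G r ω)

end DegreeStatistic

section EdgeSigma

variable {Ω : Type*} {n : ℕ} {Y : Fin n → Fin n → Ω → ℝ}

theorem edgeSigma_le [MeasurableSpace Ω] (hmeas : ∀ i j, Measurable (Y i j))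
    (G : SimpleGraph (Fin n)) : edgeSigma Y G ≤ ‹MeasurableSpace Ω› :=
  iSup₂_le fun _ _ => (hmeas _ _).comap_le

theorem measurable_edgeSigma_of_adj (hYsym : ∀ i j, Y i j = Y j i)
    {G : SimpleGraph (Fin n)} {r l : Fin n} (h : G.Adj r l) :
    Measurable[edgeSigma Y G] (Y r l) := by
  rcases h.ne.lt_or_gt with hrl | hlr
  · exact Measurable.of_comap_le (le_iSup₂_of_le ⟨(r, l), hrl⟩ h le_rfl)
  · rw [hYsym]
    exact Measurable.of_comap_le (le_iSup₂_of_le ⟨(l, r), hlr⟩ h.symm le_rfl)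

theorem indep_edgeSigma_compl [MeasurableSpace Ω] {μ : Measure Ω}
    (hmeas : ∀ i j, Measurable (Y i j))
    (hindep : iIndepFun (fun e : {e : Fin n × Fin n // e.1 < e.2} => Y e.1.1 e.1.2) μ)
    (G : SimpleGraph (Fin n)) : Indep (edgeSigma Y Gᶜ) (edgeSigma Y G) μ := by
  have hle : edgeSigma Y Gᶜ ≤
      ⨆ e ∈ {e : {e : Fin n × Fin n // e.1 < e.2} | G.Adj e.1.1 e.1.2}ᶜ,
        MeasurableSpace.comap (Y e.1.1 e.1.2) inferInstance :=
    iSup₂_mono' fun e he => ⟨e, ((compl_adj ..).1 he).2, le_rfl⟩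
  exact indep_of_indep_of_le_left
    (indep_biSup_compl (fun e => (hmeas _ _).comap_le) hindep.iIndep _).symm hle

theorem edgeSigma_edge {i j : Fin n} (hij : i < j) :
    edgeSigma Y (edge i j) = MeasurableSpace.comap (Y i j) inferInstance := by
  refine le_antisymm (iSup₂_le fun ⟨(a, b), hab⟩ hadj => ?_)
    (le_iSup₂_of_le ⟨(i, j), hij⟩ (by simp [edge_adj, hij.ne]) le_rfl)
  rcases (edge_adj ..).1 hadj with ⟨⟨rfl, rfl⟩ | ⟨rfl, rfl⟩, -⟩
  · exact le_rfl
  · exact absurd (hab.trans hij) (lt_irrefl _)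

theorem edgeSigma_sup (G H : SimpleGraph (Fin n)) :
    edgeSigma Y (G ⊔ H) = edgeSigma Y G ⊔ edgeSigma Y H := by
  simp only [edgeSigma, sup_adj, iSup_or, iSup_sup_eq]

end EdgeSigma

section CenteredDegree

variable {Ω : Type*} {n : ℕ} {Y : Fin n → Fin n → Ω → ℝ} {p p0 : Fin n → Fin n → ℝ}
  {G H : SimpleGraph (Fin n)} [DecidableRel G.Adj] [DecidableRel H.Adj]

theorem measurable_centeredDegreeOn (hYsym : ∀ i j, Y i j = Y j i) (r : Fin n) :
    Measurable[edgeSigma Y G] (centeredDegreeOn Y p G r) :=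
  Finset.measurable_sum _ fun _ hl =>
    (measurable_edgeSigma_of_adj hYsym (mem_filter.1 hl).2).sub_const _

theorem degreeDev_sub_centeredDegreeOn (r : Fin n) (ω : Ω) :
    degreeDev Y p0 r ω - centeredDegreeOn Y p G r ω
      = ∑ l ∈ univ.filter (Gᶜ.Adj r), Y r l ω
        + (∑ l ∈ univ.filter (G.Adj r), p r l - ∑ l ∈ univ.filter (· ≠ r), p0 r l) := by
  rw [degreeDev, centeredDegreeOn, sum_filter_ne_eq_sum_adj_add_sum_compl_adj G, sum_sub_distrib]
  ring

theorem measurable_degreeDev_sub_centeredDegreeOn (hYsym : ∀ i j, Y i j = Y j i) (r : Fin n) :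
    Measurable[edgeSigma Y Gᶜ] (fun ω => degreeDev Y p0 r ω - centeredDegreeOn Y p G r ω) := by
  simp_rw [degreeDev_sub_centeredDegreeOn]
  exact (Finset.measurable_sum _ fun _ hl =>
    measurable_edgeSigma_of_adj hYsym (mem_filter.1 hl).2).add_const _

theorem centeredDegreeOn_eq_zero {r : Fin n} (h : ∀ l, ¬G.Adj r l) : centeredDegreeOn Y p G r = 0 :=
  funext fun _ => sum_eq_zero fun l hl => absurd (mem_filter.1 hl).2 (h l)

theorem centeredDegreeOn_eq_single {r l : Fin n} (h : ∀ l', G.Adj r l' ↔ l' = l) :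
    centeredDegreeOn Y p G r = fun ω => Y r l ω - p r l := by
  have hfilter : univ.filter (G.Adj r) = {l} := by ext l'; simp [h]
  funext ω
  rw [centeredDegreeOn, hfilter, sum_singleton]

theorem centeredDegreeOn_sup (hGH : Disjoint G H) (r : Fin n) :
    centeredDegreeOn Y p (G ⊔ H) r = centeredDegreeOn Y p G r + centeredDegreeOn Y p H r := by
  funext ω
  simp only [centeredDegreeOn, Pi.add_apply]
  rw [sum_filter, sum_filter, sum_filter, ← sum_add_distrib]
  refine sum_congr rfl fun l _ => ?_
  by_cases hG : G.Adj r l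
  · simp [hG, disjoint_left.1 hGH _ _ hG]
  · by_cases hH : H.Adj r l <;> simp [hG, hH]

end CenteredDegree

section EdgeMoments

variable {Ω : Type*} [MeasurableSpace Ω] {μ : Measure Ω} [IsProbabilityMeasure μ] {n : ℕ}
  {Y : Fin n → Fin n → Ω → ℝ} {p p0 : Fin n → Fin n → ℝ}
  (hmeas : ∀ i j, Measurable (Y i j)) (h01 : ∀ i j ω, Y i j ω = 0 ∨ Y i j ω = 1)
  (hmean : ∀ i j, i ≠ j → ∫ ω, Y i j ω ∂μ = p i j)
include hmeas h01

theorem integrable_sub_const (i j : Fin n) (c : ℝ) : Integrable (fun ω => Y i j ω - c) μ :=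
  (integrable_of_eq_zero_or_eq_one (hmeas i j) (h01 i j)).sub (integrable_const c)

theorem memLp_centeredDegreeOn (G : SimpleGraph (Fin n)) [DecidableRel G.Adj] (r : Fin n) :
    MemLp (centeredDegreeOn Y p G r) 2 μ :=
  memLp_finsetSum _ fun l _ =>
    (memLp_of_eq_zero_or_eq_one (hmeas r l) (h01 r l) 2).sub (memLp_const _)

theorem memLp_degreeDev (r : Fin n) : MemLp (degreeDev Y p0 r) 2 μ :=
  (memLp_finsetSum _ fun l _ => memLp_of_eq_zero_or_eq_one (hmeas r l) (h01 r l) 2).sub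
    (memLp_const _)

include hmean

theorem integral_sub_mean {i j : Fin n} (hij : i ≠ j) : ∫ ω, (Y i j ω - p i j) ∂μ = 0 := by
  rw [integral_sub (integrable_of_eq_zero_or_eq_one (hmeas i j) (h01 i j)) (integrable_const _),
    hmean i j hij]
  simp

theorem integral_sub_mean_sq {i j : Fin n} (hij : i ≠ j) :
    ∫ ω, (Y i j ω - p i j) ^ 2 ∂μ = p i j * (1 - p i j) := by
  simp_rw [sub_sq_of_eq_zero_or_eq_one (h01 i j _)]
  rw [integral_add ((integrable_sub_const hmeas h01 i j _).const_mul _) (integrable_const _),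
    integral_const_mul, integral_sub_mean hmeas h01 hmean hij]
  simp

theorem integral_centeredDegreeOn (G : SimpleGraph (Fin n)) [DecidableRel G.Adj] (r : Fin n) :
    ∫ ω, centeredDegreeOn Y p G r ω ∂μ = 0 := by
  simp only [centeredDegreeOn]
  rw [integral_finsetSum _ fun l _ => integrable_sub_const hmeas h01 r l _]
  exact sum_eq_zero fun l hl => integral_sub_mean hmeas h01 hmean (mem_filter.1 hl).2.ne

theorem integral_degreeDev (r : Fin n) : ∫ ω, degreeDev Y p0 r ω ∂μ = drift p p0 r := by
  have hY : ∀ l, Integrable (Y r l) μ := fun l =>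
    integrable_of_eq_zero_or_eq_one (hmeas r l) (h01 r l)
  simp only [degreeDev]
  rw [integral_sub (integrable_finsetSum _ fun l _ => hY l) (integrable_const _),
    integral_finsetSum _ fun l _ => hY l, drift, sum_sub_distrib]
  simp only [integral_const, probReal_univ, one_smul]
  exact congrArg (· - _) (sum_congr rfl fun l hl => hmean r l (mem_filter.1 hl).2.symm)

end EdgeMoments

section Projection

variable {Ω : Type*} [MeasurableSpace Ω] {μ : Measure Ω} [IsProbabilityMeasure μ] {n : ℕ}
  {Y : Fin n → Fin n → Ω → ℝ} {p p0 : Fin n → Fin n → ℝ}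
  {G : SimpleGraph (Fin n)} [DecidableRel G.Adj]
  (hYsym : ∀ i j, Y i j = Y j i) (hmeas : ∀ i j, Measurable (Y i j))
  (h01 : ∀ i j ω, Y i j ω = 0 ∨ Y i j ω = 1) (hmean : ∀ i j, i ≠ j → ∫ ω, Y i j ω ∂μ = p i j)
  (hindep : iIndepFun (fun e : {e : Fin n × Fin n // e.1 < e.2} => Y e.1.1 e.1.2) μ)
include hYsym hmeas h01 hmean hindep

theorem condExp_degreeDev_sq_sub_integral (r : Fin n) :
    (fun ω => μ[fun ω => degreeDev Y p0 r ω ^ 2 | edgeSigma Y G] ω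
        - ∫ ω, degreeDev Y p0 r ω ^ 2 ∂μ) =ᵐ[μ]
      fun ω => centeredDegreeOn Y p G r ω ^ 2 - ∫ ω, centeredDegreeOn Y p G r ω ^ 2 ∂μ
        + 2 * drift p p0 r * centeredDegreeOn Y p G r ω := by
  set A := centeredDegreeOn Y p G r
  set B := fun ω => degreeDev Y p0 r ω - A ω
  have hA2 : MemLp A 2 μ := memLp_centeredDegreeOn hmeas h01 G r
  have hB2 : MemLp B 2 μ := (memLp_degreeDev hmeas h01 r).sub hA2
  have hsplit : degreeDev Y p0 r = fun ω => A ω + B ω := by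
    funext ω; simp only [B]; ring
  have hB : ∫ ω, B ω ∂μ = drift p p0 r := by
    rw [integral_sub ((memLp_degreeDev hmeas h01 r).integrable one_le_two)
      (hA2.integrable one_le_two), integral_degreeDev hmeas h01 hmean,
      integral_centeredDegreeOn hmeas h01 hmean, sub_zero]
  rw [hsplit, ← hB]
  exact condExp_add_sq_sub_integral_of_indep (edgeSigma_le hmeas G) (edgeSigma_le hmeas Gᶜ)
    (indep_edgeSigma_compl hmeas hindep G)
    (measurable_centeredDegreeOn hYsym r).stronglyMeasurable
    (measurable_degreeDev_sub_centeredDegreeOn hYsym r).stronglyMeasurable hA2 hB2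
    (integral_centeredDegreeOn hmeas h01 hmean G r)

theorem condExp_degreeStat_sub_integral :
    (fun ω => μ[degreeStat Y p0 | edgeSigma Y G] ω - ∫ ω, degreeStat Y p0 ω ∂μ)
      =ᵐ[μ] degreeStatProj Y p p0 μ G := by
  have hsq : ∀ r, Integrable (fun ω => degreeDev Y p0 r ω ^ 2) μ :=
    fun r => (memLp_degreeDev hmeas h01 r).integrable_sq
  have hstat : degreeStat Y p0 = (1 / (n : ℝ)) • ∑ r, fun ω => degreeDev Y p0 r ω ^ 2 := by
    ext ω; simp only [degreeStat, Pi.smul_apply, Finset.sum_apply, smul_eq_mul]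
  have hint : ∫ ω, degreeStat Y p0 ω ∂μ
      = (1 / (n : ℝ)) * ∑ r, ∫ ω, degreeDev Y p0 r ω ^ 2 ∂μ := by
    simp only [degreeStat]
    rw [integral_const_mul, integral_finsetSum _ fun r _ => hsq r]
  filter_upwards [condExp_smul (1 / (n : ℝ)) (∑ r, fun ω => degreeDev Y p0 r ω ^ 2) _,
    condExp_finsetSum (fun r _ => hsq r) (edgeSigma Y G), ae_all_iff.2 fun r =>
      condExp_degreeDev_sq_sub_integral (G := G) hYsym hmeas h01 hmean hindep r]
    with ω hsmul hsum hrow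
  rw [hint, hstat, hsmul, Pi.smul_apply, hsum, smul_eq_mul, Finset.sum_apply, degreeStatProj,
    ← mul_sub, ← sum_sub_distrib]
  exact congrArg _ (sum_congr rfl fun r _ => hrow r)

end Projection

section ProjectionFormulas

variable {Ω : Type*} [MeasurableSpace Ω] {μ : Measure Ω} [IsProbabilityMeasure μ] {n : ℕ}
  {Y : Fin n → Fin n → Ω → ℝ} {p p0 : Fin n → Fin n → ℝ}
  (hmeas : ∀ i j, Measurable (Y i j)) (h01 : ∀ i j ω, Y i j ω = 0 ∨ Y i j ω = 1)
include hmeas h01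

theorem degreeStatProj_edge (hYsym : ∀ i j, Y i j = Y j i) (hpsym : ∀ i j, p i j = p j i)
    (hmean : ∀ i j, i ≠ j → ∫ ω, Y i j ω ∂μ = p i j) {i j : Fin n} (hij : i ≠ j) (ω : Ω) :
    degreeStatProj Y p p0 μ (edge i j) ω
      = 2 / n * (Y i j ω - p i j) * (1 - 2 * p i j + drift p p0 i + drift p p0 j) := by
  have hi : centeredDegreeOn Y p (edge i j) i = fun ω => Y i j ω - p i j :=
    centeredDegreeOn_eq_single fun _ => edge_adj_left_iff hij
  have hj : centeredDegreeOn Y p (edge i j) j = fun ω => Y i j ω - p i j := by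
    rw [centeredDegreeOn_eq_single fun _ => edge_adj_right_iff hij, hYsym j i, hpsym j i]
  rw [degreeStatProj, sum_eq_add i j hij (fun r _ hr => by
      rw [centeredDegreeOn_eq_zero fun _ => not_edge_adj_of_ne_of_ne hr.1 hr.2]; simp)
    (by simp) (by simp), hi, hj, integral_sub_mean_sq hmeas h01 hmean hij,
    sub_sq_of_eq_zero_or_eq_one (h01 i j ω)]
  ring

theorem degreeStatProj_sup_sub {G H : SimpleGraph (Fin n)} [DecidableRel G.Adj]
    [DecidableRel H.Adj] (hGH : Disjoint G H) (ω : Ω) :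
    degreeStatProj Y p p0 μ (G ⊔ H) ω - degreeStatProj Y p p0 μ G ω
        - degreeStatProj Y p p0 μ H ω
      = 2 / n * ∑ r, (centeredDegreeOn Y p G r ω * centeredDegreeOn Y p H r ω
          - ∫ ω', centeredDegreeOn Y p G r ω' * centeredDegreeOn Y p H r ω' ∂μ) := by
  have hexpand : ∀ r, ∫ ω, (centeredDegreeOn Y p G r ω + centeredDegreeOn Y p H r ω) ^ 2 ∂μ
      = ∫ ω, centeredDegreeOn Y p G r ω ^ 2 ∂μ
        + 2 * ∫ ω, centeredDegreeOn Y p G r ω * centeredDegreeOn Y p H r ω ∂μ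
        + ∫ ω, centeredDegreeOn Y p H r ω ^ 2 ∂μ := by
    intro r
    have hG := memLp_centeredDegreeOn (p := p) (μ := μ) hmeas h01 G r
    have hH := memLp_centeredDegreeOn (p := p) (μ := μ) hmeas h01 H r
    have hcross : Integrable
        (fun ω => 2 * (centeredDegreeOn Y p G r ω * centeredDegreeOn Y p H r ω)) μ :=
      (hG.integrable_mul hH).const_mul 2
    have hGcross : Integrable (fun ω => centeredDegreeOn Y p G r ω ^ 2
        + 2 * (centeredDegreeOn Y p G r ω * centeredDegreeOn Y p H r ω)) μ :=
      hG.integrable_sq.add hcross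
    simp_rw [add_sq, mul_assoc]
    rw [integral_add hGcross hH.integrable_sq, integral_add hG.integrable_sq hcross,
      integral_const_mul]
  simp only [degreeStatProj, centeredDegreeOn_sup hGH, Pi.add_apply, hexpand]
  rw [← mul_sub, ← mul_sub, ← sum_sub_distrib, ← sum_sub_distrib, mul_sum, mul_sum]
  exact sum_congr rfl fun r _ => by ring

theorem degreeStatProj_edge_sup_edge (hmean : ∀ i j, i ≠ j → ∫ ω, Y i j ω ∂μ = p i j)
    (hindep : iIndepFun (fun e : {e : Fin n × Fin n // e.1 < e.2} => Y e.1.1 e.1.2) μ)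
    {i j k : Fin n} (hij : i < j) (hik : i < k) (hjk : j ≠ k) (ω : Ω) :
    degreeStatProj Y p p0 μ (edge i j ⊔ edge i k) ω
        - degreeStatProj Y p p0 μ (edge i j) ω
        - degreeStatProj Y p p0 μ (edge i k) ω
      = 2 / n * (Y i j ω - p i j) * (Y i k ω - p i k) := by
  have hind : IndepFun (fun ω => Y i j ω - p i j) (fun ω => Y i k ω - p i k) μ :=
    (hindep.indepFun (i := ⟨(i, j), hij⟩) (j := ⟨(i, k), hik⟩) (by simp [hjk])).comp
      (measurable_sub_const _) (measurable_sub_const _)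
  have hcov : ∫ ω, (Y i j ω - p i j) * (Y i k ω - p i k) ∂μ = 0 := by
    rw [hind.integral_fun_mul_eq_mul_integral ((hmeas i j).sub_const _).aestronglyMeasurable
      ((hmeas i k).sub_const _).aestronglyMeasurable, integral_sub_mean hmeas h01 hmean hij.ne,
      zero_mul]
  rw [degreeStatProj_sup_sub hmeas h01 (disjoint_edge_edge_of_ne hij.ne hik.ne hjk),
    sum_eq_single i]
  · rw [centeredDegreeOn_eq_single fun _ => edge_adj_left_iff hij.ne,
      centeredDegreeOn_eq_single fun _ => edge_adj_left_iff hik.ne, hcov]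
    ring
  · intro r _ hri
    by_cases hrj : r = j
    · subst hrj
      rw [centeredDegreeOn_eq_zero (G := edge i k) fun _ =>
        not_edge_adj_of_ne_of_ne hij.ne' hjk]
      simp
    · rw [centeredDegreeOn_eq_zero fun _ => not_edge_adj_of_ne_of_ne hri hrj]
      simp
  · simp

end ProjectionFormulas

end HER

theorem her_hoeffding_projections_general
    {Ω : Type*} [MeasurableSpace Ω] (μ : Measure Ω) [IsProbabilityMeasure μ]
    (n : ℕ) (Y : Fin n → Fin n → Ω → ℝ) (p p0 : Fin n → Fin n → ℝ)
    (hYsym : ∀ i j, Y i j = Y j i)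
    (hpsym : ∀ i j, p i j = p j i)
    (hmeas : ∀ i j, Measurable (Y i j))
    (h01 : ∀ i j ω, Y i j ω = 0 ∨ Y i j ω = 1)
    (hmean : ∀ i j, i ≠ j → ∫ ω, Y i j ω ∂μ = p i j)
    (hindep : iIndepFun
      (fun e : {e : Fin n × Fin n // e.1 < e.2} => Y e.1.1 e.1.2) μ)
    (W : Ω → ℝ)
    (hW : W = fun ω => (1 / (n : ℝ)) * ∑ i,
        ((∑ j ∈ univ.filter (fun j => j ≠ i), Y i j ω)
          - ∑ j ∈ univ.filter (fun j => j ≠ i), p0 i j) ^ 2) :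
    (∀ i j : Fin n, i < j →
      (fun ω => (μ[W | MeasurableSpace.comap (Y i j) inferInstance]) ω - ∫ ω', W ω' ∂μ)
        =ᵐ[μ] fun ω => (2 / (n : ℝ)) * (Y i j ω - p i j) *
          (1 - 2 * p i j + (∑ k ∈ univ.filter (fun k => k ≠ i), (p i k - p0 i k))
            + (∑ k ∈ univ.filter (fun k => k ≠ j), (p j k - p0 j k))))
    ∧ (∀ i j k : Fin n, i < j → j < k →
      (fun ω => (μ[W | MeasurableSpace.comap (fun ω' => (Y i j ω', Y i k ω')) inferInstance]) ω
          - (μ[W | MeasurableSpace.comap (Y i j) inferInstance]) ω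
          - (μ[W | MeasurableSpace.comap (Y i k) inferInstance]) ω
          + ∫ ω', W ω' ∂μ)
        =ᵐ[μ] fun ω => (2 / (n : ℝ)) * (Y i j ω - p i j) * (Y i k ω - p i k)) := by
  obtain rfl : W = HER.degreeStat Y p0 := hW
  have hedge : ∀ i j : Fin n, i < j →
      (fun ω => μ[HER.degreeStat Y p0 | MeasurableSpace.comap (Y i j) inferInstance] ω
        - ∫ ω, HER.degreeStat Y p0 ω ∂μ)
        =ᵐ[μ] HER.degreeStatProj Y p p0 μ (SimpleGraph.edge i j) := fun i j hij => by
    rw [← HER.edgeSigma_edge hij]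
    exact HER.condExp_degreeStat_sub_integral hYsym hmeas h01 hmean hindep
  refine ⟨fun i j hij => (hedge i j hij).trans (.of_eq (funext fun ω =>
    HER.degreeStatProj_edge hmeas h01 hYsym hpsym hmean hij.ne ω)), fun i j k hij hjk => ?_⟩
  have hpair : MeasurableSpace.comap (fun ω => (Y i j ω, Y i k ω)) inferInstance
      = HER.edgeSigma Y (SimpleGraph.edge i j ⊔ SimpleGraph.edge i k) := by
    rw [HER.edgeSigma_sup, HER.edgeSigma_edge hij, HER.edgeSigma_edge (hij.trans hjk)]
    exact MeasurableSpace.comap_prodMk _ _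
  rw [hpair]
  filter_upwards [HER.condExp_degreeStat_sub_integral
      (G := SimpleGraph.edge i j ⊔ SimpleGraph.edge i k) hYsym hmeas h01 hmean hindep,
    hedge i j hij, hedge i k (hij.trans hjk)] with ω hboth hj hk
  rw [← HER.degreeStatProj_edge_sup_edge hmeas h01 hmean hindep hij (hij.trans hjk) hjk.ne ω,
    ← hboth, ← hj, ← hk]
  ring

/-- Hoeffding projections of the degree mean square statistic under HER(p). -/
theorem her_hoeffding_projections
    {Ω : Type*} [MeasurableSpace Ω] (μ : Measure Ω) [IsProbabilityMeasure μ]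
    (n : ℕ) (Y : Fin n → Fin n → Ω → ℝ) (p p0 : Fin n → Fin n → ℝ)
    (hYsym : ∀ i j, Y i j = Y j i) (hYdiag : ∀ i, Y i i = 0)
    (hpsym : ∀ i j, p i j = p j i) (hpdiag : ∀ i, p i i = 0)
    (hp0sym : ∀ i j, p0 i j = p0 j i) (hp0diag : ∀ i, p0 i i = 0)
    (hmeas : ∀ i j, Measurable (Y i j))
    (h01 : ∀ i j ω, Y i j ω = 0 ∨ Y i j ω = 1)
    (hmean : ∀ i j, i ≠ j → ∫ ω, Y i j ω ∂μ = p i j)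
    (hindep : iIndepFun
      (fun e : {e : Fin n × Fin n // e.1 < e.2} => Y e.1.1 e.1.2) μ)
    (W : Ω → ℝ)
    (hW : W = fun ω => (1 / (n : ℝ)) * ∑ i,
        ((∑ j ∈ univ.filter (fun j => j ≠ i), Y i j ω)
          - ∑ j ∈ univ.filter (fun j => j ≠ i), p0 i j) ^ 2) :
    (∀ i j : Fin n, i < j →
      (fun ω => (μ[W | MeasurableSpace.comap (Y i j) inferInstance]) ω - ∫ ω', W ω' ∂μ)
        =ᵐ[μ] fun ω => (2 / (n : ℝ)) * (Y i j ω - p i j) *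
          (1 - 2 * p i j + (∑ k ∈ univ.filter (fun k => k ≠ i), (p i k - p0 i k))
            + (∑ k ∈ univ.filter (fun k => k ≠ j), (p j k - p0 j k))))
    ∧ (∀ i j k : Fin n, i < j → j < k →
      (fun ω => (μ[W | MeasurableSpace.comap (fun ω' => (Y i j ω', Y i k ω')) inferInstance]) ω
          - (μ[W | MeasurableSpace.comap (Y i j) inferInstance]) ω
          - (μ[W | MeasurableSpace.comap (Y i k) inferInstance]) ω
          + ∫ ω', W ω' ∂μ)
        =ᵐ[μ] fun ω => (2 / (n : ℝ)) * (Y i j ω - p i j) * (Y i k ω - p i k)) :=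
  her_hoeffding_projections_general μ n Y p p0 hYsym hpsym hmeas h01 hmean hindep W hW
end

section
/- In the W-graph model with graphon Φ, letting M₁ = Σ_{i<j} Y_{ij} and M₂ = Σ_{i<j<k}(Y_{ij}Y_{ik} + Y_{ij}Y_{jk} + Y_{ik}Y_{jk}), one has E[M₁M₂] = (n₂/2)(2φ₂ + φ₃) + (n₃/2)(φ₅ + 2φ₆) + (n₄/4) φ₁φ₂, where φ_j = P(R_j) is the occurrence probability of pattern R_j (R₃ = triangle, R₅ = three-star, R₆ = path with 3 edges) and n_i = n(n−1)⋯(n−i). -/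
/-!
Expand `M₁ M₂` as a sum, over sorted edges `{a, b}` and sorted triples `{i, j, k}`, of
`Y_ab · w_ijk`, where `w_ijk` is the number of 2-paths inside `{i, j, k}`. The moment identity
turns each expectation into an integral of a product of `Φ`'s at independent uniform latent
positions, and integrating them out one at a time shows that `E[Y_ab w_ijk]` only depends on how
the edge meets the triple: `2φ₂ + φ₃` if it lies inside (using `Y² = Y`), `φ₅ + 2φ₆` if they share
one vertex, `3φ₁φ₂` if they are disjoint. For each of the `C(n,3)` triples there are `3`, `3(n-3)`
and `C(n-3,2)` edges of these kinds.
-/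

open MeasureTheory ProbabilityTheory Finset

theorem Nat.sum_range_choose_two (n : ℕ) : ∑ i ∈ range n, i.choose 2 = n.choose 3 := by
  induction n with
  | zero => rfl
  | succ n ih => rw [sum_range_succ, ih, Nat.choose_succ_succ' n 2, add_comm]

theorem Nat.cast_choose_three {K : Type*} [Field K] [CharZero K] (n : ℕ) :
    (n.choose 3 : K) = n * (n - 1) * (n - 2) / 6 := by
  rw [Nat.cast_choose_eq_descPochhammer_div]
  simp [descPochhammer_succ_right, Nat.factorial]

section Counting

variable {α : Type*} [Fintype α] [LinearOrder α]

theorem sum_sorted_pairs_indicator (s : Finset α) :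
    ∑ a, ∑ b ∈ univ.filter (fun b => a < b), (if a ∈ s ∧ b ∈ s then (1 : ℝ) else 0)
      = (#s).choose 2 := by
  have hset : {x ∈ s ×ˢ s | x.1 < x.2}
      = {x ∈ (univ : Finset α) ×ˢ (univ : Finset α) | x.1 < x.2 ∧ x.1 ∈ s ∧ x.2 ∈ s} := by
    ext
    simp [and_comm]
  rw [← card_product_filter_lt, hset, card_filter, Nat.cast_sum, sum_product]
  refine sum_congr rfl fun a _ => ?_
  rw [sum_filter]
  refine sum_congr rfl fun b _ => ?_
  by_cases hab : a < b <;> simp [hab]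

theorem sum_sorted_pairs_ite_mem (D : Finset α) (A B C : ℝ) :
    ∑ a, ∑ b ∈ univ.filter (fun b => a < b),
        (if a ∈ D then (if b ∈ D then A else B) else if b ∈ D then B else C)
      = (#D).choose 2 * A + #D * #Dᶜ * B + (#Dᶜ).choose 2 * C := by
  have hsplit : ∀ a b : α, (if a ∈ D then (if b ∈ D then A else B) else if b ∈ D then B else C)
      = A * (if a ∈ D ∧ b ∈ D then 1 else 0) + C * (if a ∈ Dᶜ ∧ b ∈ Dᶜ then 1 else 0)
        + B * ((if a ∈ univ ∧ b ∈ univ then 1 else 0) - (if a ∈ D ∧ b ∈ D then 1 else 0)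
          - (if a ∈ Dᶜ ∧ b ∈ Dᶜ then 1 else 0)) := fun a b => by
    by_cases ha : a ∈ D <;> by_cases hb : b ∈ D <;> simp [ha, hb]
  simp only [hsplit, sum_add_distrib, sum_sub_distrib, ← mul_sum, sum_sorted_pairs_indicator]
  rw [card_univ, ← card_compl_add_card D, Nat.cast_choose_two, Nat.cast_choose_two,
    Nat.cast_choose_two]
  push_cast
  ring

theorem sum_sorted_triples_const (n : ℕ) (c : ℝ) :
    ∑ i : Fin n, ∑ j ∈ univ.filter (fun j => i < j), ∑ _k ∈ univ.filter (fun k => j < k), c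
      = n.choose 3 * c := by
  have hinner : ∀ i : Fin n, ∑ j ∈ univ.filter (fun j => i < j),
      ∑ _k ∈ univ.filter (fun k => j < k), c = (n - 1 - i : ℕ).choose 2 * c := by
    intro i
    rw [← Fin.card_Ioi, ← sum_sorted_pairs_indicator, sum_mul, sum_filter]
    refine sum_congr rfl fun j _ => ?_
    rw [sum_mul]
    split_ifs with hij
    · exact sum_congr rfl fun k hk => by simp [hij, hij.trans (mem_filter.1 hk).2]
    · exact (sum_eq_zero fun k _ => by simp [hij]).symm
  simp only [hinner, ← sum_mul]
  rw [Fin.sum_univ_eq_sum_range (fun i => ((n - 1 - i).choose 2 : ℝ)), ← Nat.cast_sum,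
    sum_range_reflect (fun i => (i.choose 2)), Nat.sum_range_choose_two]

end Counting

noncomputable section

namespace Graphon

variable {β : Type*} [MeasurableSpace β] (ν : Measure β) (Φ : β → β → ℝ)

/-! The occurrence probabilities `φ₁, φ₂, φ₃, φ₅, φ₆` of the edge, 2-star, triangle, 3-star and
3-path, for latent positions of law `ν`. -/

def edgeDensity : ℝ := ∫ u, ∫ v, Φ u v ∂ν ∂ν

def twoStarDensity : ℝ := ∫ u, ∫ v, ∫ w, Φ u v * Φ u w ∂ν ∂ν ∂ν

def triangleDensity : ℝ := ∫ u, ∫ v, ∫ w, Φ u v * Φ v w * Φ u w ∂ν ∂ν ∂ν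

def threeStarDensity : ℝ := ∫ u, ∫ v, ∫ w, ∫ x, Φ u v * Φ u w * Φ u x ∂ν ∂ν ∂ν ∂ν

def threePathDensity : ℝ := ∫ u, ∫ v, ∫ w, ∫ x, Φ u v * Φ v w * Φ w x ∂ν ∂ν ∂ν ∂ν

end Graphon

end

open Graphon

theorem unitInterval.abs_le_one {t : ℝ} (ht : t ∈ unitInterval) : |t| ≤ 1 :=
  abs_le.2 ⟨by linarith [ht.1], ht.2⟩

def wedgeCount {ι Ω : Type*} (Y : ι → ι → Ω → ℝ) (i j k : ι) (ω : Ω) : ℝ :=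
  Y i j ω * Y i k ω + Y i j ω * Y j k ω + Y i k ω * Y j k ω

theorem wedgeCount_comm₁₂ {ι Ω : Type*} {Y : ι → ι → Ω → ℝ} (hY : ∀ i j, Y i j = Y j i)
    (i j k : ι) : wedgeCount Y i j k = wedgeCount Y j i k := by
  funext ω
  rw [wedgeCount, wedgeCount, hY j i]
  ring

theorem wedgeCount_comm₂₃ {ι Ω : Type*} {Y : ι → ι → Ω → ℝ} (hY : ∀ i j, Y i j = Y j i)
    (i j k : ι) : wedgeCount Y i j k = wedgeCount Y i k j := by
  funext ω
  rw [wedgeCount, wedgeCount, hY k j]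
  ring

theorem apply_min_max {ι γ : Type*} [LinearOrder ι] {f : ι → ι → γ} (hf : ∀ i j, f i j = f j i)
    (i j : ι) : f (min i j) (max i j) = f i j := by
  rcases le_total i j with h | h
  · rw [min_eq_left h, max_eq_right h]
  · rw [min_eq_right h, max_eq_left h, hf]

section WGraph

variable {Ω α β : Type*} [MeasurableSpace Ω] [MeasurableSpace α] [MeasurableSpace β]
  {μ : Measure Ω}

theorem ProbabilityTheory.IndepFun.integral_comp_eq_integral_integral [IsFiniteMeasure μ]
    {X : Ω → α} {Z : Ω → β} (hXZ : IndepFun X Z μ) (hX : Measurable X) (hZ : Measurable Z)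
    {G : α × β → ℝ} (hG : StronglyMeasurable G)
    (hGi : Integrable G ((μ.map X).prod (μ.map Z))) :
    ∫ ω, G (X ω, Z ω) ∂μ = ∫ x, ∫ ω, G (x, Z ω) ∂μ ∂(μ.map X) := by
  rw [← integral_map (hX.prodMk hZ).aemeasurable hG.aestronglyMeasurable,
    (indepFun_iff_map_prod_eq_prod_map_map hX.aemeasurable hZ.aemeasurable).1 hXZ,
    integral_prod _ hGi]
  congr with x
  exact integral_map hZ.aemeasurable
    (hG.comp_measurable measurable_prodMk_left).aestronglyMeasurable

theorem ProbabilityTheory.iIndepFun.integral_eq_integral_integral_update {ι : Type*}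
    [Fintype ι] [DecidableEq ι] [IsFiniteMeasure μ] {U : ι → Ω → β} (hU : iIndepFun U μ)
    (hUm : ∀ i, Measurable (U i)) (a : ι) {ν : Measure β} (hlaw : μ.map (U a) = ν)
    {F : (ι → β) → ℝ} (hF : Measurable F) (C : ℝ) (hFC : ∀ x, |F x| ≤ C) :
    ∫ ω, F (fun i => U i ω) ∂μ
      = ∫ x, ∫ ω, F (Function.update (fun i => U i ω) a x) ∂μ ∂ν := by
  subst hlaw
  let glue : β × (↥({a}ᶜ : Finset ι) → β) → ι → β :=
    fun p i => if h : i = a then p.1 else p.2 ⟨i, by simp [h]⟩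
  have hglue : Measurable glue := by
    refine measurable_pi_lambda _ fun i => ?_
    by_cases h : i = a
    · simpa [glue, h] using measurable_fst
    · simp only [glue, h, dite_false]
      fun_prop
  let Z : Ω → ↥({a}ᶜ : Finset ι) → β := fun ω i => U i ω
  have hZ : Measurable Z := measurable_pi_lambda _ fun i => hUm i
  have hindep : IndepFun (U a) Z μ :=
    (hU.indepFun_finset {a} {a}ᶜ (by simp) hUm).comp
      (measurable_pi_apply (⟨a, mem_singleton_self a⟩ : ({a} : Finset ι))) measurable_id
  have hglue_update : ∀ x ω, glue (x, Z ω) = Function.update (fun i => U i ω) a x := by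
    intro x ω
    funext i
    by_cases h : i = a
    · subst h
      simp [glue]
    · simp [glue, h, Z]
  have hglue_self : ∀ ω, glue (U a ω, Z ω) = fun i => U i ω := fun ω => by
    rw [hglue_update, Function.update_eq_self]
  simp_rw [← hglue_update, ← hglue_self]
  exact hindep.integral_comp_eq_integral_integral (hUm a) hZ (hF.comp hglue).stronglyMeasurable
    (Integrable.of_bound (hF.comp hglue).aestronglyMeasurable C (ae_of_all _ fun p => hFC _))

namespace ProbabilityTheory.iIndepFun

variable {ι : Type*} [Fintype ι] [DecidableEq ι] [IsProbabilityMeasure μ] {U : ι → Ω → β}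
  {ν : Measure β} {Φ : β → β → ℝ}
  (hU : iIndepFun U μ) (hUm : ∀ i, Measurable (U i)) (hlaw : ∀ i, μ.map (U i) = ν)
  (hΦm : Measurable (Function.uncurry Φ)) (hΦ : ∀ u v, Φ u v ∈ unitInterval)

include hU hUm hlaw hΦm hΦ

theorem integral_two_star {x y z : ι} (hxy : x ≠ y) (hxz : x ≠ z) (hyz : y ≠ z) :
    ∫ ω, Φ (U x ω) (U y ω) * Φ (U x ω) (U z ω) ∂μ = twoStarDensity ν Φ := by
  have hb : ∀ a b c d, |Φ a b * Φ c d| ≤ 1 := fun _ _ _ _ =>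
    unitInterval.abs_le_one (unitInterval.mul_mem (hΦ _ _) (hΦ _ _))
  rw [hU.integral_eq_integral_integral_update hUm x (hlaw x)
    (F := fun p => Φ (p x) (p y) * Φ (p x) (p z)) (by fun_prop) 1 (fun _ => hb ..)]
  refine integral_congr_ae (ae_of_all _ fun u => ?_)
  simp only [Function.update_self, Function.update_of_ne hxy.symm, Function.update_of_ne hxz.symm]
  rw [hU.integral_eq_integral_integral_update hUm y (hlaw y)
    (F := fun p => Φ u (p y) * Φ u (p z)) (by fun_prop) 1 (fun _ => hb ..)]
  refine integral_congr_ae (ae_of_all _ fun v => ?_)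
  simp only [Function.update_self, Function.update_of_ne hyz.symm]
  rw [hU.integral_eq_integral_integral_update hUm z (hlaw z)
    (F := fun p => Φ u v * Φ u (p z)) (by fun_prop) 1 (fun _ => hb ..)]
  simp

theorem integral_triangle {x y z : ι} (hxy : x ≠ y) (hxz : x ≠ z) (hyz : y ≠ z) :
    ∫ ω, Φ (U x ω) (U y ω) * Φ (U y ω) (U z ω) * Φ (U x ω) (U z ω) ∂μ
      = triangleDensity ν Φ := by
  have hb : ∀ a b c d e f, |Φ a b * Φ c d * Φ e f| ≤ 1 := fun _ _ _ _ _ _ =>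
    unitInterval.abs_le_one
      (unitInterval.mul_mem (unitInterval.mul_mem (hΦ _ _) (hΦ _ _)) (hΦ _ _))
  rw [hU.integral_eq_integral_integral_update hUm x (hlaw x)
    (F := fun p => Φ (p x) (p y) * Φ (p y) (p z) * Φ (p x) (p z)) (by fun_prop) 1
    (fun _ => hb ..)]
  refine integral_congr_ae (ae_of_all _ fun u => ?_)
  simp only [Function.update_self, Function.update_of_ne hxy.symm, Function.update_of_ne hxz.symm]
  rw [hU.integral_eq_integral_integral_update hUm y (hlaw y)
    (F := fun p => Φ u (p y) * Φ (p y) (p z) * Φ u (p z)) (by fun_prop) 1 (fun _ => hb ..)]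
  refine integral_congr_ae (ae_of_all _ fun v => ?_)
  simp only [Function.update_self, Function.update_of_ne hyz.symm]
  rw [hU.integral_eq_integral_integral_update hUm z (hlaw z)
    (F := fun p => Φ u v * Φ v (p z) * Φ u (p z)) (by fun_prop) 1 (fun _ => hb ..)]
  simp

theorem integral_three_star {x y z w : ι} (hxy : x ≠ y) (hxz : x ≠ z) (hxw : x ≠ w)
    (hyz : y ≠ z) (hyw : y ≠ w) (hzw : z ≠ w) :
    ∫ ω, Φ (U x ω) (U y ω) * Φ (U x ω) (U z ω) * Φ (U x ω) (U w ω) ∂μ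
      = threeStarDensity ν Φ := by
  have hb : ∀ a b c d e f, |Φ a b * Φ c d * Φ e f| ≤ 1 := fun _ _ _ _ _ _ =>
    unitInterval.abs_le_one
      (unitInterval.mul_mem (unitInterval.mul_mem (hΦ _ _) (hΦ _ _)) (hΦ _ _))
  rw [hU.integral_eq_integral_integral_update hUm x (hlaw x)
    (F := fun p => Φ (p x) (p y) * Φ (p x) (p z) * Φ (p x) (p w)) (by fun_prop) 1
    (fun _ => hb ..)]
  refine integral_congr_ae (ae_of_all _ fun u => ?_)
  simp only [Function.update_self, Function.update_of_ne hxy.symm, Function.update_of_ne hxz.symm,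
    Function.update_of_ne hxw.symm]
  rw [hU.integral_eq_integral_integral_update hUm y (hlaw y)
    (F := fun p => Φ u (p y) * Φ u (p z) * Φ u (p w)) (by fun_prop) 1 (fun _ => hb ..)]
  refine integral_congr_ae (ae_of_all _ fun v => ?_)
  simp only [Function.update_self, Function.update_of_ne hyz.symm, Function.update_of_ne hyw.symm]
  rw [hU.integral_eq_integral_integral_update hUm z (hlaw z)
    (F := fun p => Φ u v * Φ u (p z) * Φ u (p w)) (by fun_prop) 1 (fun _ => hb ..)]
  refine integral_congr_ae (ae_of_all _ fun t => ?_)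
  simp only [Function.update_self, Function.update_of_ne hzw.symm]
  rw [hU.integral_eq_integral_integral_update hUm w (hlaw w)
    (F := fun p => Φ u v * Φ u t * Φ u (p w)) (by fun_prop) 1 (fun _ => hb ..)]
  simp

theorem integral_three_path {x y z w : ι} (hxy : x ≠ y) (hxz : x ≠ z) (hxw : x ≠ w)
    (hyz : y ≠ z) (hyw : y ≠ w) (hzw : z ≠ w) :
    ∫ ω, Φ (U x ω) (U y ω) * Φ (U y ω) (U z ω) * Φ (U z ω) (U w ω) ∂μ
      = threePathDensity ν Φ := by
  have hb : ∀ a b c d e f, |Φ a b * Φ c d * Φ e f| ≤ 1 := fun _ _ _ _ _ _ =>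
    unitInterval.abs_le_one
      (unitInterval.mul_mem (unitInterval.mul_mem (hΦ _ _) (hΦ _ _)) (hΦ _ _))
  rw [hU.integral_eq_integral_integral_update hUm x (hlaw x)
    (F := fun p => Φ (p x) (p y) * Φ (p y) (p z) * Φ (p z) (p w)) (by fun_prop) 1
    (fun _ => hb ..)]
  refine integral_congr_ae (ae_of_all _ fun u => ?_)
  simp only [Function.update_self, Function.update_of_ne hxy.symm, Function.update_of_ne hxz.symm,
    Function.update_of_ne hxw.symm]
  rw [hU.integral_eq_integral_integral_update hUm y (hlaw y)
    (F := fun p => Φ u (p y) * Φ (p y) (p z) * Φ (p z) (p w)) (by fun_prop) 1 (fun _ => hb ..)]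
  refine integral_congr_ae (ae_of_all _ fun v => ?_)
  simp only [Function.update_self, Function.update_of_ne hyz.symm, Function.update_of_ne hyw.symm]
  rw [hU.integral_eq_integral_integral_update hUm z (hlaw z)
    (F := fun p => Φ u v * Φ v (p z) * Φ (p z) (p w)) (by fun_prop) 1 (fun _ => hb ..)]
  refine integral_congr_ae (ae_of_all _ fun t => ?_)
  simp only [Function.update_self, Function.update_of_ne hzw.symm]
  rw [hU.integral_eq_integral_integral_update hUm w (hlaw w)
    (F := fun p => Φ u v * Φ v t * Φ t (p w)) (by fun_prop) 1 (fun _ => hb ..)]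
  simp

theorem integral_edge_mul_two_star {a b x y z : ι} (hab : a ≠ b) (hax : a ≠ x) (hay : a ≠ y)
    (haz : a ≠ z) (hbx : b ≠ x) (hby : b ≠ y) (hbz : b ≠ z) (hxy : x ≠ y) (hxz : x ≠ z)
    (hyz : y ≠ z) :
    ∫ ω, Φ (U a ω) (U b ω) * Φ (U x ω) (U y ω) * Φ (U x ω) (U z ω) ∂μ
      = edgeDensity ν Φ * twoStarDensity ν Φ := by
  have hb : ∀ a b c d e f, |Φ a b * Φ c d * Φ e f| ≤ 1 := fun _ _ _ _ _ _ =>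
    unitInterval.abs_le_one
      (unitInterval.mul_mem (unitInterval.mul_mem (hΦ _ _) (hΦ _ _)) (hΦ _ _))
  rw [edgeDensity, ← integral_mul_const]
  rw [hU.integral_eq_integral_integral_update hUm a (hlaw a)
    (F := fun p => Φ (p a) (p b) * Φ (p x) (p y) * Φ (p x) (p z)) (by fun_prop) 1
    (fun _ => hb ..)]
  refine integral_congr_ae (ae_of_all _ fun u => ?_)
  simp only [Function.update_self, Function.update_of_ne hab.symm, Function.update_of_ne hax.symm,
    Function.update_of_ne hay.symm, Function.update_of_ne haz.symm]
  rw [← integral_mul_const]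
  rw [hU.integral_eq_integral_integral_update hUm b (hlaw b)
    (F := fun p => Φ u (p b) * Φ (p x) (p y) * Φ (p x) (p z)) (by fun_prop) 1 (fun _ => hb ..)]
  refine integral_congr_ae (ae_of_all _ fun v => ?_)
  simp only [Function.update_self, Function.update_of_ne hbx.symm, Function.update_of_ne hby.symm,
    Function.update_of_ne hbz.symm, mul_assoc]
  rw [integral_const_mul, integral_two_star hU hUm hlaw hΦm hΦ hxy hxz hyz]

end ProbabilityTheory.iIndepFun

/-- `Y` is the adjacency array of the W-graph `EG(Φ)` with latent positions `U` of law `ν`. The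
conditional independence of the edges given `U` is encoded by `integral_prod`, the moment identity
for products over sets of distinct sorted edges. -/
structure IsWGraph {ι : Type*} [LinearOrder ι] (μ : Measure Ω) (ν : Measure β) (Φ : β → β → ℝ)
    (U : ι → Ω → β) (Y : ι → ι → Ω → ℝ) : Prop where
  measurable_graphon : Measurable (Function.uncurry Φ)
  graphon_symm : ∀ u v, Φ u v = Φ v u
  graphon_mem : ∀ u v, Φ u v ∈ unitInterval
  measurable_latent : ∀ i, Measurable (U i)
  iIndepFun_latent : iIndepFun U μ
  map_latent : ∀ i, μ.map (U i) = ν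
  symm : ∀ i j, Y i j = Y j i
  measurable : ∀ i j, Measurable (Y i j)
  zero_or_one : ∀ i j ω, Y i j ω = 0 ∨ Y i j ω = 1
  integral_prod : ∀ S : Finset (ι × ι), (∀ e ∈ S, e.1 < e.2) →
    ∫ ω, ∏ e ∈ S, Y e.1 e.2 ω ∂μ = ∫ ω, ∏ e ∈ S, Φ (U e.1 ω) (U e.2 ω) ∂μ

namespace IsWGraph

variable {ι : Type*} [LinearOrder ι] {ν : Measure β} {Φ : β → β → ℝ} {U : ι → Ω → β}
  {Y : ι → ι → Ω → ℝ}

theorem mem_unitInterval (hW : IsWGraph μ ν Φ U Y) (i j : ι) (ω : Ω) :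
    Y i j ω ∈ unitInterval := by
  rcases hW.zero_or_one i j ω with h | h <;> simp [h]

theorem mul_self (hW : IsWGraph μ ν Φ U Y) (i j : ι) (ω : Ω) : Y i j ω * Y i j ω = Y i j ω := by
  rcases hW.zero_or_one i j ω with h | h <;> simp [h]

theorem graphon_min_max (hW : IsWGraph μ ν Φ U Y) (ω : Ω) (i j : ι) :
    Φ (U (min i j) ω) (U (max i j) ω) = Φ (U i ω) (U j ω) :=
  apply_min_max (f := fun i j => Φ (U i ω) (U j ω)) (fun _ _ => hW.graphon_symm _ _) i j

theorem integral_prod_sym2 (hW : IsWGraph μ ν Φ U Y) (T : Finset (Sym2 ι))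
    (hT : ∀ e ∈ T, ¬e.IsDiag) :
    ∫ ω, ∏ e ∈ T, Y e.inf e.sup ω ∂μ = ∫ ω, ∏ e ∈ T, Φ (U e.inf ω) (U e.sup ω) ∂μ := by
  let sort : Sym2 ι ↪ ι × ι :=
    ⟨fun e => (e.inf, e.sup), fun _ _ h => Sym2.inf_eq_inf_and_sup_eq_sup.1 (Prod.ext_iff.1 h)⟩
  have hsorted : ∀ p ∈ T.map sort, p.1 < p.2 := by
    simp only [mem_map]
    rintro _ ⟨e, he, rfl⟩
    show e.inf < e.sup
    induction e with
    | _ a b => simpa [eq_comm] using hT _ he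
  have h := hW.integral_prod _ hsorted
  simp only [prod_map] at h
  exact h

theorem integral_mul (hW : IsWGraph μ ν Φ U Y) {a b c d : ι} (hab : a ≠ b) (hcd : c ≠ d)
    (h : s(a, b) ≠ s(c, d)) :
    ∫ ω, Y a b ω * Y c d ω ∂μ = ∫ ω, Φ (U a ω) (U b ω) * Φ (U c ω) (U d ω) ∂μ := by
  simpa [prod_insert, h, apply_min_max hW.symm, hW.graphon_min_max] using
    hW.integral_prod_sym2 {s(a, b), s(c, d)} (by simp [hab, hcd])

theorem integral_mul_mul (hW : IsWGraph μ ν Φ U Y) {a b c d e f : ι} (hab : a ≠ b) (hcd : c ≠ d)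
    (hef : e ≠ f) (h₁ : s(a, b) ≠ s(c, d)) (h₂ : s(a, b) ≠ s(e, f)) (h₃ : s(c, d) ≠ s(e, f)) :
    ∫ ω, Y a b ω * Y c d ω * Y e f ω ∂μ
      = ∫ ω, Φ (U a ω) (U b ω) * Φ (U c ω) (U d ω) * Φ (U e ω) (U f ω) ∂μ := by
  simpa [prod_insert, h₁, h₂, h₃, apply_min_max hW.symm, hW.graphon_min_max, mul_assoc] using
    hW.integral_prod_sym2 {s(a, b), s(c, d), s(e, f)} (by simp [hab, hcd, hef])

theorem integrable_mul [IsFiniteMeasure μ] (hW : IsWGraph μ ν Φ U Y) (a b c d : ι) :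
    Integrable (fun ω => Y a b ω * Y c d ω) μ := by
  have := hW.measurable
  refine Integrable.of_bound (by fun_prop) 1 (ae_of_all _ fun ω => ?_)
  exact unitInterval.abs_le_one
    (unitInterval.mul_mem (hW.mem_unitInterval ..) (hW.mem_unitInterval ..))

theorem integrable_mul_mul [IsFiniteMeasure μ] (hW : IsWGraph μ ν Φ U Y) (a b c d e f : ι) :
    Integrable (fun ω => Y a b ω * Y c d ω * Y e f ω) μ := by
  have := hW.measurable
  refine Integrable.of_bound (by fun_prop) 1 (ae_of_all _ fun ω => ?_)
  exact unitInterval.abs_le_one (unitInterval.mul_mem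
    (unitInterval.mul_mem (hW.mem_unitInterval ..) (hW.mem_unitInterval ..))
    (hW.mem_unitInterval ..))

theorem integrable_mul_wedgeCount [IsFiniteMeasure μ] (hW : IsWGraph μ ν Φ U Y) (a b i j k : ι) :
    Integrable (fun ω => Y a b ω * wedgeCount Y i j k ω) μ := by
  have h : (fun ω => Y a b ω * wedgeCount Y i j k ω) = fun ω => Y a b ω * Y i j ω * Y i k ω
      + Y a b ω * Y i j ω * Y j k ω + Y a b ω * Y i k ω * Y j k ω := by
    funext ω
    rw [wedgeCount]
    ring
  rw [h]
  exact ((hW.integrable_mul_mul ..).fun_add (hW.integrable_mul_mul ..)).fun_add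
    (hW.integrable_mul_mul ..)

variable [Fintype ι] [IsProbabilityMeasure μ]

theorem integral_two_star (hW : IsWGraph μ ν Φ U Y) {x y z : ι} (hxy : x ≠ y) (hxz : x ≠ z)
    (hyz : y ≠ z) : ∫ ω, Y x y ω * Y x z ω ∂μ = twoStarDensity ν Φ :=
  (hW.integral_mul hxy hxz (by grind [Sym2.eq_iff])).trans <|
    hW.iIndepFun_latent.integral_two_star hW.measurable_latent hW.map_latent
      hW.measurable_graphon hW.graphon_mem hxy hxz hyz

theorem integral_triangle (hW : IsWGraph μ ν Φ U Y) {x y z : ι} (hxy : x ≠ y) (hxz : x ≠ z)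
    (hyz : y ≠ z) : ∫ ω, Y x y ω * Y y z ω * Y x z ω ∂μ = triangleDensity ν Φ :=
  (hW.integral_mul_mul hxy hyz hxz (by grind [Sym2.eq_iff]) (by grind [Sym2.eq_iff])
      (by grind [Sym2.eq_iff])).trans <|
    hW.iIndepFun_latent.integral_triangle hW.measurable_latent hW.map_latent
      hW.measurable_graphon hW.graphon_mem hxy hxz hyz

theorem integral_three_star (hW : IsWGraph μ ν Φ U Y) {x y z w : ι} (hxy : x ≠ y) (hxz : x ≠ z)
    (hxw : x ≠ w) (hyz : y ≠ z) (hyw : y ≠ w) (hzw : z ≠ w) :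
    ∫ ω, Y x y ω * Y x z ω * Y x w ω ∂μ = threeStarDensity ν Φ :=
  (hW.integral_mul_mul hxy hxz hxw (by grind [Sym2.eq_iff]) (by grind [Sym2.eq_iff])
      (by grind [Sym2.eq_iff])).trans <|
    hW.iIndepFun_latent.integral_three_star hW.measurable_latent hW.map_latent
      hW.measurable_graphon hW.graphon_mem hxy hxz hxw hyz hyw hzw

theorem integral_three_path (hW : IsWGraph μ ν Φ U Y) {x y z w : ι} (hxy : x ≠ y) (hxz : x ≠ z)
    (hxw : x ≠ w) (hyz : y ≠ z) (hyw : y ≠ w) (hzw : z ≠ w) :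
    ∫ ω, Y x y ω * Y y z ω * Y z w ω ∂μ = threePathDensity ν Φ :=
  (hW.integral_mul_mul hxy hyz hzw (by grind [Sym2.eq_iff]) (by grind [Sym2.eq_iff])
      (by grind [Sym2.eq_iff])).trans <|
    hW.iIndepFun_latent.integral_three_path hW.measurable_latent hW.map_latent
      hW.measurable_graphon hW.graphon_mem hxy hxz hxw hyz hyw hzw

theorem integral_edge_mul_two_star (hW : IsWGraph μ ν Φ U Y) {a b x y z : ι} (hab : a ≠ b)
    (hax : a ≠ x) (hay : a ≠ y) (haz : a ≠ z) (hbx : b ≠ x) (hby : b ≠ y) (hbz : b ≠ z)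
    (hxy : x ≠ y) (hxz : x ≠ z) (hyz : y ≠ z) :
    ∫ ω, Y a b ω * Y x y ω * Y x z ω ∂μ = edgeDensity ν Φ * twoStarDensity ν Φ :=
  (hW.integral_mul_mul hab hxy hxz (by grind [Sym2.eq_iff]) (by grind [Sym2.eq_iff])
      (by grind [Sym2.eq_iff])).trans <|
    hW.iIndepFun_latent.integral_edge_mul_two_star hW.measurable_latent hW.map_latent
      hW.measurable_graphon hW.graphon_mem hab hax hay haz hbx hby hbz hxy hxz hyz

theorem integral_mul_wedgeCount_inner (hW : IsWGraph μ ν Φ U Y) {x y z : ι} (hxy : x ≠ y)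
    (hxz : x ≠ z) (hyz : y ≠ z) :
    ∫ ω, Y x y ω * wedgeCount Y x y z ω ∂μ = 2 * twoStarDensity ν Φ + triangleDensity ν Φ := by
  have h : ∀ ω, Y x y ω * wedgeCount Y x y z ω
      = Y x y ω * Y x z ω + Y y x ω * Y y z ω + Y x y ω * Y y z ω * Y x z ω := fun ω => by
    rw [wedgeCount, hW.symm y x]
    linear_combination (Y x z ω + Y y z ω) * hW.mul_self x y ω
  simp_rw [h]
  rw [integral_add ((hW.integrable_mul ..).fun_add (hW.integrable_mul ..))
      (hW.integrable_mul_mul ..),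
    integral_add (hW.integrable_mul ..) (hW.integrable_mul ..), hW.integral_two_star hxy hxz hyz,
    hW.integral_two_star hxy.symm hyz hxz, hW.integral_triangle hxy hxz hyz]
  ring

theorem integral_mul_wedgeCount_pendant (hW : IsWGraph μ ν Φ U Y) {w x y z : ι} (hwx : w ≠ x)
    (hwy : w ≠ y) (hwz : w ≠ z) (hxy : x ≠ y) (hxz : x ≠ z) (hyz : y ≠ z) :
    ∫ ω, Y x w ω * wedgeCount Y x y z ω ∂μ
      = threeStarDensity ν Φ + 2 * threePathDensity ν Φ := by
  have h : ∀ ω, Y x w ω * wedgeCount Y x y z ω = Y x w ω * Y x y ω * Y x z ω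
      + Y w x ω * Y x y ω * Y y z ω + Y w x ω * Y x z ω * Y z y ω := fun ω => by
    rw [wedgeCount, hW.symm w x, hW.symm z y]
    ring
  simp_rw [h]
  rw [integral_add ((hW.integrable_mul_mul ..).fun_add (hW.integrable_mul_mul ..))
      (hW.integrable_mul_mul ..),
    integral_add (hW.integrable_mul_mul ..) (hW.integrable_mul_mul ..),
    hW.integral_three_star hwx.symm hxy hxz hwy hwz hyz,
    hW.integral_three_path hwx hwy hwz hxy hxz hyz,
    hW.integral_three_path hwx hwz hwy hxz hxy hyz.symm]
  ring

theorem integral_mul_wedgeCount_disjoint (hW : IsWGraph μ ν Φ U Y) {a b x y z : ι}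
    (hab : a ≠ b) (hax : a ≠ x) (hay : a ≠ y) (haz : a ≠ z) (hbx : b ≠ x) (hby : b ≠ y)
    (hbz : b ≠ z) (hxy : x ≠ y) (hxz : x ≠ z) (hyz : y ≠ z) :
    ∫ ω, Y a b ω * wedgeCount Y x y z ω ∂μ = 3 * (edgeDensity ν Φ * twoStarDensity ν Φ) := by
  have h : ∀ ω, Y a b ω * wedgeCount Y x y z ω = Y a b ω * Y x y ω * Y x z ω
      + Y a b ω * Y y x ω * Y y z ω + Y a b ω * Y z x ω * Y z y ω := fun ω => by
    rw [wedgeCount, hW.symm y x, hW.symm z x, hW.symm z y]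
    ring
  simp_rw [h]
  rw [integral_add ((hW.integrable_mul_mul ..).fun_add (hW.integrable_mul_mul ..))
      (hW.integrable_mul_mul ..),
    integral_add (hW.integrable_mul_mul ..) (hW.integrable_mul_mul ..),
    hW.integral_edge_mul_two_star hab hax hay haz hbx hby hbz hxy hxz hyz,
    hW.integral_edge_mul_two_star hab hay hax haz hby hbx hbz hxy.symm hyz hxz,
    hW.integral_edge_mul_two_star hab haz hax hay hbz hbx hby hxz.symm hyz.symm hxy]
  ring

theorem integral_mul_wedgeCount (hW : IsWGraph μ ν Φ U Y) {a b i j k : ι} (hab : a ≠ b)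
    (hij : i ≠ j) (hik : i ≠ k) (hjk : j ≠ k) :
    ∫ ω, Y a b ω * wedgeCount Y i j k ω ∂μ =
      if a ∈ ({i, j, k} : Finset ι) then
        if b ∈ ({i, j, k} : Finset ι) then 2 * twoStarDensity ν Φ + triangleDensity ν Φ
        else threeStarDensity ν Φ + 2 * threePathDensity ν Φ
      else if b ∈ ({i, j, k} : Finset ι) then threeStarDensity ν Φ + 2 * threePathDensity ν Φ
        else 3 * (edgeDensity ν Φ * twoStarDensity ν Φ) := by
  have hadj : ∀ x w, x ∈ ({i, j, k} : Finset ι) → w ∉ ({i, j, k} : Finset ι) →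
      ∫ ω, Y x w ω * wedgeCount Y i j k ω ∂μ
        = threeStarDensity ν Φ + 2 * threePathDensity ν Φ := by
    intro x w hx hw
    simp only [mem_insert, mem_singleton, not_or] at hx hw
    obtain ⟨hwi, hwj, hwk⟩ := hw
    rcases hx with rfl | rfl | rfl
    · exact hW.integral_mul_wedgeCount_pendant hwi hwj hwk hij hik hjk
    · rw [wedgeCount_comm₁₂ hW.symm]
      exact hW.integral_mul_wedgeCount_pendant hwj hwi hwk hij.symm hjk hik
    · rw [wedgeCount_comm₂₃ hW.symm, wedgeCount_comm₁₂ hW.symm]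
      exact hW.integral_mul_wedgeCount_pendant hwk hwi hwj hik.symm hjk.symm hij
  by_cases ha : a ∈ ({i, j, k} : Finset ι) <;> by_cases hb : b ∈ ({i, j, k} : Finset ι) <;>
    simp only [ha, hb, if_true, if_false]
  · simp only [mem_insert, mem_singleton] at ha hb
    rcases ha with rfl | rfl | rfl <;> rcases hb with rfl | rfl | rfl
    · exact absurd rfl hab
    · exact hW.integral_mul_wedgeCount_inner hij hik hjk
    · rw [wedgeCount_comm₂₃ hW.symm]
      exact hW.integral_mul_wedgeCount_inner hik hij hjk.symm
    · rw [wedgeCount_comm₁₂ hW.symm]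
      exact hW.integral_mul_wedgeCount_inner hij.symm hjk hik
    · exact absurd rfl hab
    · rw [wedgeCount_comm₁₂ hW.symm, wedgeCount_comm₂₃ hW.symm]
      exact hW.integral_mul_wedgeCount_inner hjk hij.symm hik.symm
    · rw [wedgeCount_comm₂₃ hW.symm, wedgeCount_comm₁₂ hW.symm]
      exact hW.integral_mul_wedgeCount_inner hik.symm hjk.symm hij
    · rw [wedgeCount_comm₂₃ hW.symm, wedgeCount_comm₁₂ hW.symm, wedgeCount_comm₂₃ hW.symm]
      exact hW.integral_mul_wedgeCount_inner hjk.symm hik.symm hij.symm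
    · exact absurd rfl hab
  · exact hadj a b ha hb
  · simp_rw [hW.symm a b]
    exact hadj b a hb ha
  · simp only [mem_insert, mem_singleton, not_or] at ha hb
    obtain ⟨hai, haj, hak⟩ := ha
    obtain ⟨hbi, hbj, hbk⟩ := hb
    exact hW.integral_mul_wedgeCount_disjoint hab hai haj hak hbi hbj hbk hij hik hjk

theorem sum_sorted_pairs_integral_mul_wedgeCount (hW : IsWGraph μ ν Φ U Y) {i j k : ι}
    (hij : i ≠ j) (hik : i ≠ k) (hjk : j ≠ k) :
    ∑ a, ∑ b ∈ univ.filter (fun b => a < b), ∫ ω, Y a b ω * wedgeCount Y i j k ω ∂μ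
      = 3 * (2 * twoStarDensity ν Φ + triangleDensity ν Φ)
        + 3 * (Fintype.card ι - 3) * (threeStarDensity ν Φ + 2 * threePathDensity ν Φ)
        + (Fintype.card ι - 3) * (Fintype.card ι - 4) / 2
          * (3 * (edgeDensity ν Φ * twoStarDensity ν Φ)) := by
  have hcard : #({i, j, k} : Finset ι) = 3 := card_eq_three.2 ⟨i, j, k, hij, hik, hjk, rfl⟩
  have hcompl : (#({i, j, k} : Finset ι)ᶜ : ℝ) = Fintype.card ι - 3 := by
    rw [← card_compl_add_card ({i, j, k} : Finset ι), hcard]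
    push_cast
    ring
  rw [sum_congr rfl fun a _ => sum_congr rfl fun b hb =>
      hW.integral_mul_wedgeCount (mem_filter.1 hb).2.ne hij hik hjk,
    sum_sorted_pairs_ite_mem, Nat.cast_choose_two, Nat.cast_choose_two, hcompl, hcard]
  ring

end IsWGraph

end WGraph

theorem wgraph_cross_moment_general
    {Ω : Type*} [MeasurableSpace Ω] (μ : Measure Ω) [IsProbabilityMeasure μ]
    (n : ℕ) (Φ : ℝ → ℝ → ℝ)
    (hΦmeas : Measurable fun q : ℝ × ℝ => Φ q.1 q.2)
    (hΦsym : ∀ u v, Φ u v = Φ v u)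
    (hΦ01 : ∀ u v, 0 ≤ Φ u v ∧ Φ u v ≤ 1)
    (U : Fin n → Ω → ℝ) (hUmeas : ∀ i, Measurable (U i))
    (hUindep : iIndepFun U μ)
    (hUlaw : ∀ i, μ.map (U i) = (volume : Measure ℝ).restrict (Set.Icc 0 1))
    (Y : Fin n → Fin n → Ω → ℝ)
    (hYsym : ∀ i j, Y i j = Y j i)
    (hYmeas : ∀ i j, Measurable (Y i j))
    (h01 : ∀ i j ω, Y i j ω = 0 ∨ Y i j ω = 1)
    (hmom : ∀ S : Finset (Fin n × Fin n), (∀ e ∈ S, e.1 < e.2) →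
      ∫ ω, ∏ e ∈ S, Y e.1 e.2 ω ∂μ = ∫ ω, ∏ e ∈ S, Φ (U e.1 ω) (U e.2 ω) ∂μ)
    (φ₁ φ₂ φ₃ φ₅ φ₆ : ℝ)
    (hφ₁ : φ₁ = ∫ u in Set.Icc (0 : ℝ) 1, ∫ v in Set.Icc (0 : ℝ) 1, Φ u v)
    (hφ₂ : φ₂ = ∫ u in Set.Icc (0 : ℝ) 1, ∫ v in Set.Icc (0 : ℝ) 1,
        ∫ w in Set.Icc (0 : ℝ) 1, Φ u v * Φ u w)
    (hφ₃ : φ₃ = ∫ u in Set.Icc (0 : ℝ) 1, ∫ v in Set.Icc (0 : ℝ) 1,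
        ∫ w in Set.Icc (0 : ℝ) 1, Φ u v * Φ v w * Φ u w)
    (hφ₅ : φ₅ = ∫ u in Set.Icc (0 : ℝ) 1, ∫ v in Set.Icc (0 : ℝ) 1,
        ∫ w in Set.Icc (0 : ℝ) 1, ∫ x in Set.Icc (0 : ℝ) 1, Φ u v * Φ u w * Φ u x)
    (hφ₆ : φ₆ = ∫ u in Set.Icc (0 : ℝ) 1, ∫ v in Set.Icc (0 : ℝ) 1,
        ∫ w in Set.Icc (0 : ℝ) 1, ∫ x in Set.Icc (0 : ℝ) 1, Φ u v * Φ v w * Φ w x) :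
    ∫ ω, (∑ i, ∑ j ∈ univ.filter (fun j => i < j), Y i j ω)
        * (∑ i, ∑ j ∈ univ.filter (fun j => i < j), ∑ k ∈ univ.filter (fun k => j < k),
            (Y i j ω * Y i k ω + Y i j ω * Y j k ω + Y i k ω * Y j k ω)) ∂μ
      = ((n : ℝ) * ((n : ℝ) - 1) * ((n : ℝ) - 2) / 2) * (2 * φ₂ + φ₃)
        + ((n : ℝ) * ((n : ℝ) - 1) * ((n : ℝ) - 2) * ((n : ℝ) - 3) / 2) * (φ₅ + 2 * φ₆)
        + ((n : ℝ) * ((n : ℝ) - 1) * ((n : ℝ) - 2) * ((n : ℝ) - 3) * ((n : ℝ) - 4) / 4)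
          * (φ₁ * φ₂) := by
  have hW : IsWGraph μ (volume.restrict (Set.Icc 0 1)) Φ U Y :=
    ⟨hΦmeas, hΦsym, hΦ01, hUmeas, hUindep, hUlaw, hYsym, hYmeas, h01, hmom⟩
  obtain rfl : φ₁ = edgeDensity (volume.restrict (Set.Icc 0 1)) Φ := hφ₁
  obtain rfl : φ₂ = twoStarDensity (volume.restrict (Set.Icc 0 1)) Φ := hφ₂
  obtain rfl : φ₃ = triangleDensity (volume.restrict (Set.Icc 0 1)) Φ := hφ₃
  obtain rfl : φ₅ = threeStarDensity (volume.restrict (Set.Icc 0 1)) Φ := hφ₅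
  obtain rfl : φ₆ = threePathDensity (volume.restrict (Set.Icc 0 1)) Φ := hφ₆
  change ∫ ω, (∑ a, ∑ b ∈ _, Y a b ω) * (∑ i, ∑ j ∈ _, ∑ k ∈ _, wedgeCount Y i j k ω) ∂μ = _
  simp only [sum_mul, mul_sum]
  simp (maxDischargeDepth := 6) only [integral_finsetSum, integrable_finsetSum,
    hW.integrable_mul_wedgeCount, implies_true]
  rw [sum_congr rfl fun i _ => sum_congr rfl fun j hj => sum_congr rfl fun k hk =>
    hW.sum_sorted_pairs_integral_mul_wedgeCount (mem_filter.1 hj).2.ne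
      ((mem_filter.1 hj).2.trans (mem_filter.1 hk).2).ne (mem_filter.1 hk).2.ne,
    sum_sorted_triples_const, Nat.cast_choose_three, Fintype.card_fin]
  ring

/-- Cross moment `E[M₁ M₂]` in the W-graph model EG(Φ). -/
theorem wgraph_cross_moment
    {Ω : Type*} [MeasurableSpace Ω] (μ : Measure Ω) [IsProbabilityMeasure μ]
    (n : ℕ) (Φ : ℝ → ℝ → ℝ)
    (hΦmeas : Measurable fun q : ℝ × ℝ => Φ q.1 q.2)
    (hΦsym : ∀ u v, Φ u v = Φ v u)
    (hΦ01 : ∀ u v, 0 ≤ Φ u v ∧ Φ u v ≤ 1)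
    (U : Fin n → Ω → ℝ) (hUmeas : ∀ i, Measurable (U i))
    (hUindep : iIndepFun U μ)
    (hUlaw : ∀ i, μ.map (U i) = (volume : Measure ℝ).restrict (Set.Icc 0 1))
    (Y : Fin n → Fin n → Ω → ℝ)
    (hYsym : ∀ i j, Y i j = Y j i) (hYdiag : ∀ i, Y i i = 0)
    (hYmeas : ∀ i j, Measurable (Y i j))
    (h01 : ∀ i j ω, Y i j ω = 0 ∨ Y i j ω = 1)
    (hmom : ∀ S : Finset (Fin n × Fin n), (∀ e ∈ S, e.1 < e.2) →
      ∫ ω, ∏ e ∈ S, Y e.1 e.2 ω ∂μ = ∫ ω, ∏ e ∈ S, Φ (U e.1 ω) (U e.2 ω) ∂μ)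
    (φ₁ φ₂ φ₃ φ₅ φ₆ : ℝ)
    (hφ₁ : φ₁ = ∫ u in Set.Icc (0 : ℝ) 1, ∫ v in Set.Icc (0 : ℝ) 1, Φ u v)
    (hφ₂ : φ₂ = ∫ u in Set.Icc (0 : ℝ) 1, ∫ v in Set.Icc (0 : ℝ) 1,
        ∫ w in Set.Icc (0 : ℝ) 1, Φ u v * Φ u w)
    (hφ₃ : φ₃ = ∫ u in Set.Icc (0 : ℝ) 1, ∫ v in Set.Icc (0 : ℝ) 1,
        ∫ w in Set.Icc (0 : ℝ) 1, Φ u v * Φ v w * Φ u w)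
    (hφ₅ : φ₅ = ∫ u in Set.Icc (0 : ℝ) 1, ∫ v in Set.Icc (0 : ℝ) 1,
        ∫ w in Set.Icc (0 : ℝ) 1, ∫ x in Set.Icc (0 : ℝ) 1, Φ u v * Φ u w * Φ u x)
    (hφ₆ : φ₆ = ∫ u in Set.Icc (0 : ℝ) 1, ∫ v in Set.Icc (0 : ℝ) 1,
        ∫ w in Set.Icc (0 : ℝ) 1, ∫ x in Set.Icc (0 : ℝ) 1, Φ u v * Φ v w * Φ w x) :
    ∫ ω, (∑ i, ∑ j ∈ univ.filter (fun j => i < j), Y i j ω)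
        * (∑ i, ∑ j ∈ univ.filter (fun j => i < j), ∑ k ∈ univ.filter (fun k => j < k),
            (Y i j ω * Y i k ω + Y i j ω * Y j k ω + Y i k ω * Y j k ω)) ∂μ
      = ((n : ℝ) * ((n : ℝ) - 1) * ((n : ℝ) - 2) / 2) * (2 * φ₂ + φ₃)
        + ((n : ℝ) * ((n : ℝ) - 1) * ((n : ℝ) - 2) * ((n : ℝ) - 3) / 2) * (φ₅ + 2 * φ₆)
        + ((n : ℝ) * ((n : ℝ) - 1) * ((n : ℝ) - 2) * ((n : ℝ) - 3) * ((n : ℝ) - 4) / 4)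
          * (φ₁ * φ₂) :=
  wgraph_cross_moment_general μ n Φ hΦmeas hΦsym hΦ01 U hUmeas hUindep hUlaw Y hYsym hYmeas h01 hmom
    φ₁ φ₂ φ₃ φ₅ φ₆ hφ₁ hφ₂ hφ₃ hφ₅ hφ₆
end
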